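/- arXiv:0710.0237 — 11 statements merged into one kernel-verified Lean document; each statement's English description precedes it below -/
import Mathlib

section
/- For every natural number n ≥ 1, the sum over all integers k with k ≠ n and k ≠ -n of 1/|n² - k²| is strictly less than (2 log(6n))/n. -/
open scoped BigOperators
open Finset

private noncomputable def HZ (m : ℤ) : ℝ := ∑ j ∈ Finset.Icc (1:ℤ) m, 1/(j:ℝ)

private lemma HZ_eq (m : ℕ) : HZ m = (harmonic m : ℝ) := by
  induction m with
  | zero => simp [HZ, harmonic]
  | succ m ih =>
    have h : HZ ((m:ℤ)+1) = HZ (m:ℤ) + 1/(((m:ℤ)+1 : ℤ):ℝ) := by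
      rw [HZ, HZ, show Finset.Icc (1:ℤ) ((m:ℤ)+1) = insert ((m:ℤ)+1) (Finset.Icc 1 (m:ℤ)) by
        ext x; simp [Finset.mem_Icc]; omega]
      rw [Finset.sum_insert (by simp [Finset.mem_Icc])]
      ring
    rw [show ((m+1:ℕ):ℤ) = (m:ℤ)+1 by push_cast; ring, h, ih, harmonic_succ]
    push_cast
    ring

private lemma HZ_mono {a b : ℤ} (h : a ≤ b) : HZ a ≤ HZ b := by
  apply Finset.sum_le_sum_of_subset_of_nonneg
  · exact Finset.Icc_subset_Icc_right h
  · intro j hj _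
    have : (1:ℤ) ≤ j := (Finset.mem_Icc.mp hj).1
    positivity

private lemma sum_shift (f : ℤ → ℝ) (a b c : ℤ) :
    ∑ k ∈ Finset.Icc a b, f (k + c) = ∑ j ∈ Finset.Icc (a+c) (b+c), f j := by
  refine Finset.sum_nbij' (fun k => k + c) (fun j => j - c) ?_ ?_ ?_ ?_ ?_ <;>
    (intros; simp_all [Finset.mem_Icc]; try omega)

private lemma sum_shift' (f : ℤ → ℝ) (a b c : ℤ) :
    ∑ k ∈ Finset.Icc a b, f (k - c) = ∑ j ∈ Finset.Icc (a-c) (b-c), f j := by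
  refine Finset.sum_nbij' (fun k => k - c) (fun j => j + c) ?_ ?_ ?_ ?_ ?_ <;>
    (intros; simp_all [Finset.mem_Icc]; try omega)

private lemma sum_rev (f : ℤ → ℝ) (a b c : ℤ) :
    ∑ k ∈ Finset.Icc a b, f (c - k) = ∑ j ∈ Finset.Icc (c-b) (c-a), f j := by
  refine Finset.sum_nbij' (fun k => c - k) (fun j => c - j) ?_ ?_ ?_ ?_ ?_ <;>
    (intros; simp_all [Finset.mem_Icc]; try omega)

private lemma sum_neg (f : ℤ → ℝ) (a b : ℤ) :
    ∑ k ∈ Finset.Icc a b, f k = ∑ j ∈ Finset.Icc (-b) (-a), f (-j) := by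
  refine Finset.sum_nbij' (fun k => -k) (fun j => -j) ?_ ?_ ?_ ?_ ?_ <;>
    (intros; simp_all [Finset.mem_Icc]; try omega)

private lemma one_div_mul_add (a b : ℝ) (ha : 0 < a) (hb : 0 < b) :
    1/(a*b) = 1/(a+b) * (1/a + 1/b) := by
  have hab : 0 < a + b := by linarith
  field_simp
  ring

private lemma one_div_mul_sub (a b : ℝ) (ha : 0 < a) (hb : 0 < b) (h : b - a ≠ 0) :
    1/(a*b) = 1/(b-a) * (1/a - 1/b) := by
  field_simp

private lemma finsum_bound (n : ℕ) (hn : 1 ≤ n) (t : Finset ℤ)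
    (ht : ∀ k ∈ t, k ≠ (n:ℤ) ∧ k ≠ -(n:ℤ)) :
    ∑ k ∈ t, 1 / |((n : ℝ))^2 - (k : ℝ)^2| ≤ 2 * ((harmonic (2*n) : ℚ) : ℝ) / n := by
  have hN : (1:ℤ) ≤ (n:ℤ) := by exact_mod_cast hn
  have hnR : (0:ℝ) < (n:ℝ) := by exact_mod_cast Nat.pos_of_ne_zero (by omega)
  set g : ℤ → ℝ := fun k => 1 / |((n : ℝ))^2 - (k : ℝ)^2| with hg
  have hg0 : ∀ k : ℤ, 0 ≤ g k := fun k => by positivity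
  set M : ℤ := (n:ℤ) + ∑ k ∈ t, |k| with hM
  have habs_nonneg : (0:ℤ) ≤ ∑ k ∈ t, |k| := Finset.sum_nonneg (fun k _ => abs_nonneg k)
  have hMn : (n:ℤ) ≤ M := by omega
  have hMt : ∀ k ∈ t, -M ≤ k ∧ k ≤ M := by
    intro k hk
    have h1 : |k| ≤ ∑ k ∈ t, |k| :=
      Finset.single_le_sum (fun k _ => abs_nonneg k) hk
    exact abs_le.mp (le_trans h1 (by omega : ∑ k ∈ t, |k| ≤ M))
  set A := Finset.Icc (1-(n:ℤ)) ((n:ℤ)-1) with hA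
  set B := Finset.Icc ((n:ℤ)+1) M with hB
  set C := Finset.Icc (-M) (-(n:ℤ)-1) with hC
  have hsub : t ⊆ (A ∪ B) ∪ C := by
    intro k hk
    obtain ⟨h1, h2⟩ := ht k hk
    obtain ⟨h3, h4⟩ := hMt k hk
    simp only [hA, hB, hC, Finset.mem_union, Finset.mem_Icc]
    omega
  have hdAB : Disjoint A B := by
    rw [Finset.disjoint_left]; intro k hk hk'
    simp only [hA, hB, Finset.mem_Icc] at hk hk'; omega
  have hdABC : Disjoint (A ∪ B) C := by
    rw [Finset.disjoint_left]; intro k hk hk'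
    simp only [hA, hB, hC, Finset.mem_union, Finset.mem_Icc] at hk hk'; omega
  have step1 : ∑ k ∈ t, g k ≤ ∑ k ∈ (A ∪ B) ∪ C, g k :=
    Finset.sum_le_sum_of_subset_of_nonneg hsub (fun k _ _ => hg0 k)
  rw [Finset.sum_union hdABC, Finset.sum_union hdAB] at step1
  have hfac : (0:ℝ) ≤ 1/(2*(n:ℝ)) := by positivity
  -- Part A
  have eA : ∀ k ∈ A, g k =
      (1/(2*(n:ℝ))) * (1/((((n:ℤ)-k : ℤ)):ℝ) + 1/(((k+(n:ℤ) : ℤ)):ℝ)) := by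
    intro k hk
    simp only [hA, Finset.mem_Icc] at hk
    have ha : (0:ℝ) < (((n:ℤ)-k : ℤ):ℝ) := by exact_mod_cast (by omega : (0:ℤ) < (n:ℤ)-k)
    have hb : (0:ℝ) < ((k+(n:ℤ) : ℤ):ℝ) := by exact_mod_cast (by omega : (0:ℤ) < k+(n:ℤ))
    have hprod : ((n : ℝ))^2 - (k : ℝ)^2 = (((n:ℤ)-k : ℤ):ℝ) * ((k+(n:ℤ) : ℤ):ℝ) := by
      push_cast; ring
    have h2n : (((n:ℤ)-k : ℤ):ℝ) + ((k+(n:ℤ) : ℤ):ℝ) = 2*(n:ℝ) := by push_cast; ring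
    rw [hg]
    simp only
    rw [hprod, abs_of_pos (mul_pos ha hb), ← h2n]
    exact one_div_mul_add _ _ ha hb
  have sumA : ∑ k ∈ A, g k ≤ (1/(2*(n:ℝ))) * (HZ (2*(n:ℤ)) + HZ (2*(n:ℤ))) := by
    rw [Finset.sum_congr rfl eA, ← Finset.mul_sum, Finset.sum_add_distrib]
    rw [hA, sum_rev (fun j => 1/(j:ℝ)), sum_shift (fun j => 1/(j:ℝ))]
    rw [show (n:ℤ) - ((n:ℤ)-1) = 1 by ring, show (n:ℤ) - (1-(n:ℤ)) = 2*(n:ℤ)-1 by ring,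
      show 1-(n:ℤ)+(n:ℤ) = 1 by ring, show (n:ℤ)-1+(n:ℤ) = 2*(n:ℤ)-1 by ring]
    have hmono := HZ_mono (by omega : 2*(n:ℤ)-1 ≤ 2*(n:ℤ))
    have hle : HZ (2*(n:ℤ)-1) + HZ (2*(n:ℤ)-1) ≤ HZ (2*(n:ℤ)) + HZ (2*(n:ℤ)) := by linarith
    exact mul_le_mul_of_nonneg_left hle hfac
  -- Part B
  have eB : ∀ k ∈ B, g k =
      (1/(2*(n:ℝ))) * (1/(((k-(n:ℤ) : ℤ)):ℝ) - 1/(((k+(n:ℤ) : ℤ)):ℝ)) := by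
    intro k hk
    simp only [hB, Finset.mem_Icc] at hk
    have ha : (0:ℝ) < ((k-(n:ℤ) : ℤ):ℝ) := by exact_mod_cast (by omega : (0:ℤ) < k-(n:ℤ))
    have hb : (0:ℝ) < ((k+(n:ℤ) : ℤ):ℝ) := by exact_mod_cast (by omega : (0:ℤ) < k+(n:ℤ))
    have hprod : ((n : ℝ))^2 - (k : ℝ)^2 = -(((k-(n:ℤ) : ℤ):ℝ) * ((k+(n:ℤ) : ℤ):ℝ)) := by
      push_cast; ring
    have h2n : ((k+(n:ℤ) : ℤ):ℝ) - ((k-(n:ℤ) : ℤ):ℝ) = 2*(n:ℝ) := by push_cast; ring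
    rw [hg]
    simp only
    rw [hprod, abs_neg, abs_of_pos (mul_pos ha hb), ← h2n]
    exact one_div_mul_sub _ _ ha hb (by rw [h2n]; positivity)
  have sumB : ∑ k ∈ B, g k ≤ (1/(2*(n:ℝ))) * HZ (2*(n:ℤ)) := by
    rw [Finset.sum_congr rfl eB, ← Finset.mul_sum, Finset.sum_sub_distrib]
    rw [hB, sum_shift' (fun j => 1/(j:ℝ)), sum_shift (fun j => 1/(j:ℝ))]
    rw [show (n:ℤ)+1-(n:ℤ) = 1 by ring, show (n:ℤ)+1+(n:ℤ) = 2*(n:ℤ)+1 by ring]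
    have hsplit : ∑ j ∈ Finset.Icc (1:ℤ) (M-(n:ℤ)), 1/(j:ℝ)
        ≤ HZ (2*(n:ℤ)) + ∑ j ∈ Finset.Icc (2*(n:ℤ)+1) (M+(n:ℤ)), 1/(j:ℝ) := by
      rw [HZ, ← Finset.sum_union (by
        rw [Finset.disjoint_left]; intro j hj hj'
        simp only [Finset.mem_Icc] at hj hj'; omega)]
      apply Finset.sum_le_sum_of_subset_of_nonneg
      · intro j hj
        simp only [Finset.mem_Icc, Finset.mem_union] at hj ⊢
        omega
      · intro j hj _
        simp only [Finset.mem_Icc, Finset.mem_union] at hj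
        have : (1:ℤ) ≤ j := by omega
        positivity
    have hle : ∑ j ∈ Finset.Icc (1:ℤ) (M-(n:ℤ)), 1/(j:ℝ)
        - ∑ j ∈ Finset.Icc (2*(n:ℤ)+1) (M+(n:ℤ)), 1/(j:ℝ) ≤ HZ (2*(n:ℤ)) := by
      linarith
    exact mul_le_mul_of_nonneg_left hle hfac
  -- Part C
  have sumC : ∑ k ∈ C, g k = ∑ k ∈ B, g k := by
    rw [hC, sum_neg g, show -(-(n:ℤ)-1) = (n:ℤ)+1 by ring, show -(-M) = M by ring, hB]
    apply Finset.sum_congr rfl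
    intro k _
    rw [hg]
    simp only [Int.cast_neg, neg_sq]
  have hHZ : HZ (2*(n:ℤ)) = ((harmonic (2*n) : ℚ) : ℝ) := by
    rw [show (2*(n:ℤ)) = ((2*n:ℕ):ℤ) by push_cast; ring, HZ_eq]
  have hcomb : (1/(2*(n:ℝ))) * (HZ (2*(n:ℤ)) + HZ (2*(n:ℤ)))
      + (1/(2*(n:ℝ))) * HZ (2*(n:ℤ)) + (1/(2*(n:ℝ))) * HZ (2*(n:ℤ))
      = 2 * HZ (2*(n:ℤ)) / n := by
    field_simp
    ring
  rw [← hHZ]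
  rw [sumC] at step1
  linarith

/-- For every natural number `n ≥ 1`, the sum over all integers `k` with `k ≠ n` and
`k ≠ -n` of `1/|n² - k²|` is strictly less than `(2 log (6n))/n`. -/
theorem stmt0 (n : ℕ) (hn : 1 ≤ n) :
    (∑' k : {k : ℤ // k ≠ (n : ℤ) ∧ k ≠ -(n : ℤ)},
        1 / |((n : ℝ))^2 - ((k : ℤ) : ℝ)^2|) < 2 * Real.log (6 * n) / n := by
  classical
  have hnR : (0:ℝ) < (n:ℝ) := by exact_mod_cast Nat.pos_of_ne_zero (by omega)
  have hlog3 : (1:ℝ) < Real.log 3 := by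
    rw [Real.lt_log_iff_exp_lt (by norm_num : (0:ℝ) < 3)]
    calc Real.exp 1 < 2.7182818286 := Real.exp_one_lt_d9
      _ < 3 := by norm_num
  have hharm : ((harmonic (2*n) : ℚ) : ℝ) < Real.log (6 * (n:ℝ)) := by
    have h1 : ((harmonic (2*n) : ℚ) : ℝ) ≤ 1 + Real.log ((2*n : ℕ)) :=
      harmonic_le_one_add_log (2*n)
    have h2 : Real.log ((6:ℝ)*n) = Real.log 3 + Real.log ((2*n : ℕ)) := by
      rw [← Real.log_mul (by norm_num) (by positivity)]
      · norm_num; ring_nf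
    rw [h2]
    push_cast at h1 ⊢
    linarith
  have hc : 2 * ((harmonic (2*n) : ℚ) : ℝ) / n < 2 * Real.log (6 * n) / n := by
    rw [div_lt_div_iff_of_pos_right hnR]
    linarith
  by_cases hs : Summable (fun k : {k : ℤ // k ≠ (n : ℤ) ∧ k ≠ -(n : ℤ)} =>
      1 / |((n : ℝ))^2 - ((k : ℤ) : ℝ)^2|)
  · refine lt_of_le_of_lt (Summable.tsum_le_of_sum_le hs ?_) hc
    intro u
    have key := finsum_bound n hn (u.image Subtype.val) ?_
    · rwa [Finset.sum_image (fun x _ y _ h => Subtype.ext h)] at key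
    · intro k hk
      obtain ⟨x, -, rfl⟩ := Finset.mem_image.mp hk
      exact x.2
  · rw [tsum_eq_zero_of_not_summable hs]
    apply div_pos
    · have h1 : (1:ℝ) ≤ n := by exact_mod_cast hn
      have : (1:ℝ) < 6 * n := by nlinarith
      have := Real.log_pos this
      linarith
    · exact hnR
end

section
/- For every natural number n ≥ 1, the sum over all integers k with k ≠ n and k ≠ -n of 1/|n² - k²|² is strictly less than 4/n². -/
open scoped BigOperators

open Real
set_option maxHeartbeats 1000000

/-- Key elementary inequality: if `b - a = 2c`, `a, b ≠ 0`, `c > 0`, then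
`1/(a*b)^2 ≤ 1/(2*c^2) * (1/a^2 + 1/b^2)`. -/
lemma stmt1_aux (a b c : ℝ) (ha : a ≠ 0) (hb : b ≠ 0) (hc : 0 < c)
    (hab : b - a = 2*c) : 1/(a*b)^2 ≤ 1/(2*c^2) * (1/a^2 + 1/b^2) := by
  have ha2 : (0:ℝ) < a^2 := by positivity
  have hb2 : (0:ℝ) < b^2 := by positivity
  have hsum : 2*c^2 ≤ a^2 + b^2 := by nlinarith [sq_nonneg (a+b)]
  have hrw : 1/(2*c^2) * (1/a^2 + 1/b^2) = (a^2+b^2)/(2*c^2*(a^2*b^2)) := by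
    field_simp
    ring
  rw [hrw, mul_pow, div_le_div_iff₀ (by positivity) (by positivity), one_mul]
  nlinarith [mul_le_mul_of_nonneg_right hsum (le_of_lt (mul_pos ha2 hb2))]

/-- For every natural number `n ≥ 1`, the sum over all integers `k ≠ ±n` of
`1/|n² - k²|²` is strictly less than `4/n²`. -/
theorem stmt1 (n : ℕ) (hn : 1 ≤ n) :
    (∑' k : {k : ℤ // k ≠ (n : ℤ) ∧ k ≠ -(n : ℤ)},
        1 / |((n : ℝ))^2 - ((k : ℤ) : ℝ)^2|^2) < 4 / (n : ℝ)^2 := by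
  have hn0 : (0:ℝ) < n := by exact_mod_cast hn
  set S := {k : ℤ // k ≠ (n : ℤ) ∧ k ≠ -(n : ℤ)} with hS
  have hZ : Summable (fun m : ℤ => 1/(m:ℝ)^2) := summable_one_div_int_pow.mpr one_lt_two
  -- the sum over ℤ of 1/m² is π²/3
  have h1 : HasSum (fun m : ℕ => 1/(((m:ℤ)):ℝ)^2) (π^2/6) := by
    simpa using hasSum_zeta_two
  have h2 : HasSum (fun m : ℕ => 1/(((-(m:ℕ):ℤ)):ℝ)^2) (π^2/6) := by
    simpa using hasSum_zeta_two
  have hZval : ∑' m : ℤ, 1/(m:ℝ)^2 = π^2/3 := by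
    have h := ((HasSum.of_nat_of_neg (f := fun m : ℤ => 1/(m:ℝ)^2) h1 h2).tsum_eq)
    rw [h]
    push_cast
    norm_num
    ring
  -- injections into ℤ
  have inj1 : Function.Injective (fun k : S => (k : ℤ) - n) := by
    intro a b h
    simp only [sub_left_inj] at h
    exact Subtype.ext h
  have inj2 : Function.Injective (fun k : S => (k : ℤ) + n) := by
    intro a b h
    simp only [add_left_inj] at h
    exact Subtype.ext h
  -- summability of the two comparison pieces
  have hA : Summable (fun k : S => 1/(((k:ℤ):ℝ) - n)^2) := by
    refine (hZ.comp_injective inj1).congr fun k => ?_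
    simp only [Function.comp_apply]
    push_cast
    ring
  have hB : Summable (fun k : S => 1/(((k:ℤ):ℝ) + n)^2) := by
    refine (hZ.comp_injective inj2).congr fun k => ?_
    simp only [Function.comp_apply]
    push_cast
    ring
  -- bounds on the two pieces
  have hAle : ∑' k : S, 1/(((k:ℤ):ℝ) - n)^2 ≤ π^2/3 := by
    rw [← hZval]
    refine Summable.tsum_le_tsum_of_inj _ inj1 (fun c _ => by positivity)
      (fun k => le_of_eq ?_) hA hZ
    push_cast
    ring
  have hBle : ∑' k : S, 1/(((k:ℤ):ℝ) + n)^2 ≤ π^2/3 := by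
    rw [← hZval]
    refine Summable.tsum_le_tsum_of_inj _ inj2 (fun c _ => by positivity)
      (fun k => le_of_eq ?_) hB hZ
    push_cast
    ring
  -- the comparison function
  set g : S → ℝ := fun k =>
    1/(2*(n:ℝ)^2) * (1/(((k:ℤ):ℝ) - n)^2 + 1/(((k:ℤ):ℝ) + n)^2) with hg_def
  have hg : Summable g := (hA.add hB).mul_left _
  -- pointwise bound
  have hpt : ∀ k : S, 1 / |((n : ℝ))^2 - ((k : ℤ) : ℝ)^2|^2 ≤ g k := by
    intro k
    obtain ⟨k, hk1, hk2⟩ := k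
    have ha : ((k:ℝ) - n) ≠ 0 := by
      intro h
      apply hk1
      have : (k:ℝ) = n := by linarith [h]
      exact_mod_cast this
    have hb : ((k:ℝ) + n) ≠ 0 := by
      intro h
      apply hk2
      have : (k:ℝ) = -(n:ℝ) := by linarith [h]
      exact_mod_cast this
    have key := stmt1_aux ((k:ℝ) - n) ((k:ℝ) + n) n ha hb hn0 (by ring)
    have habs : |((n : ℝ))^2 - (k : ℝ)^2|^2 = (((k:ℝ) - n) * ((k:ℝ) + n))^2 := by
      rw [sq_abs]
      ring
    simpa [g, habs] using key
  -- summability of the original function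
  have hf : Summable (fun k : S => 1 / |((n : ℝ))^2 - ((k : ℤ) : ℝ)^2|^2) :=
    Summable.of_nonneg_of_le (fun k => by positivity) hpt hg
  -- assemble
  have hle : (∑' k : S, 1 / |((n : ℝ))^2 - ((k : ℤ) : ℝ)^2|^2) ≤ ∑' k : S, g k :=
    Summable.tsum_le_tsum hpt hf hg
  have hgval : ∑' k : S, g k = 1/(2*(n:ℝ)^2) *
      ((∑' k : S, 1/(((k:ℤ):ℝ) - n)^2) + ∑' k : S, 1/(((k:ℤ):ℝ) + n)^2) := by
    rw [hg_def, tsum_mul_left, Summable.tsum_add hA hB]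
  have hpi : π^2 < 12 := by nlinarith [pi_lt_d2, pi_pos]
  have hfinal : ∑' k : S, g k < 4 / (n:ℝ)^2 := by
    rw [hgval]
    have h2n : (0:ℝ) < 2*(n:ℝ)^2 := by positivity
    calc 1/(2*(n:ℝ)^2) *
        ((∑' k : S, 1/(((k:ℤ):ℝ) - n)^2) + ∑' k : S, 1/(((k:ℤ):ℝ) + n)^2)
        ≤ 1/(2*(n:ℝ)^2) * (2*(π^2/3)) := by
          apply mul_le_mul_of_nonneg_left (by linarith) (by positivity)
      _ < 4 / (n:ℝ)^2 := by
          rw [div_mul_eq_mul_div, one_mul, div_lt_div_iff₀ h2n (by positivity)]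
          nlinarith [hpi, hn0]
  exact lt_of_le_of_lt hle hfinal
end

section
/- There is an absolute constant C > 0 such that for every natural number n ≥ 1 and every real number b ≥ 2, the sum over all integers k of 1/(|n² - k²| + b) is at most C · (log b)/√b. -/
open scoped BigOperators

open Finset


lemma tele_hasSum (M : ℝ) (hM : 1 ≤ M) :
    HasSum (fun m : ℕ => 1/((m:ℝ) + M) - 1/((m:ℝ) + 1 + M)) (1/M) := by
  have h0 : (0:ℝ) < M := by linarith
  rw [hasSum_iff_tendsto_nat_of_nonneg]
  · have h1 : ∀ N : ℕ, ∑ i ∈ range N, (1/((i:ℝ) + M) - 1/((i:ℝ) + 1 + M))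
        = 1/M - 1/((N:ℝ)+M) := by
      intro N
      have h2 := Finset.sum_range_sub' (f := fun i : ℕ => 1/((i:ℝ) + M)) N
      push_cast at h2
      rw [zero_add] at h2
      rw [← h2]
    simp only [h1]
    have ht : Filter.Tendsto (fun N : ℕ => 1/((N:ℝ)+M)) Filter.atTop (nhds 0) := by
      simp only [one_div]
      exact Filter.Tendsto.comp tendsto_inv_atTop_zero
        (Filter.tendsto_atTop_add_const_right _ M tendsto_natCast_atTop_atTop)
    have h3 : Filter.Tendsto (fun N : ℕ => 1/M - 1/((N:ℝ)+M)) Filter.atTop (nhds (1/M - 0)) :=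
      Filter.Tendsto.sub tendsto_const_nhds ht
    simpa using h3
  · intro m
    have h1 : (0:ℝ) < (m:ℝ) + M := by positivity
    have h2 : (0:ℝ) < (m:ℝ) + 1 + M := by linarith
    have := one_div_le_one_div_of_le h1 (by linarith : (m:ℝ) + M ≤ (m:ℝ) + 1 + M)
    linarith

lemma tail_sq_le (M : ℝ) (hM : 1 ≤ M) :
    ∑' m : ℕ, 1/((m:ℝ) + 1 + M)^2 ≤ 1/M := by
  have h0 : (0:ℝ) < M := by linarith
  have hle : ∀ m : ℕ, 1/((m:ℝ) + 1 + M)^2 ≤ 1/((m:ℝ) + M) - 1/((m:ℝ) + 1 + M) := by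
    intro m
    have h1 : (0:ℝ) < (m:ℝ) + M := by positivity
    have h2 : (0:ℝ) < (m:ℝ) + 1 + M := by linarith
    rw [div_sub_div _ _ (ne_of_gt h1) (ne_of_gt h2)]
    rw [div_le_div_iff₀ (by positivity) (by positivity)]
    ring_nf
    nlinarith [sq_nonneg ((m:ℝ)+1+M)]
  have hsum := tele_hasSum M hM
  have hs : Summable (fun m : ℕ => 1/((m:ℝ) + 1 + M)^2) := by
    apply Summable.of_nonneg_of_le (fun m => by positivity) hle hsum.summable
  calc ∑' m : ℕ, 1/((m:ℝ) + 1 + M)^2 ≤ ∑' m : ℕ, (1/((m:ℝ) + M) - 1/((m:ℝ) + 1 + M)) :=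
        Summable.tsum_le_tsum hle hs hsum.summable
    _ = 1/M := hsum.tsum_eq

lemma summable_one_div_add_one_sq : Summable (fun m : ℕ => 1/((m:ℝ)+1)^2) := by
  have h := Real.summable_one_div_nat_pow.mpr (le_refl 2)
  have h2 := (summable_nat_add_iff 1).mpr h
  apply h2.congr
  intro m
  push_cast
  ring_nf


set_option maxHeartbeats 1000000 in
lemma T_bound (b : ℝ) (hb : 2 ≤ b) :
    ∑' m : ℕ, 1/(((m:ℝ)+1)^2 + b) ≤ 3/Real.sqrt b := by
  set s := Real.sqrt b with hs
  have hb0 : (0:ℝ) < b := by linarith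
  have hs1 : 1 ≤ s := Real.one_le_sqrt.mpr (by linarith)
  have hs0 : 0 < s := by linarith
  have hsb : s^2 = b := Real.sq_sqrt hb0.le
  obtain ⟨N, hNs, hNceil⟩ : ∃ N : ℕ, s ≤ (N:ℝ) ∧ (N:ℝ) ≤ s + 1 :=
    ⟨⌈s⌉₊, Nat.le_ceil s, (Nat.ceil_lt_add_one hs0.le).le⟩
  have hN1 : (1:ℝ) ≤ (N:ℝ) := le_trans hs1 hNs
  have hNs2 : (N:ℝ) ≤ 2*s := by linarith
  have hsum : Summable (fun m : ℕ => 1/(((m:ℝ)+1)^2 + b)) := by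
    apply Summable.of_nonneg_of_le (fun m => by positivity) _ summable_one_div_add_one_sq
    intro m
    apply one_div_le_one_div_of_le (by positivity)
    nlinarith [sq_nonneg ((m:ℝ)+1)]
  have hdecomp := (Summable.sum_add_tsum_nat_add N hsum).symm
  rw [hdecomp]
  have hhead : ∑ i ∈ range N, 1/(((i:ℝ)+1)^2 + b) ≤ (N:ℝ)/b := by
    calc ∑ i ∈ range N, 1/(((i:ℝ)+1)^2 + b) ≤ ∑ _i ∈ range N, 1/b := by
          apply Finset.sum_le_sum
          intro i _
          apply one_div_le_one_div_of_le hb0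
          nlinarith [sq_nonneg ((i:ℝ)+1)]
      _ = (N:ℝ)/b := by
          rw [Finset.sum_const, Finset.card_range, nsmul_eq_mul]
          ring
  have hsummid : Summable (fun m : ℕ => 1/((m:ℝ) + 1 + (N:ℝ))^2) := by
    apply Summable.of_nonneg_of_le (fun m => by positivity) _ summable_one_div_add_one_sq
    intro m
    apply one_div_le_one_div_of_le (by positivity)
    nlinarith [Nat.cast_nonneg (α := ℝ) m]
  have htail : ∑' m : ℕ, 1/(((((m+N:ℕ):ℝ))+1)^2 + b) ≤ 1/s := by
    have hstep : ∑' m : ℕ, 1/(((((m+N:ℕ):ℝ))+1)^2 + b) ≤ ∑' m : ℕ, 1/((m:ℝ) + 1 + (N:ℝ))^2 := by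
      refine Summable.tsum_le_tsum ?_ ((summable_nat_add_iff (f := fun m : ℕ => 1/(((m:ℝ)+1)^2 + b)) N).mpr hsum) hsummid
      intro m
      apply one_div_le_one_div_of_le (by positivity)
      push_cast
      nlinarith [hb0]
    calc ∑' m : ℕ, 1/(((((m+N:ℕ):ℝ))+1)^2 + b) ≤ ∑' m : ℕ, 1/((m:ℝ) + 1 + (N:ℝ))^2 := hstep
      _ ≤ 1/(N:ℝ) := tail_sq_le (N:ℝ) hN1
      _ ≤ 1/s := one_div_le_one_div_of_le hs0 hNs
  have hNb : (N:ℝ)/b ≤ 2/s := by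
    rw [← hsb, div_le_div_iff₀ (by positivity) hs0]
    nlinarith
  calc (∑ i ∈ range N, 1/(((i:ℝ)+1)^2 + b)) + ∑' m : ℕ, 1/(((((m+N:ℕ):ℝ))+1)^2 + b)
      ≤ (N:ℝ)/b + 1/s := add_le_add hhead htail
    _ ≤ 3/s := by
        have h9 : (2:ℝ)/s + 1/s = 3/s := by ring
        linarith

lemma aux_mono (x y : ℝ) (hx : 1 ≤ x) (hxy : x ≤ y) :
    (1 + Real.log y)/y ≤ (1 + Real.log x)/x := by
  have hx0 : (0:ℝ) < x := by linarith
  have hy0 : (0:ℝ) < y := by linarith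
  rw [div_le_div_iff₀ hy0 hx0]
  have hlog : Real.log y ≤ Real.log x + (y/x - 1) := by
    have h := Real.log_le_sub_one_of_pos (show (0:ℝ) < y/x by positivity)
    have h2 : Real.log (y/x) = Real.log y - Real.log x :=
      Real.log_div (ne_of_gt hy0) (ne_of_gt hx0)
    linarith
  have hlx : 0 ≤ Real.log x := Real.log_nonneg hx
  have hA : x * Real.log y ≤ x * (Real.log x + (y/x - 1)) :=
    mul_le_mul_of_nonneg_left hlog hx0.le
  have hC : x * (Real.log x + (y/x - 1)) = x * Real.log x + y - x := by
    field_simp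
    ring
  have hB : x * Real.log x ≤ y * Real.log x := mul_le_mul_of_nonneg_right hxy hlx
  nlinarith

lemma harmonic_sum_le (n : ℕ) (hn : 1 ≤ n) :
    ∑ m ∈ range n, 1/((m:ℝ)+1) ≤ 1 + Real.log n := by
  have h := harmonic_le_one_add_log n
  have hcast : ((harmonic n : ℚ) : ℝ) = ∑ m ∈ range n, 1/((m:ℝ)+1) := by
    rw [harmonic]
    push_cast
    apply Finset.sum_congr rfl
    intro i _
    rw [one_div]
  linarith [hcast ▸ h]

lemma P_bound (n : ℕ) (hn : 1 ≤ n) (b : ℝ) (hb : 2 ≤ b) :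
    ∑ m ∈ range n, 1/((n:ℝ)*((m:ℝ)+1) + b) ≤ 3 * Real.log b / Real.sqrt b := by
  set s := Real.sqrt b with hs
  set L := Real.log b with hLdef
  have hb0 : (0:ℝ) < b := by linarith
  have hs1 : 1 ≤ s := Real.one_le_sqrt.mpr (by linarith)
  have hs0 : 0 < s := by linarith
  have hsb : s^2 = b := Real.sq_sqrt hb0.le
  have hL : 1/2 ≤ L := by
    have h2 : Real.log 2 ≤ Real.log b := Real.log_le_log (by norm_num) hb
    have := Real.log_two_gt_d9
    rw [hLdef]
    linarith
  have hn0 : (0:ℝ) < (n:ℝ) := by exact_mod_cast Nat.pos_of_ne_zero (by omega)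
  rcases le_or_gt (n:ℝ) s with hcase | hcase
  · -- n ≤ √b : each term ≤ 1/b
    calc ∑ m ∈ range n, 1/((n:ℝ)*((m:ℝ)+1) + b) ≤ ∑ _m ∈ range n, 1/b := by
          apply Finset.sum_le_sum
          intro m _
          apply one_div_le_one_div_of_le hb0
          nlinarith [Nat.cast_nonneg (α := ℝ) m]
      _ = (n:ℝ)/b := by
          rw [Finset.sum_const, Finset.card_range, nsmul_eq_mul]; ring
      _ ≤ s/b := by gcongr
      _ = 1/s := by rw [← hsb]; field_simp
      _ ≤ 3 * L / s := by
          rw [div_le_div_iff₀ hs0 hs0]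
          nlinarith
  · -- √b < n : drop b, harmonic bound
    have hstep1 : ∑ m ∈ range n, 1/((n:ℝ)*((m:ℝ)+1) + b)
        ≤ ∑ m ∈ range n, (1/(n:ℝ)) * (1/((m:ℝ)+1)) := by
      apply Finset.sum_le_sum
      intro m _
      have hpos : (0:ℝ) < (n:ℝ)*((m:ℝ)+1) := by positivity
      calc 1/((n:ℝ)*((m:ℝ)+1) + b) ≤ 1/((n:ℝ)*((m:ℝ)+1)) :=
            one_div_le_one_div_of_le hpos (by linarith)
        _ = (1/(n:ℝ)) * (1/((m:ℝ)+1)) := by rw [one_div_mul_one_div]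
    have hstep3 : ∑ m ∈ range n, (1/(n:ℝ)) * (1/((m:ℝ)+1)) ≤ (1 + Real.log n)/(n:ℝ) := by
      rw [← Finset.mul_sum]
      have h := harmonic_sum_le n hn
      calc (1/(n:ℝ)) * ∑ m ∈ range n, 1/((m:ℝ)+1)
          = (∑ m ∈ range n, 1/((m:ℝ)+1))/(n:ℝ) := by ring
        _ ≤ (1 + Real.log n)/(n:ℝ) := by gcongr
    have hstep4 : (1 + Real.log (n:ℝ))/(n:ℝ) ≤ (1 + Real.log s)/s := aux_mono s (n:ℝ) hs1 hcase.le
    have hlogs : Real.log s = L/2 := by rw [hs, Real.log_sqrt hb0.le, hLdef]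
    have hfinal : (1 + L/2)/s ≤ 3 * L / s := by
      gcongr
      linarith
    calc ∑ m ∈ range n, 1/((n:ℝ)*((m:ℝ)+1) + b)
        ≤ (1 + Real.log (n:ℝ))/(n:ℝ) := le_trans hstep1 hstep3
      _ ≤ (1 + Real.log s)/s := hstep4
      _ = (1 + L/2)/s := by rw [hlogs]
      _ ≤ 3 * L / s := hfinal


lemma mid_bound (n : ℕ) (hn : 1 ≤ n) (b : ℝ) (hb : 2 ≤ b) :
    ∑ m ∈ range (2*n+1), 1/(|(n:ℝ)^2 - (m:ℝ)^2| + b)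
      ≤ 8 * Real.log b / Real.sqrt b := by
  set s := Real.sqrt b with hs
  set L := Real.log b with hLdef
  have hb0 : (0:ℝ) < b := by linarith
  have hs1 : 1 ≤ s := Real.one_le_sqrt.mpr (by linarith)
  have hs0 : 0 < s := by linarith
  have hsb : s^2 = b := Real.sq_sqrt hb0.le
  have hL : 1/2 ≤ L := by
    have h2 : Real.log 2 ≤ Real.log b := Real.log_le_log (by norm_num) hb
    have := Real.log_two_gt_d9
    rw [hLdef]; linarith
  have hn0 : (0:ℝ) < (n:ℝ) := by exact_mod_cast Nat.pos_of_ne_zero (by omega)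
  -- termwise bound by 1/(n*|n-m|+b)
  have hterm : ∀ m : ℕ, 1/(|(n:ℝ)^2 - (m:ℝ)^2| + b) ≤ 1/((n:ℝ)*|(n:ℝ)-(m:ℝ)| + b) := by
    intro m
    apply one_div_le_one_div_of_le (by positivity)
    have habs : |(n:ℝ)^2 - (m:ℝ)^2| = |(n:ℝ)-(m:ℝ)| * ((n:ℝ)+(m:ℝ)) := by
      rw [show (n:ℝ)^2-(m:ℝ)^2 = ((n:ℝ)-(m:ℝ))*((n:ℝ)+(m:ℝ)) by ring, abs_mul,
        abs_of_nonneg (by positivity : (0:ℝ) ≤ (n:ℝ)+(m:ℝ))]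
    rw [habs]
    have h1 : (0:ℝ) ≤ |(n:ℝ)-(m:ℝ)| := abs_nonneg _
    nlinarith [Nat.cast_nonneg (α := ℝ) m]
  have hsplit : ∑ m ∈ range (2*n+1), 1/((n:ℝ)*|(n:ℝ)-(m:ℝ)| + b)
      = (∑ m ∈ range (n+1), 1/((n:ℝ)*|(n:ℝ)-(m:ℝ)| + b))
        + ∑ m ∈ range n, 1/((n:ℝ)*|(n:ℝ)-((n+1+m:ℕ):ℝ)| + b) := by
    have h : 2*n+1 = (n+1)+n := by omega
    rw [h, Finset.sum_range_add]
  -- first part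
  have hfirst : ∑ m ∈ range (n+1), 1/((n:ℝ)*|(n:ℝ)-(m:ℝ)| + b)
      = ∑ j ∈ range (n+1), 1/((n:ℝ)*(j:ℝ) + b) := by
    rw [← Finset.sum_range_reflect (fun j => 1/((n:ℝ)*(j:ℝ) + b)) (n+1)]
    apply Finset.sum_congr rfl
    intro m hm
    have hmn : m ≤ n := by simpa [Nat.lt_succ_iff] using hm
    have h1 : (n + 1 - 1 - m : ℕ) = n - m := by omega
    rw [h1]
    have h2 : ((n - m : ℕ) : ℝ) = (n:ℝ) - (m:ℝ) := by
      rw [Nat.cast_sub hmn]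
    rw [h2, abs_of_nonneg (by
      have : (m:ℝ) ≤ (n:ℝ) := by exact_mod_cast hmn
      linarith)]
  have hsucc : ∑ j ∈ range (n+1), 1/((n:ℝ)*(j:ℝ) + b)
      = (∑ j ∈ range n, 1/((n:ℝ)*((j:ℝ)+1) + b)) + 1/b := by
    rw [Finset.sum_range_succ' (fun j => 1/((n:ℝ)*(j:ℝ) + b)) n]
    push_cast
    norm_num
  have hsecond : ∀ m : ℕ, 1/((n:ℝ)*|(n:ℝ)-((n+1+m:ℕ):ℝ)| + b)
      = 1/((n:ℝ)*((m:ℝ)+1) + b) := by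
    intro m
    congr 2
    push_cast
    rw [show (n:ℝ) - ((n:ℝ)+1+(m:ℝ)) = -((m:ℝ)+1) by ring, abs_neg,
      abs_of_nonneg (by positivity)]
  have hP := P_bound n hn b hb
  have h1b : 1/b ≤ 2 * L / s := by
    have hbs : s ≤ b := by nlinarith
    have e1 : 1/b ≤ 1/s := one_div_le_one_div_of_le hs0 hbs
    have e2 : 1/s ≤ 2 * L / s := by
      rw [div_le_div_iff₀ hs0 hs0]
      nlinarith
    linarith
  calc ∑ m ∈ range (2*n+1), 1/(|(n:ℝ)^2 - (m:ℝ)^2| + b)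
      ≤ ∑ m ∈ range (2*n+1), 1/((n:ℝ)*|(n:ℝ)-(m:ℝ)| + b) :=
        Finset.sum_le_sum (fun m _ => hterm m)
    _ = (∑ j ∈ range n, 1/((n:ℝ)*((j:ℝ)+1) + b)) + 1/b
        + ∑ m ∈ range n, 1/((n:ℝ)*((m:ℝ)+1) + b) := by
        rw [hsplit, hfirst, hsucc]
        simp only [hsecond]
    _ ≤ (3 * L / s) + (2 * L / s) + (3 * L / s) := by
        exact add_le_add (add_le_add hP h1b) hP
    _ = 8 * L / s := by ring


lemma nat_bound (n : ℕ) (hn : 1 ≤ n) (b : ℝ) (hb : 2 ≤ b) :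
    Summable (fun m : ℕ => 1/(|(n:ℝ)^2 - (m:ℝ)^2| + b)) ∧
    ∑' m : ℕ, 1/(|(n:ℝ)^2 - (m:ℝ)^2| + b) ≤ 20 * Real.log b / Real.sqrt b := by
  set s := Real.sqrt b with hs
  set L := Real.log b with hLdef
  have hb0 : (0:ℝ) < b := by linarith
  have hs1 : 1 ≤ s := Real.one_le_sqrt.mpr (by linarith)
  have hs0 : 0 < s := by linarith
  have hL : 1/2 ≤ L := by
    have h2 : Real.log 2 ≤ Real.log b := Real.log_le_log (by norm_num) hb
    have := Real.log_two_gt_d9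
    rw [hLdef]; linarith
  set g : ℕ → ℝ := fun m => 1/(|(n:ℝ)^2 - (m:ℝ)^2| + b) with hg
  -- tail termwise bound
  have htailterm : ∀ m : ℕ, g (m + (2*n+1)) ≤ 2 * (1/(((m:ℝ)+1)^2 + b)) := by
    intro m
    have hcast : ((m + (2*n+1) : ℕ) : ℝ) = (m:ℝ) + 2*(n:ℝ) + 1 := by push_cast; ring
    have hn1 : (1:ℝ) ≤ (n:ℝ) := by exact_mod_cast hn
    have habs : |(n:ℝ)^2 - ((m + (2*n+1):ℕ):ℝ)^2|
        = ((m:ℝ) + 2*(n:ℝ) + 1)^2 - (n:ℝ)^2 := by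
      rw [hcast, abs_sub_comm, abs_of_nonneg (by nlinarith [Nat.cast_nonneg (α := ℝ) m])]
    rw [hg]
    simp only
    rw [habs]
    rw [show 2 * (1/(((m:ℝ)+1)^2 + b)) = 2/(((m:ℝ)+1)^2 + b) by ring,
      div_le_div_iff₀ (by nlinarith [Nat.cast_nonneg (α := ℝ) m]) (by positivity)]
    nlinarith [Nat.cast_nonneg (α := ℝ) m]
  have hTsum : Summable (fun m : ℕ => 1/(((m:ℝ)+1)^2 + b)) := by
    apply Summable.of_nonneg_of_le (fun m => by positivity) _ summable_one_div_add_one_sq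
    intro m
    apply one_div_le_one_div_of_le (by positivity)
    nlinarith [sq_nonneg ((m:ℝ)+1)]
  have hgpos : ∀ m : ℕ, 0 ≤ g m := fun m => by rw [hg]; positivity
  have hgtail : Summable (fun m : ℕ => g (m + (2*n+1))) := by
    apply Summable.of_nonneg_of_le (fun m => hgpos _) htailterm (hTsum.mul_left 2)
  have hgsum : Summable g := (summable_nat_add_iff (2*n+1)).mp hgtail
  refine ⟨hgsum, ?_⟩
  have hdecomp := (Summable.sum_add_tsum_nat_add (2*n+1) hgsum).symm
  have htail : ∑' m : ℕ, g (m + (2*n+1)) ≤ 6 / s := by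
    calc ∑' m : ℕ, g (m + (2*n+1)) ≤ ∑' m : ℕ, 2 * (1/(((m:ℝ)+1)^2 + b)) :=
          Summable.tsum_le_tsum htailterm hgtail (hTsum.mul_left 2)
      _ = 2 * ∑' m : ℕ, 1/(((m:ℝ)+1)^2 + b) := tsum_mul_left
      _ ≤ 2 * (3/s) := by
          have := T_bound b hb
          linarith
      _ = 6 / s := by ring
  have h6 : 6 / s ≤ 12 * L / s := by
    rw [div_le_div_iff₀ hs0 hs0]
    nlinarith
  have hmid := mid_bound n hn b hb
  calc ∑' m : ℕ, g m = (∑ m ∈ range (2*n+1), g m) + ∑' m : ℕ, g (m + (2*n+1)) := hdecomp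
    _ ≤ 8 * L / s + 12 * L / s := add_le_add hmid (le_trans htail h6)
    _ = 20 * L / s := by ring

/-- There is an absolute constant `C > 0` such that for every `n ≥ 1` and every real
`b ≥ 2`, `∑_{k ∈ ℤ} 1/(|n² - k²| + b) ≤ C · (log b)/√b`. -/
theorem stmt2 :
    ∃ C : ℝ, 0 < C ∧ ∀ (n : ℕ), 1 ≤ n → ∀ b : ℝ, 2 ≤ b →
      (∑' k : ℤ, 1 / (|((n : ℝ))^2 - (k : ℝ)^2| + b)) ≤ C * Real.log b / Real.sqrt b := by
  refine ⟨40, by norm_num, ?_⟩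
  intro n hn b hb
  obtain ⟨hgsum, hS⟩ := nat_bound n hn b hb
  have hb0 : (0:ℝ) < b := by linarith
  set s := Real.sqrt b with hs
  set L := Real.log b with hLdef
  set g : ℕ → ℝ := fun m => 1/(|(n:ℝ)^2 - (m:ℝ)^2| + b) with hgdef
  set f : ℤ → ℝ := fun k => 1/(|(n:ℝ)^2 - (k:ℝ)^2| + b) with hfdef
  have hfn : ∀ m : ℕ, f (m:ℤ) = g m := by
    intro m
    simp only [hfdef, hgdef]
    push_cast
    ring_nf
  have hfneg : ∀ m : ℕ, f (-((m:ℤ)+1)) = g (m+1) := by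
    intro m
    simp only [hfdef, hgdef]
    push_cast
    ring_nf
  have hsum1 : Summable (fun m : ℕ => f (m:ℤ)) := hgsum.congr fun m => (hfn m).symm
  have hgshift : Summable (fun m : ℕ => g (m+1)) := (summable_nat_add_iff 1).mpr hgsum
  have hsum2 : Summable (fun m : ℕ => f (-((m:ℤ)+1))) :=
    hgshift.congr fun m => (hfneg m).symm
  have htsum := tsum_of_nat_of_neg_add_one hsum1 hsum2
  have he1 : ∑' m : ℕ, f (m:ℤ) = ∑' m : ℕ, g m := tsum_congr hfn
  have he2 : ∑' m : ℕ, f (-((m:ℤ)+1)) = ∑' m : ℕ, g (m+1) := tsum_congr hfneg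
  have hshift_le : ∑' m : ℕ, g (m+1) ≤ ∑' m : ℕ, g m := by
    have hd := (Summable.sum_add_tsum_nat_add 1 hgsum).symm
    have hg0 : 0 ≤ ∑ m ∈ range 1, g m := by
      apply Finset.sum_nonneg
      intro m _
      simp only [hgdef]
      positivity
    rw [hd]
    linarith
  have hfinal : ∑' k : ℤ, f k ≤ 2 * ∑' m : ℕ, g m := by
    rw [htsum, he1, he2]
    linarith
  have hL : 1/2 ≤ L := by
    have h2 : Real.log 2 ≤ Real.log b := Real.log_le_log (by norm_num) hb
    have := Real.log_two_gt_d9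
    rw [hLdef]; linarith
  calc ∑' k : ℤ, 1 / (|((n : ℝ))^2 - (k : ℝ)^2| + b) = ∑' k : ℤ, f k := rfl
    _ ≤ 2 * ∑' m : ℕ, g m := hfinal
    _ ≤ 2 * (20 * L / s) := by linarith
    _ = 40 * L / s := by ring
end

section
/- There is an absolute constant C > 0 such that for every integer n ≥ 0 and every real b > 0, the sum over all integers k with k ≠ ±n of 1/(|n² - k²|² + b²) is at most C / ((n² + b²)^{1/2} · (n⁴ + b²)^{1/4}). -/
open scoped BigOperators

noncomputable def myg (n : ℕ) (b : ℝ) (j : ℕ) : ℝ :=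
  if j = 0 then 0 else 1 / ((n:ℝ)^2 * (j:ℝ)^2 + (j:ℝ)^4 + b^2)

lemma myg_nonneg (n : ℕ) (b : ℝ) (j : ℕ) : 0 ≤ myg n b j := by
  unfold myg; split
  · exact le_refl 0
  · positivity

lemma myg_succ (n : ℕ) (b : ℝ) (j : ℕ) :
    myg n b (j+1) = 1 / ((n:ℝ)^2 * ((j:ℝ)+1)^2 + ((j:ℝ)+1)^4 + b^2) := by
  unfold myg
  rw [if_neg (Nat.succ_ne_zero j)]
  push_cast
  ring_nf

/-- telescoping bound for tsums over ℕ with zero first term -/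
lemma my_telescope {f d : ℕ → ℝ} (hf : ∀ j, 0 ≤ f j) (hf0 : f 0 = 0)
    (hd : ∀ j, 0 ≤ d j) (h : ∀ j, f (j+1) ≤ d j - d (j+1)) :
    Summable f ∧ ∑' j, f j ≤ d 0 := by
  have key : ∀ N, ∑ j ∈ Finset.range N, f j ≤ d 0 := by
    intro N
    cases N with
    | zero => simpa using hd 0
    | succ N =>
      rw [Finset.sum_range_succ', hf0, add_zero]
      calc ∑ i ∈ Finset.range N, f (i+1)
          ≤ ∑ i ∈ Finset.range N, (d i - d (i+1)) :=
            Finset.sum_le_sum (fun i _ => h i)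
        _ = d 0 - d N := by rw [Finset.sum_range_sub' d N]
        _ ≤ d 0 := by linarith [hd N]
  exact ⟨summable_of_sum_range_le hf key, Real.tsum_le_of_sum_range_le hf key⟩

-- piece 1 : weight n^2, bound 2
lemma piece1 (n : ℕ) (b : ℝ) (hb : 0 < b) :
    Summable (fun j => myg n b j * (n:ℝ)^2) ∧ ∑' j, myg n b j * (n:ℝ)^2 ≤ 2 := by
  have := my_telescope (f := fun j => myg n b j * (n:ℝ)^2) (d := fun j => 2 / ((j:ℝ)+1))
    (fun j => mul_nonneg (myg_nonneg n b j) (by positivity))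
    (by simp [myg])
    (fun j => by positivity)
    (fun j => ?_)
  · simpa using this
  · have hj : (0:ℝ) ≤ (j:ℝ) := Nat.cast_nonneg j
    push_cast
    rw [myg_succ, div_sub_div _ _ (by positivity) (by positivity : ((j:ℝ)+1+1) ≠ 0)]
    rw [div_mul_eq_mul_div, div_le_div_iff₀ (by positivity) (by positivity)]
    push_cast
    nlinarith [sq_nonneg ((n:ℝ)*((j:ℝ)+1)), sq_nonneg ((j:ℝ)+1), sq_nonneg b, sq_nonneg (((j:ℝ)+1)^2)]

-- piece 2 : weight b, bound 1
lemma piece2 (n : ℕ) (b : ℝ) (hb : 0 < b) :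
    Summable (fun j => myg n b j * b) ∧ ∑' j, myg n b j * b ≤ 1 := by
  have := my_telescope (f := fun j => myg n b j * b) (d := fun j => 1 / ((j:ℝ)+1))
    (fun j => mul_nonneg (myg_nonneg n b j) hb.le)
    (by simp [myg])
    (fun j => by positivity)
    (fun j => ?_)
  · simpa using this
  · have hj : (0:ℝ) ≤ (j:ℝ) := Nat.cast_nonneg j
    push_cast
    rw [myg_succ, div_sub_div _ _ (by positivity) (by positivity : ((j:ℝ)+1+1) ≠ 0)]
    rw [div_mul_eq_mul_div, div_le_div_iff₀ (by positivity) (by positivity)]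
    push_cast
    nlinarith [sq_nonneg (b - ((j:ℝ)+1)^2), sq_nonneg ((n:ℝ)*((j:ℝ)+1)), sq_nonneg ((j:ℝ)+1),
      mul_nonneg hb.le hj]

-- piece 3 : weight n*b, bound 2
lemma piece3 (n : ℕ) (b : ℝ) (hb : 0 < b) :
    Summable (fun j => myg n b j * ((n:ℝ)*b)) ∧ ∑' j, myg n b j * ((n:ℝ)*b) ≤ 2 := by
  have := my_telescope (f := fun j => myg n b j * ((n:ℝ)*b))
    (d := fun j => 2*b / ((n:ℝ)*(j:ℝ) + b))
    (fun j => mul_nonneg (myg_nonneg n b j) (by positivity))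
    (by simp [myg])
    (fun j => by positivity)
    (fun j => ?_)
  · refine ⟨this.1, le_trans this.2 (le_of_eq ?_)⟩
    push_cast
    rw [mul_zero, zero_add, mul_div_assoc, div_self hb.ne', mul_one]
  · have hj : (0:ℝ) ≤ (j:ℝ) := Nat.cast_nonneg j
    have hn : (0:ℝ) ≤ (n:ℝ) := Nat.cast_nonneg n
    push_cast
    rw [myg_succ, div_sub_div _ _ (by positivity) (by positivity : ((n:ℝ)*((j:ℝ)+1) + b) ≠ 0)]
    rw [div_mul_eq_mul_div, div_le_div_iff₀ (by positivity) (by positivity)]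
    push_cast
    have hn1 : (0:ℝ) < (n:ℝ)*((j:ℝ)+1) + b := by positivity
    have hprod : ((n:ℝ)*(j:ℝ)+b)*((n:ℝ)*((j:ℝ)+1)+b)
        ≤ 2*((n:ℝ)^2*((j:ℝ)+1)^2 + ((j:ℝ)+1)^4 + b^2) := by
      nlinarith [sq_nonneg ((n:ℝ)*((j:ℝ)+1) - b), mul_nonneg hn hn1.le, sq_nonneg ((j:ℝ)+1),
        mul_pos hb hn1]
    nlinarith [mul_le_mul_of_nonneg_left hprod (mul_nonneg hn hb.le)]

-- piece 4 : weight b * sqrt b, bound 8/3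
lemma piece4 (n : ℕ) (b : ℝ) (hb : 0 < b) :
    Summable (fun j => myg n b j * (b * Real.sqrt b)) ∧
      ∑' j, myg n b j * (b * Real.sqrt b) ≤ 8/3 := by
  set s := Real.sqrt b with hsdef
  have hs : 0 < s := Real.sqrt_pos.mpr hb
  have hs2 : s^2 = b := Real.sq_sqrt hb.le
  have := my_telescope (f := fun j => myg n b j * (b * s))
    (d := fun j => (8/3) * s^3 / ((j:ℝ) + s)^3)
    (fun j => mul_nonneg (myg_nonneg n b j) (by positivity))
    (by simp [myg])
    (fun j => by positivity)
    (fun j => ?_)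
  · refine ⟨this.1, le_trans this.2 (le_of_eq ?_)⟩
    push_cast
    rw [zero_add, mul_div_assoc, div_self (by positivity), mul_one]
  · have hj : (0:ℝ) ≤ (j:ℝ) := Nat.cast_nonneg j
    have hn : (0:ℝ) ≤ (n:ℝ) := Nat.cast_nonneg n
    push_cast
    rw [myg_succ]
    set x : ℝ := (j:ℝ) + 1 with hx
    have hx1 : (1:ℝ) ≤ x := by rw [hx]; linarith
    have hA : (0:ℝ) < (j:ℝ) + s := by positivity
    have hB : (0:ℝ) < (j:ℝ) + 1 + s := by positivity
    set A : ℝ := (j:ℝ) + s with hAdef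
    set B : ℝ := (j:ℝ) + 1 + s with hBdef
    have hBA : B = A + 1 := by rw [hAdef, hBdef]; ring
    -- step 1 : term ≤ s^3/(x^4+s^4)
    have hT : (0:ℝ) < x^4 + s^4 := by positivity
    have step1 : 1 / ((n:ℝ)^2 * x^2 + x^4 + b^2) * (b*s) ≤ s^3 / (x^4 + s^4) := by
      rw [div_mul_eq_mul_div, one_mul, div_le_div_iff₀ (by positivity) hT]
      have : b * s = s^3 := by rw [← hs2]; ring
      rw [this]
      have hb2 : b^2 = s^4 := by rw [← hs2]; ring
      nlinarith [pow_nonneg hs.le 3, sq_nonneg ((n:ℝ)*x), pow_pos hs 3]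
    refine le_trans step1 ?_
    -- step 2 : s^3/(x^4+s^4) ≤ d j - d (j+1)
    have hBx : B = x + s := by rw [hBdef, hx]
    have h1 : B^4 ≤ 8*(x^4 + s^4) := by
      have e1 : (x+s)^2 ≤ 2*x^2 + 2*s^2 := by nlinarith [sq_nonneg (x-s)]
      have e2 : ((x+s)^2)^2 ≤ (2*x^2+2*s^2)^2 := pow_le_pow_left₀ (sq_nonneg _) e1 2
      have e3 : B^4 = ((x+s)^2)^2 := by rw [hBx]; ring
      nlinarith [sq_nonneg (x^2 - s^2)]
    have h2 : A * B^3 ≤ B^4 := by nlinarith [pow_pos hB 3]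
    have h3 : 3*A^2 ≤ B^3 - A^3 := by rw [hBA]; nlinarith [hA.le]
    have m1 := mul_le_mul_of_nonneg_left h2 (sq_nonneg A)
    have m2 := mul_le_mul_of_nonneg_left h1 (sq_nonneg A)
    have step2a : A^3 * B^3 ≤ 8 * (A^2 * (x^4+s^4)) := by
      calc A^3 * B^3 = A^2 * (A * B^3) := by ring
        _ ≤ A^2 * B^4 := m1
        _ ≤ A^2 * (8*(x^4+s^4)) := m2
        _ = 8 * (A^2 * (x^4+s^4)) := by ring
    have step2b : 8 * (A^2 * (x^4+s^4)) ≤ (8/3) * (B^3 - A^3) * (x^4+s^4) := by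
      have hm := mul_le_mul_of_nonneg_right h3 hT.le
      clear_value A B x s
      linarith
    rw [div_sub_div _ _ (by positivity : A^3 ≠ 0) (by positivity : B^3 ≠ 0),
      div_le_div_iff₀ hT (by positivity)]
    have final : A^3*B^3 ≤ (8/3) * (B^3 - A^3) * (x^4+s^4) := step2a.trans step2b
    have hfin := mul_le_mul_of_nonneg_left final (pow_nonneg hs.le 3)
    clear_value A B x s
    linarith

lemma M_le_T (n : ℕ) (b : ℝ) (hb : 0 < b) :
    ((n:ℝ)^2 + b^2) ^ ((1:ℝ)/2) * ((n:ℝ)^4 + b^2) ^ ((1:ℝ)/4)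
      ≤ (n:ℝ)^2 + b + (n:ℝ)*b + b * Real.sqrt b := by
  set s := Real.sqrt b with hsdef
  have hs : 0 < s := Real.sqrt_pos.mpr hb
  have hs2 : s^2 = b := Real.sq_sqrt hb.le
  have hn : (0:ℝ) ≤ (n:ℝ) := Nat.cast_nonneg n
  have hA : (0:ℝ) < (n:ℝ)^2 + b^2 := by positivity
  have hB : (0:ℝ) < (n:ℝ)^4 + b^2 := by positivity
  set M : ℝ := ((n:ℝ)^2 + b^2) ^ ((1:ℝ)/2) * ((n:ℝ)^4 + b^2) ^ ((1:ℝ)/4) with hM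
  have hMpos : 0 ≤ M := by positivity
  have h2 : (((n:ℝ)^2 + b^2) ^ ((1:ℝ)/2)) ^ (4:ℕ) = ((n:ℝ)^2+b^2)^2 := by
    rw [← Real.rpow_natCast (((n:ℝ)^2 + b^2) ^ ((1:ℝ)/2)) 4, ← Real.rpow_mul hA.le]
    norm_num
  have h4 : (((n:ℝ)^4 + b^2) ^ ((1:ℝ)/4)) ^ (4:ℕ) = (n:ℝ)^4+b^2 := by
    rw [← Real.rpow_natCast (((n:ℝ)^4 + b^2) ^ ((1:ℝ)/4)) 4, ← Real.rpow_mul hB.le]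
    norm_num
  have hM4 : M^(4:ℕ) = ((n:ℝ)^2+b^2)^2 * ((n:ℝ)^4+b^2) := by
    rw [hM, mul_pow, h2, h4]
  have hT : (0:ℝ) ≤ (n:ℝ)^2 + b + (n:ℝ)*b + b*s := by positivity
  refine le_of_pow_le_pow_left₀ (by norm_num : (4:ℕ) ≠ 0) hT ?_
  rw [hM4]
  -- T^2 ≥ (n^2+b^2)(n^2+b) and (n^2+b)^2 ≥ n^4+b^2
  have e1 : ((n:ℝ)^2 + b^2) * ((n:ℝ)^2 + b) ≤ ((n:ℝ)^2 + b + (n:ℝ)*b + b*s)^2 := by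
    nlinarith [mul_nonneg hn hb.le, sq_nonneg ((n:ℝ)*b), mul_nonneg (mul_nonneg hb.le hb.le) hb.le,
      mul_nonneg hb.le hs.le, mul_nonneg (mul_nonneg hn hb.le) hb.le, sq_nonneg ((n:ℝ) - s),
      mul_nonneg (mul_nonneg hn hn) hb.le, mul_nonneg (mul_nonneg (mul_nonneg hn hn) hn) hb.le,
      mul_pos hb hs, mul_nonneg (mul_nonneg hn hb.le) hs.le]
  have e2 : (n:ℝ)^4 + b^2 ≤ ((n:ℝ)^2 + b)^2 := by nlinarith [mul_nonneg (mul_nonneg hn hn) hb.le]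
  have e0 : (0:ℝ) ≤ ((n:ℝ)^2+b^2) * ((n:ℝ)^2 + b) := by positivity
  calc ((n:ℝ)^2+b^2)^2 * ((n:ℝ)^4+b^2)
      ≤ ((n:ℝ)^2+b^2)^2 * ((n:ℝ)^2+b)^2 := by
        apply mul_le_mul_of_nonneg_left e2 (by positivity)
    _ = (((n:ℝ)^2+b^2) * ((n:ℝ)^2+b))^2 := by ring
    _ ≤ (((n:ℝ)^2 + b + (n:ℝ)*b + b*s)^2)^2 := pow_le_pow_left₀ e0 e1 2
    _ = ((n:ℝ)^2 + b + (n:ℝ)*b + b*s)^(4:ℕ) := by ring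

lemma core (n : ℕ) (b : ℝ) (hb : 0 < b) :
    Summable (myg n b) ∧
    (∑' j, myg n b j) ≤ 8 / (((n:ℝ)^2 + b^2) ^ ((1:ℝ)/2) * ((n:ℝ)^4 + b^2) ^ ((1:ℝ)/4)) := by
  have hsum : Summable (myg n b) := by
    have h2 := (piece2 n b hb).1
    have : (fun j => myg n b j * b) = fun j => b * myg n b j := by funext j; ring
    rw [this] at h2
    exact (summable_mul_left_iff hb.ne').mp h2
  refine ⟨hsum, ?_⟩
  set M : ℝ := ((n:ℝ)^2 + b^2) ^ ((1:ℝ)/2) * ((n:ℝ)^4 + b^2) ^ ((1:ℝ)/4) with hM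
  have hMpos : 0 < M := by
    have hA : (0:ℝ) < (n:ℝ)^2 + b^2 := by positivity
    have hB : (0:ℝ) < (n:ℝ)^4 + b^2 := by positivity
    positivity
  set S : ℝ := ∑' j, myg n b j with hS
  have hSnn : 0 ≤ S := tsum_nonneg (myg_nonneg n b)
  rw [le_div_iff₀ hMpos]
  have hT := M_le_T n b hb
  calc S * M ≤ S * ((n:ℝ)^2 + b + (n:ℝ)*b + b * Real.sqrt b) :=
        mul_le_mul_of_nonneg_left hT hSnn
    _ = S * (n:ℝ)^2 + S * b + S * ((n:ℝ)*b) + S * (b * Real.sqrt b) := by ring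
    _ ≤ 2 + 1 + 2 + 8/3 := by
        have e1 : S * (n:ℝ)^2 = ∑' j, myg n b j * (n:ℝ)^2 := (tsum_mul_right).symm
        have e2 : S * b = ∑' j, myg n b j * b := (tsum_mul_right).symm
        have e3 : S * ((n:ℝ)*b) = ∑' j, myg n b j * ((n:ℝ)*b) := (tsum_mul_right).symm
        have e4 : S * (b * Real.sqrt b) = ∑' j, myg n b j * (b * Real.sqrt b) :=
          (tsum_mul_right).symm
        rw [e1, e2, e3, e4]
        gcongr
        · exact (piece1 n b hb).2
        · exact (piece2 n b hb).2
        · exact (piece3 n b hb).2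
        · exact (piece4 n b hb).2
    _ ≤ 8 := by norm_num

lemma bound_aux (n K : ℕ) (b : ℝ) (hb : 0 < b) (x : ℝ) (hx : x^2 = (K:ℝ)^2) (hne : K ≠ n) :
    1 / (|((n:ℝ))^2 - x^2|^2 + b^2) ≤ 2 * myg n b (K - n + (n - K)) := by
  rw [myg, if_neg (by omega : (K - n + (n - K) : ℕ) ≠ 0)]
  have hjr : ((K - n + (n - K) : ℕ) : ℝ) = |(K:ℝ) - (n:ℝ)| := by
    rcases le_total n K with h | h
    · rw [abs_of_nonneg (sub_nonneg.mpr (Nat.cast_le.mpr h))]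
      have h2 : K - n + (n - K) = K - n := by omega
      rw [h2, Nat.cast_sub h]
    · rw [abs_of_nonpos (sub_nonpos.mpr (Nat.cast_le.mpr h))]
      have h2 : K - n + (n - K) = n - K := by omega
      rw [h2, Nat.cast_sub h]
      ring
  rw [hx, hjr]
  have hKnn : (0:ℝ) ≤ (K:ℝ) := Nat.cast_nonneg K
  have hnnn : (0:ℝ) ≤ (n:ℝ) := Nat.cast_nonneg n
  have hj2 : |(K:ℝ) - (n:ℝ)|^2 = ((K:ℝ) - (n:ℝ))^2 := sq_abs _
  have hj4 : |(K:ℝ) - (n:ℝ)|^4 = ((K:ℝ) - (n:ℝ))^4 := by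
    rw [show |(K:ℝ) - (n:ℝ)|^4 = (|(K:ℝ) - (n:ℝ)|^2)^2 by ring, hj2]; ring
  have habs : |((n:ℝ))^2 - (K:ℝ)^2|^2 = ((n:ℝ)^2 - (K:ℝ)^2)^2 := sq_abs _
  rw [habs, mul_one_div, div_le_div_iff₀ (by positivity) (by positivity)]
  rw [hj2, hj4]
  have hKm : ((K:ℝ) - (n:ℝ))^2 ≤ ((K:ℝ) + (n:ℝ))^2 := by
    nlinarith [mul_nonneg hKnn hnnn]
  have hm2 : ((n:ℝ))^2 ≤ ((K:ℝ) + (n:ℝ))^2 := by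
    nlinarith [mul_nonneg hKnn hnnn, sq_nonneg (K:ℝ)]
  nlinarith [mul_le_mul_of_nonneg_left hm2 (sq_nonneg ((K:ℝ) - (n:ℝ))),
    mul_le_mul_of_nonneg_left hKm (sq_nonneg ((K:ℝ) - (n:ℝ)))]

/-- There is an absolute constant `C > 0` such that for every integer `n ≥ 0` and every
real `b > 0`, `∑_{k ≠ ±n} 1/(|n² - k²|² + b²) ≤ C/((n² + b²)^{1/2} (n⁴ + b²)^{1/4})`. -/
theorem stmt3 :
    ∃ C : ℝ, 0 < C ∧ ∀ (n : ℕ) (b : ℝ), 0 < b →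
      (∑' k : {k : ℤ // k ≠ (n : ℤ) ∧ k ≠ -(n : ℤ)},
          1 / (|((n : ℝ))^2 - ((k : ℤ) : ℝ)^2|^2 + b^2))
        ≤ C / (((n : ℝ)^2 + b^2) ^ ((1 : ℝ)/2) * ((n : ℝ)^4 + b^2) ^ ((1 : ℝ)/4)) := by
  refine ⟨64, by norm_num, fun n b hb => ?_⟩
  have hA : (0:ℝ) < (n:ℝ)^2 + b^2 := by positivity
  have hB : (0:ℝ) < (n:ℝ)^4 + b^2 := by positivity
  have hMpos : (0:ℝ) < ((n:ℝ)^2 + b^2) ^ ((1:ℝ)/2) * ((n:ℝ)^4 + b^2) ^ ((1:ℝ)/4) := by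
    positivity
  by_cases hsf : Summable (fun k : {k : ℤ // k ≠ (n : ℤ) ∧ k ≠ -(n : ℤ)} =>
      1 / (|((n : ℝ))^2 - ((k : ℤ) : ℝ)^2|^2 + b^2))
  swap
  · rw [tsum_eq_zero_of_not_summable hsf]
    positivity
  have hGsum : Summable (fun p : ℕ × Bool × Bool => 2 * myg n b p.1) := by
    refine (summable_prod_of_nonneg ?_).mpr ⟨fun j => Summable.of_finite, ?_⟩
    · intro p; exact mul_nonneg (by norm_num) (myg_nonneg n b p.1)
    · have h8 : (fun j => ∑' (s : Bool × Bool), 2 * myg n b j) = fun j => 8 * myg n b j := by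
        funext j
        rw [tsum_fintype]
        simp
        ring
      rw [h8]
      exact (core n b hb).1.mul_left 8
  have hinj : Function.Injective (fun k : {k : ℤ // k ≠ (n : ℤ) ∧ k ≠ -(n : ℤ)} =>
      ((k : ℤ).natAbs - n + (n - (k : ℤ).natAbs),
        decide (0 ≤ (k : ℤ)), decide (n ≤ (k : ℤ).natAbs))) := by
    rintro ⟨a, ha1, ha2⟩ ⟨c, hc1, hc2⟩ h
    simp only [Prod.mk.injEq, decide_eq_decide] at h
    obtain ⟨h1, h2, h3⟩ := h
    simp only [Subtype.mk.injEq]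
    omega
  have hbound : ∀ k : {k : ℤ // k ≠ (n : ℤ) ∧ k ≠ -(n : ℤ)},
      1 / (|((n : ℝ))^2 - ((k : ℤ) : ℝ)^2|^2 + b^2)
        ≤ 2 * myg n b ((k : ℤ).natAbs - n + (n - (k : ℤ).natAbs)) := by
    rintro ⟨k, hk1, hk2⟩
    refine bound_aux n k.natAbs b hb _ ?_ (by omega)
    have h1 : ((k.natAbs : ℤ)) = |k| := Int.natCast_natAbs k
    have h2 : ((k.natAbs : ℝ)) = |((k:ℤ):ℝ)| := by
      rw [← Int.cast_natCast (R := ℝ), h1, Int.cast_abs]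
    rw [h2, sq_abs]
  have hle := Summable.tsum_le_tsum_of_inj _ hinj
    (fun c _ => mul_nonneg (by norm_num) (myg_nonneg n b c.1)) hbound hsf hGsum
  have hGval : ∑' p : ℕ × Bool × Bool, 2 * myg n b p.1 = 8 * ∑' j, myg n b j := by
    rw [Summable.tsum_prod' hGsum (fun j => Summable.of_finite)]
    have h8 : (fun j => ∑' (s : Bool × Bool), 2 * myg n b j) = fun j => 8 * myg n b j := by
      funext j
      rw [tsum_fintype]
      simp
      ring
    rw [show ∑' (j : ℕ) (s : Bool × Bool), 2 * myg n b j = ∑' j, (8 * myg n b j) from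
      congrArg tsum h8]
    exact tsum_mul_left
  refine le_trans hle ?_
  rw [hGval]
  have hcore := (core n b hb).2
  calc 8 * ∑' j, myg n b j
      ≤ 8 * (8 / (((n:ℝ)^2 + b^2) ^ ((1:ℝ)/2) * ((n:ℝ)^4 + b^2) ^ ((1:ℝ)/4))) := by linarith
    _ = 64 / (((n:ℝ)^2 + b^2) ^ ((1:ℝ)/2) * ((n:ℝ)^4 + b^2) ^ ((1:ℝ)/4)) := by ring
end

section
/- Let H be a Hilbert space and let A : D(A) → H and B : D(B) → H be linear operators defined on subspaces D(A), D(B) ⊆ H satisfying ⟨A f, g⟩ = ⟨f, B g⟩ for all f ∈ D(A) and g ∈ D(B). If there exists λ ∈ ℂ such that A - λ maps D(A) onto H and B - λ̄ maps D(B) onto H, then D(A) is dense in H. -/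
open scoped InnerProductSpace

/-- If `A`, `B` are formally adjoint unbounded operators in a Hilbert space `H` and there
is `λ ∈ ℂ` such that `A - λ` and `B - conj λ` are surjective onto `H`, then the domain of
`A` is dense in `H`. -/
theorem stmt4 {H : Type*} [NormedAddCommGroup H] [InnerProductSpace ℂ H] [CompleteSpace H]
    (A B : H →ₗ.[ℂ] H)
    (hadj : ∀ (f : A.domain) (g : B.domain), ⟪A f, (g : H)⟫_ℂ = ⟪(f : H), B g⟫_ℂ)
    (lam : ℂ)
    (hA : ∀ h : H, ∃ f : A.domain, A f - lam • (f : H) = h)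
    (hB : ∀ h : H, ∃ g : B.domain, B g - (starRingEnd ℂ) lam • (g : H) = h) :
    Dense (A.domain : Set H) := by
  rw [Submodule.dense_iff_topologicalClosure_eq_top,
    ← Submodule.orthogonal_eq_bot_iff, Submodule.eq_bot_iff]
  intro h hh
  obtain ⟨g, hg⟩ := hB h
  have key : ∀ f : A.domain, ⟪A f - lam • (f : H), (g : H)⟫_ℂ = 0 := by
    intro f
    have h1 : ⟪(f : H), h⟫_ℂ = 0 :=
      (Submodule.mem_orthogonal _ h).mp hh _ (A.domain.le_topologicalClosure f.2)
    rw [← hg, inner_sub_right, inner_smul_right] at h1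
    rw [inner_sub_left, inner_smul_left, hadj f g]
    linear_combination h1
  have hg0 : (g : H) = 0 := by
    rw [← inner_self_eq_zero (𝕜 := ℂ)]
    obtain ⟨f, hf⟩ := hA (g : H)
    have := key f
    rwa [hf] at this
  rw [← hg, hg0, smul_zero, sub_zero]
  have : g = (0 : B.domain) := Subtype.ext hg0
  rw [this]; simp
end

section
/- Let H be a Hilbert space and let A : D(A) → H and B : D(B) → H be densely defined linear operators satisfying ⟨A f, g⟩ = ⟨f, B g⟩ for all f ∈ D(A), g ∈ D(B). If there exists λ ∈ ℂ such that A - λ is surjective onto H and B - λ̄ is surjective onto H, then the adjoint of A equals B (i.e., the domain of A* equals D(B) and A* g = B g for all g ∈ D(B)). -/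
open scoped InnerProductSpace
open LinearPMap

/-- If `A`, `B` are densely defined, formally adjoint unbounded operators in a Hilbert
space `H` and there is `λ ∈ ℂ` such that `A - λ` and `B - conj λ` are surjective onto
`H`, then the adjoint of `A` equals `B`. -/
theorem stmt5 {H : Type*} [NormedAddCommGroup H] [InnerProductSpace ℂ H] [CompleteSpace H]
    (A B : H →ₗ.[ℂ] H)
    (hdA : Dense (A.domain : Set H)) (hdB : Dense (B.domain : Set H))
    (hadj : ∀ (f : A.domain) (g : B.domain), ⟪A f, (g : H)⟫_ℂ = ⟪(f : H), B g⟫_ℂ)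
    (lam : ℂ)
    (hA : ∀ h : H, ∃ f : A.domain, A f - lam • (f : H) = h)
    (hB : ∀ h : H, ∃ g : B.domain, B g - (starRingEnd ℂ) lam • (g : H) = h) :
    A.adjoint = B := by
  have hFA : A.IsFormalAdjoint B := hadj
  have hAdjFA := LinearPMap.adjoint_isFormalAdjoint hdA (T := A)
  have key : ∀ g : A.adjoint.domain, ∃ u : B.domain,
      (u : H) = (g : H) ∧ B u = A.adjoint g := by
    intro g
    obtain ⟨u, hu⟩ := hB (A.adjoint g - (starRingEnd ℂ) lam • (g : H))
    have horth : ∀ h : H, ⟪h, (g : H) - (u : H)⟫_ℂ = 0 := by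
      intro h
      obtain ⟨f, hf⟩ := hA h
      rw [← hf]
      have h1 : ⟪A f, (g : H)⟫_ℂ = ⟪(f : H), A.adjoint g⟫_ℂ := by
        rw [← inner_conj_symm, ← hAdjFA g f, inner_conj_symm]
      have h2 : ⟪A f, (u : H)⟫_ℂ = ⟪(f : H), B u⟫_ℂ := hadj f u
      have : ⟪A f - lam • (f : H), (g : H) - (u : H)⟫_ℂ
          = ⟪(f : H), (A.adjoint g - (starRingEnd ℂ) lam • (g : H))
              - (B u - (starRingEnd ℂ) lam • (u : H))⟫_ℂ := by
        simp only [inner_sub_left, inner_sub_right, inner_smul_left, inner_smul_right, h1, h2]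
      rw [this, hu, sub_self, inner_zero_right]
    have hgu : (g : H) - (u : H) = 0 := by
      have := horth ((g : H) - (u : H))
      rwa [inner_self_eq_zero] at this
    have hgu' : (u : H) = (g : H) := by
      have := sub_eq_zero.mp hgu
      exact this.symm
    refine ⟨u, hgu', ?_⟩
    have : B u - (starRingEnd ℂ) lam • (u : H)
        = A.adjoint g - (starRingEnd ℂ) lam • (g : H) := hu
    rw [hgu'] at this
    linear_combination (norm := module) this
  have hd : A.adjoint.domain ≤ B.domain := by
    intro x hx
    obtain ⟨u, hu1, -⟩ := key ⟨x, hx⟩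
    have : (u : H) = x := hu1
    rw [← this]
    exact u.2
  have hv : ∀ ⦃x : A.adjoint.domain⦄ ⦃y : B.domain⦄, (x : H) = (y : H) →
      A.adjoint x = B y := by
    intro x y hxy
    obtain ⟨u, hu1, hu2⟩ := key x
    have : u = y := Subtype.ext (hu1.trans hxy)
    rw [← hu2, this]
  exact le_antisymm (And.intro hd hv : A.adjoint ≤ B) (hFA.le_adjoint hdA)
end

section
/- Let f, g ∈ L¹([0,π]) with sine coefficients f_k = (1/π)∫₀^π f(x)·√2 sin(kx) dx for k ∈ ℕ (k ≥ 1) and cosine coefficients g_0 = (1/π)∫₀^π g(x) dx, g_k = (1/π)∫₀^π g(x)·√2 cos(kx) dx for k ≥ 1. Then the following are equivalent: (i) f has an absolutely continuous representative with f(0) = f(π) = 0 and f' = g almost everywhere; (ii) g_0 = 0 and g_k = k·f_k for all k ≥ 1. -/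
open MeasureTheory Real intervalIntegral

open Set

section Aux

lemma partsA (u : ℝ → ℂ) (hu : IntegrableOn u (Set.Ioc 0 π))
    (φ φ' : ℝ → ℂ) (hφ : ∀ x, HasDerivAt φ (φ' x) x) (hφ' : Continuous φ') :
    ∫ x in (0:ℝ)..π, u x * φ x
      = (∫ x in (0:ℝ)..π, u x) * φ π - ∫ x in (0:ℝ)..π, (∫ t in (0:ℝ)..x, u t) * φ' x := by
  have hπ := Real.pi_pos
  have hftc : ∀ x : ℝ, ∫ t in x..π, φ' t = φ π - φ x := fun x =>
    intervalIntegral.integral_eq_sub_of_hasDerivAt (fun t _ => hφ t)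
      (hφ'.intervalIntegrable _ _)
  set S : Set (ℝ × ℝ) := {p : ℝ × ℝ | p.1 < p.2} with hS
  have hSm : MeasurableSet S := measurableSet_lt measurable_fst measurable_snd
  set μ : Measure ℝ := volume.restrict (Set.Ioc 0 π) with hμ
  set W : ℝ × ℝ → ℂ := S.indicator (fun p : ℝ × ℝ => u p.1 * φ' p.2) with hW
  have hFint : Integrable W (μ.prod μ) := by
    apply Integrable.indicator _ hSm
    exact hu.mul_prod hφ'.integrableOn_Ioc
  -- inner integral in t
  have inner1 : ∀ x ∈ Set.Ioc (0:ℝ) π, ∫ t, W (x, t) ∂μ = u x * ∫ t in x..π, φ' t := by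
    intro x hx
    have h1 : (fun t => W (x, t)) = (Set.Ioi x).indicator (fun t => u x * φ' t) := by
      funext t
      by_cases h : x < t
      · simp [hW, hS, Set.indicator_of_mem, h, Set.mem_Ioi.mpr h]
      · simp [hW, hS, Set.indicator_of_notMem, h, fun hh => h (Set.mem_Ioi.mp hh)]
    rw [h1, MeasureTheory.integral_indicator measurableSet_Ioi, hμ, Measure.restrict_restrict measurableSet_Ioi]
    have h2 : Set.Ioi x ∩ Set.Ioc 0 π = Set.Ioc x π := by
      ext y
      simp only [Set.mem_inter_iff, Set.mem_Ioi, Set.mem_Ioc]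
      exact ⟨fun ⟨h1', h2', h3'⟩ => ⟨h1', h3'⟩, fun ⟨h1', h2'⟩ => ⟨h1', lt_trans hx.1 h1', h2'⟩⟩
    rw [h2, MeasureTheory.integral_const_mul, ← intervalIntegral.integral_of_le hx.2]
  -- inner integral in x
  have inner2 : ∀ t ∈ Set.Ioc (0:ℝ) π, ∫ x, W (x, t) ∂μ = (∫ s in (0:ℝ)..t, u s) * φ' t := by
    intro t ht
    have h1 : (fun x => W (x, t)) = (Set.Iio t).indicator (fun x => u x * φ' t) := by
      funext x
      by_cases h : x < t
      · simp [hW, hS, Set.indicator_of_mem, h, Set.mem_Iio.mpr h]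
      · simp [hW, hS, Set.indicator_of_notMem, h, fun hh => h (Set.mem_Iio.mp hh)]
    rw [h1, MeasureTheory.integral_indicator measurableSet_Iio, hμ, Measure.restrict_restrict measurableSet_Iio]
    have h2 : Set.Iio t ∩ Set.Ioc 0 π = Set.Ioo 0 t := by
      ext y
      simp only [Set.mem_inter_iff, Set.mem_Iio, Set.mem_Ioc, Set.mem_Ioo]
      exact ⟨fun ⟨h1', h2', h3'⟩ => ⟨h2', h1'⟩, fun ⟨h1', h2'⟩ => ⟨h2', h1', le_trans h2'.le ht.2⟩⟩
    rw [h2, MeasureTheory.integral_mul_const, ← MeasureTheory.integral_Ioc_eq_integral_Ioo,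
      ← intervalIntegral.integral_of_le ht.1.le]
  have swap := MeasureTheory.integral_integral_swap (μ := μ) (ν := μ)
      (f := fun x t => W (x, t)) hFint
  -- integrability of x ↦ u x * ∫ t in x..π, φ' t
  have hint2 : Integrable (fun x => u x * ∫ t in x..π, φ' t) μ := by
    have := hFint.integral_prod_left
    apply this.congr
    filter_upwards [ae_restrict_mem measurableSet_Ioc] with x hx
    exact inner1 x hx
  rw [intervalIntegral.integral_of_le hπ.le, intervalIntegral.integral_of_le hπ.le,
    intervalIntegral.integral_of_le hπ.le]
  calc ∫ x in Set.Ioc 0 π, u x * φ x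
      = ∫ x in Set.Ioc 0 π, (u x * φ π - u x * ∫ t in x..π, φ' t) := by
        apply setIntegral_congr_fun measurableSet_Ioc
        intro x _
        show u x * φ x = u x * φ π - u x * ∫ t in x..π, φ' t
        rw [hftc x]; ring
    _ = (∫ x in Set.Ioc 0 π, u x) * φ π - ∫ x in Set.Ioc 0 π, (∫ t in (0:ℝ)..x, u t) * φ' x := by
        rw [MeasureTheory.integral_sub (hu.mul_const _) hint2,
          MeasureTheory.integral_mul_const]
        congr 1
        calc ∫ x in Set.Ioc 0 π, u x * ∫ t in x..π, φ' t
            = ∫ x, (∫ t, W (x, t) ∂μ) ∂μ := by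
              apply setIntegral_congr_fun measurableSet_Ioc
              intro x hx
              exact (inner1 x hx).symm

          _ = ∫ t, (∫ x, W (x, t) ∂μ) ∂μ := swap
          _ = ∫ t in Set.Ioc 0 π, (∫ s in (0:ℝ)..t, u s) * φ' t := by
              apply setIntegral_congr_fun measurableSet_Ioc
              intro t ht
              exact inner2 t ht

lemma uniq (H : ℝ → ℂ) (hH : Continuous H)
    (h0 : ∀ k : ℕ, 1 ≤ k → ∫ x in (0:ℝ)..π, H x * (Real.cos (k * x) : ℝ) = 0) :
    ∀ x ∈ Set.Icc (0:ℝ) π, H x = (∫ x in (0:ℝ)..π, H x) / (π : ℂ) := by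
  have hπ := Real.pi_pos
  have hπC : (π : ℂ) ≠ 0 := Complex.ofReal_ne_zero.mpr Real.pi_ne_zero
  set c : ℂ := (∫ x in (0:ℝ)..π, H x) / (π : ℂ) with hc
  set K : ℝ → ℂ := fun x => H x - c with hK
  have hKc : Continuous K := hH.sub continuous_const
  have hci : ∀ (G : ℝ → ℂ), Continuous G → IntervalIntegrable G volume 0 π :=
    fun G hG => hG.intervalIntegrable 0 π
  have hcontnk : ∀ (n : ℕ) (k : ℤ),
      Continuous (fun x : ℝ => K x * (Real.cos x : ℂ) ^ n * (Real.cos (k * x) : ℝ)) := by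
    intro n k
    exact (hKc.mul ((Complex.continuous_ofReal.comp Real.continuous_cos).pow n)).mul
      (Complex.continuous_ofReal.comp (Real.continuous_cos.comp (continuous_const.mul continuous_id)))
  have hcos0 : ∀ k : ℤ, k ≠ 0 → ∫ x in (0:ℝ)..π, Real.cos (k * x) = 0 := by
    intro k hk
    have hk' : (k : ℝ) ≠ 0 := Int.cast_ne_zero.mpr hk
    rw [intervalIntegral.integral_comp_mul_left (fun y => Real.cos y) hk']
    simp [integral_cos, Real.sin_int_mul_pi]
  have hKint : ∀ k : ℤ, ∫ x in (0:ℝ)..π, K x * (Real.cos (k * x) : ℝ) = 0 := by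
    intro k
    have hsplit : ∫ x in (0:ℝ)..π, K x * (Real.cos (k * x) : ℝ)
        = (∫ x in (0:ℝ)..π, H x * (Real.cos (k * x) : ℝ))
          - c * (∫ x in (0:ℝ)..π, (Real.cos (k * x) : ℝ) : ℂ) := by
      rw [← intervalIntegral.integral_const_mul, ← intervalIntegral.integral_sub]
      · apply intervalIntegral.integral_congr
        intro x _
        show K x * _ = _
        rw [hK]; ring
      · exact hci _ (by continuity)
      · exact hci _ (by continuity)
    by_cases hk : k = 0
    · subst hk
      simp only [Int.cast_zero, zero_mul, Real.cos_zero, Complex.ofReal_one, mul_one] at hsplit ⊢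
      have hone : ∫ (_x : ℝ) in (0:ℝ)..π, (1:ℂ) = (π : ℂ) := by
        rw [intervalIntegral.integral_const]
        simp
      rw [hsplit, hone, hc]
      field_simp
      ring
    · have h1 : ∫ x in (0:ℝ)..π, H x * (Real.cos (k * x) : ℝ) = 0 := by
        have hnab : 1 ≤ k.natAbs := by omega
        have hthis := h0 k.natAbs hnab
        have hcc : ∀ x : ℝ, Real.cos ((k.natAbs : ℝ) * x) = Real.cos ((k : ℝ) * x) := by
          intro x
          rw [Nat.cast_natAbs]
          rcases abs_choice k with h | h
          · rw [h]
          · rw [h]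
            push_cast
            rw [neg_mul, Real.cos_neg]
        rw [← hthis]
        apply intervalIntegral.integral_congr
        intro x _
        show H x * _ = H x * _
        rw [hcc x]
      have h2 : (∫ x in (0:ℝ)..π, (Real.cos (k * x) : ℝ) : ℂ) = 0 := by
        rw [intervalIntegral.integral_ofReal, hcos0 k hk, Complex.ofReal_zero]
      rw [hsplit, h1, h2, mul_zero, sub_zero]
  have E : ∀ n : ℕ, ∀ k : ℤ, ∫ x in (0:ℝ)..π,
      K x * (Real.cos x : ℂ) ^ n * (Real.cos (k * x) : ℝ) = 0 := by
    intro n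
    induction n with
    | zero => intro k; simpa using hKint k
    | succ n ih =>
      intro k
      have key : ∀ x : ℝ, K x * (Real.cos x : ℂ) ^ (n+1) * (Real.cos (k * x) : ℝ)
          = (K x * (Real.cos x : ℂ) ^ n * (Real.cos ((k+1 : ℤ) * x) : ℝ)
             + K x * (Real.cos x : ℂ) ^ n * (Real.cos ((k-1 : ℤ) * x) : ℝ)) / 2 := by
        intro x
        have trig : Real.cos (((k+1 : ℤ) : ℝ) * x) + Real.cos (((k-1 : ℤ) : ℝ) * x)
            = 2 * Real.cos ((k : ℝ) * x) * Real.cos x := by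
          have e1 : ((k+1 : ℤ) : ℝ) * x = (k : ℝ) * x + x := by push_cast; ring
          have e2 : ((k-1 : ℤ) : ℝ) * x = (k : ℝ) * x - x := by push_cast; ring
          rw [e1, e2, Real.cos_add, Real.cos_sub]; ring
        have trigC : ((Real.cos (((k+1 : ℤ) : ℝ) * x) : ℂ)) + ((Real.cos (((k-1 : ℤ) : ℝ) * x) : ℂ))
            = 2 * (Real.cos ((k : ℝ) * x) : ℂ) * (Real.cos x : ℂ) := by
          rw [← Complex.ofReal_add, trig]; push_cast; ring
        linear_combination (-(K x * (Real.cos x : ℂ) ^ n) / 2) * trigC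
      rw [intervalIntegral.integral_congr (fun x _ => key x)]
      rw [intervalIntegral.integral_div, intervalIntegral.integral_add
        (hci _ (hcontnk n (k+1))) (hci _ (hcontnk n (k-1))), ih (k+1), ih (k-1)]
      norm_num
  -- Stone–Weierstrass part
  have hle : (0:ℝ) ≤ π := hπ.le
  set X := Set.Icc (0:ℝ) π
  set pr : ℝ → X := fun x => Set.projIcc 0 π hle x with hpr
  have hprc : Continuous pr := continuous_projIcc
  set cosm : C(X, ℝ) := ⟨fun p => Real.cos (p : ℝ), Real.continuous_cos.comp continuous_subtype_val⟩
    with hcosm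
  set Φ : C(X, ℝ) → ℂ := fun ψ => ∫ x in (0:ℝ)..π, K x * (ψ (pr x) : ℝ) with hΦ
  have hcontψ : ∀ ψ : C(X, ℝ), Continuous (fun x : ℝ => K x * (ψ (pr x) : ℝ)) := by
    intro ψ
    exact hKc.mul (Complex.continuous_ofReal.comp (ψ.continuous.comp hprc))
  -- Φ is Lipschitz hence continuous
  set L : ℝ := ∫ x in (0:ℝ)..π, ‖K x‖ with hL
  have hΦcont : Continuous Φ := by
    apply (LipschitzWith.of_dist_le_mul (K := L.toNNReal) (f := Φ) ?_).continuous
    intro ψ ψ'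
    have hsub : Φ ψ - Φ ψ' = ∫ x in (0:ℝ)..π, K x * ((ψ (pr x) : ℝ) - (ψ' (pr x) : ℝ)) := by
      rw [hΦ]
      simp only []
      rw [← intervalIntegral.integral_sub (hci _ (hcontψ ψ)) (hci _ (hcontψ ψ'))]
      apply intervalIntegral.integral_congr
      intro x _; ring
    rw [dist_eq_norm, hsub]
    calc ‖∫ x in (0:ℝ)..π, K x * ((ψ (pr x) : ℝ) - (ψ' (pr x) : ℝ))‖
        ≤ ∫ x in (0:ℝ)..π, ‖K x * ((ψ (pr x) : ℝ) - (ψ' (pr x) : ℝ))‖ :=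
          intervalIntegral.norm_integral_le_integral_norm hle
      _ ≤ ∫ x in (0:ℝ)..π, ‖K x‖ * dist ψ ψ' := by
          apply intervalIntegral.integral_mono_on hle
          · exact ((hKc.mul ((Complex.continuous_ofReal.comp (ψ.continuous.comp hprc)).sub
              (Complex.continuous_ofReal.comp (ψ'.continuous.comp hprc)))).norm).intervalIntegrable 0 π
          · exact ((hKc.norm).mul continuous_const).intervalIntegrable 0 π
          · intro x _
            rw [norm_mul]
            apply mul_le_mul_of_nonneg_left _ (norm_nonneg _)
            rw [← Complex.ofReal_sub, Complex.norm_real]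
            calc |ψ (pr x) - ψ' (pr x)| = dist (ψ (pr x)) (ψ' (pr x)) := (Real.dist_eq _ _).symm
              _ ≤ dist ψ ψ' := ContinuousMap.dist_apply_le_dist (pr x)
      _ = L.toNNReal * dist ψ ψ' := by
          rw [intervalIntegral.integral_mul_const, ← hL]
          congr 1
          rw [Real.coe_toNNReal]
          exact intervalIntegral.integral_nonneg hle (fun x _ => norm_nonneg _)
  -- Φ vanishes on the subalgebra generated by cosm
  have hΦn : ∀ n : ℕ, Φ (cosm ^ n) = 0 := by
    intro n
    have := E n 0
    simp only [Int.cast_zero, zero_mul, Real.cos_zero, Complex.ofReal_one, mul_one] at this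
    rw [← this, hΦ]
    apply intervalIntegral.integral_congr
    intro x hx
    have hxI : x ∈ Set.Icc (0:ℝ) π := by
      rwa [Set.uIcc_of_le hle] at hx
    have : pr x = ⟨x, hxI⟩ := Set.projIcc_of_mem hle hxI
    simp [this, hcosm]
  have hΦadd : ∀ ψ ψ' : C(X, ℝ), Φ (ψ + ψ') = Φ ψ + Φ ψ' := by
    intro ψ ψ'
    rw [hΦ]
    simp only []
    rw [← intervalIntegral.integral_add (hci _ (hcontψ ψ)) (hci _ (hcontψ ψ'))]
    apply intervalIntegral.integral_congr
    intro x _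
    simp [mul_add]
  have hΦsmul : ∀ (a : ℝ) (ψ : C(X, ℝ)), Φ (a • ψ) = a * Φ ψ := by
    intro a ψ
    rw [hΦ]
    simp only []
    rw [← intervalIntegral.integral_const_mul]
    apply intervalIntegral.integral_congr
    intro x _
    simp [Complex.ofReal_mul]
    ring
  have hA : ∀ ψ ∈ Algebra.adjoin ℝ ({cosm} : Set C(X, ℝ)), Φ ψ = 0 := by
    intro ψ hψ
    rw [Algebra.adjoin_singleton_eq_range_aeval] at hψ
    obtain ⟨p, rfl⟩ := hψ
    induction p using Polynomial.induction_on' with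
    | add p q hp hq =>
      rw [map_add, hΦadd, hp, hq, add_zero]
    | monomial n a =>
      show Φ ((Polynomial.aeval cosm) (Polynomial.monomial n a)) = 0
      have heq : (Polynomial.aeval cosm) (Polynomial.monomial n a) = a • cosm ^ n := by
        rw [Polynomial.aeval_monomial, Algebra.smul_def]
      rw [heq, hΦsmul, hΦn, mul_zero]
  -- density
  have hdense : (Algebra.adjoin ℝ ({cosm} : Set C(X, ℝ))).topologicalClosure = ⊤ := by
    apply ContinuousMap.subalgebra_topologicalClosure_eq_top_of_separatesPoints
    intro x y hxy
    refine ⟨_, ⟨cosm, Algebra.subset_adjoin (Set.mem_singleton _), rfl⟩, ?_⟩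
    simp only [hcosm, ContinuousMap.coe_mk]
    intro h
    exact hxy (Subtype.ext (Real.injOn_cos x.2 y.2 h))
  have hΦ0 : ∀ ψ : C(X, ℝ), Φ ψ = 0 := by
    intro ψ
    have hψ : ψ ∈ closure ((Algebra.adjoin ℝ ({cosm} : Set C(X, ℝ)) : Subalgebra ℝ C(X, ℝ)) :
        Set C(X, ℝ)) := by
      have : ψ ∈ (Algebra.adjoin ℝ ({cosm} : Set C(X, ℝ))).topologicalClosure := by
        rw [hdense]; trivial
      exact this
    exact closure_minimal hA (isClosed_eq hΦcont continuous_const) hψ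
  -- apply to real and imaginary parts of conj K
  set ψ1 : C(X, ℝ) := ⟨fun p => (K (p : ℝ)).re, Complex.continuous_re.comp
    (hKc.comp continuous_subtype_val)⟩ with hψ1
  set ψ2 : C(X, ℝ) := ⟨fun p => (K (p : ℝ)).im, Complex.continuous_im.comp
    (hKc.comp continuous_subtype_val)⟩ with hψ2
  have hnormsq : (∫ x in (0:ℝ)..π, ((Complex.normSq (K x) : ℝ) : ℂ)) = 0 := by
    have h1 := hΦ0 ψ1
    have h2 := hΦ0 ψ2
    have key : (∫ x in (0:ℝ)..π, ((Complex.normSq (K x) : ℝ) : ℂ))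
        = Φ ψ1 - Complex.I * Φ ψ2 := by
      rw [hΦ]
      simp only []
      rw [← intervalIntegral.integral_const_mul, ← intervalIntegral.integral_sub
        (hci _ (hcontψ ψ1)) (hci (fun x => Complex.I * (K x * (ψ2 (pr x) : ℝ))) (continuous_const.mul (hcontψ ψ2)))]
      apply intervalIntegral.integral_congr
      intro x hx
      have hxI : x ∈ Set.Icc (0:ℝ) π := by rwa [Set.uIcc_of_le hle] at hx
      have hprx : pr x = ⟨x, hxI⟩ := Set.projIcc_of_mem hle hxI
      simp only [hψ1, hψ2, hprx, ContinuousMap.coe_mk]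
      rw [← Complex.mul_conj (K x)]
      have hconj : (starRingEnd ℂ) (K x) = ((K x).re : ℂ) - ((K x).im : ℂ) * Complex.I := by
        apply Complex.ext <;> simp
      rw [hconj]
      ring
    rw [key, h1, h2, mul_zero, sub_zero]
  have hreal : ∫ x in (0:ℝ)..π, Complex.normSq (K x) = 0 := by
    rw [intervalIntegral.integral_ofReal] at hnormsq
    exact_mod_cast hnormsq
  -- from zero integral of nonneg continuous function: K = 0 on Icc
  have hKcont2 : Continuous fun x => Complex.normSq (K x) := Complex.continuous_normSq.comp hKc
  have haeq : (fun x => Complex.normSq (K x)) =ᵐ[volume.restrict (Set.Ioc 0 π)] 0 := by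
    rw [intervalIntegral.integral_of_le hle] at hreal
    exact (integral_eq_zero_iff_of_nonneg (fun x => Complex.normSq_nonneg _)
      (hKcont2.integrableOn_Ioc)).mp hreal
  have hZ : ∀ x ∈ Set.Icc (0:ℝ) π, Complex.normSq (K x) = 0 := by
    have hIoo : ∀ x ∈ Set.Ioo (0:ℝ) π, Complex.normSq (K x) = 0 := by
      intro x0 hx0
      by_contra hne
      have hUopen : IsOpen ({x | Complex.normSq (K x) ≠ 0} ∩ Set.Ioo 0 π) :=
        ((isOpen_ne.preimage hKcont2)).inter isOpen_Ioo
      obtain ⟨ε, hε, hball⟩ := Metric.isOpen_iff.mp hUopen x0 ⟨hne, hx0⟩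
      have haeq' : ∀ᵐ x ∂(volume.restrict (Set.Ioc 0 π)), Complex.normSq (K x) = 0 := by
        filter_upwards [haeq] with x hx
        simpa using hx
      have hnull : volume ({x | Complex.normSq (K x) ≠ 0} ∩ Set.Ioc 0 π) = 0 := by
        have h' := ae_iff.mp haeq'
        have hmeas : MeasurableSet {a : ℝ | ¬ Complex.normSq (K a) = 0} := by
          have heq : {a : ℝ | ¬ Complex.normSq (K a) = 0}
              = {a : ℝ | Complex.normSq (K a) = 0}ᶜ := by
            ext a; simp
          rw [heq]
          exact (isClosed_eq hKcont2 continuous_const).measurableSet.compl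
        rwa [Measure.restrict_apply hmeas] at h'
      have hsub : Metric.ball x0 ε ⊆ {x | Complex.normSq (K x) ≠ 0} ∩ Set.Ioc 0 π := by
        intro y hy
        have := hball hy
        exact ⟨this.1, Set.Ioo_subset_Ioc_self this.2⟩
      have : volume (Metric.ball x0 ε) = 0 := measure_mono_null hsub hnull
      exact absurd this (Metric.measure_ball_pos volume x0 hε).ne'
    have hclosed : IsClosed {x | Complex.normSq (K x) = 0} :=
      isClosed_eq hKcont2 continuous_const
    intro x hx
    have : Set.Icc (0:ℝ) π ⊆ closure (Set.Ioo (0:ℝ) π) := by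
      rw [closure_Ioo hπ.ne]
    exact (closure_minimal hIoo hclosed) (this hx)
  intro x hx
  have h1 := Complex.normSq_eq_zero.mp (hZ x hx)
  rw [hK] at h1
  simp only [] at h1
  exact sub_eq_zero.mp h1

lemma hasDerivAt_cosC (k : ℝ) (x : ℝ) :
    HasDerivAt (fun y : ℝ => ((Real.cos (k * y) : ℝ) : ℂ))
      ((-(k * Real.sin (k * x)) : ℝ) : ℂ) x := by
  have h1 : HasDerivAt (fun y : ℝ => k * y) k x := by
    simpa using (hasDerivAt_id x).const_mul k
  have h2 := (Real.hasDerivAt_cos (k * x)).comp x h1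
  have h3 : -Real.sin (k * x) * k = -(k * Real.sin (k * x)) := by ring
  rw [h3] at h2
  exact h2.ofReal_comp

lemma hasDerivAt_sinC (k : ℝ) (x : ℝ) :
    HasDerivAt (fun y : ℝ => ((Real.sin (k * y) : ℝ) : ℂ))
      ((k * Real.cos (k * x) : ℝ) : ℂ) x := by
  have h1 : HasDerivAt (fun y : ℝ => k * y) k x := by
    simpa using (hasDerivAt_id x).const_mul k
  have h2 := (Real.hasDerivAt_sin (k * x)).comp x h1
  have h3 : Real.cos (k * x) * k = k * Real.cos (k * x) := by ring
  rw [h3] at h2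
  exact h2.ofReal_comp

lemma intOn_mul_cont (u : ℝ → ℂ) (hu : IntegrableOn u (Set.Ioc 0 π)) (v : ℝ → ℝ)
    (hv : Continuous v) (hb : ∀ x, |v x| ≤ 1) :
    IntegrableOn (fun x => u x * ((v x : ℝ) : ℂ)) (Set.Ioc 0 π) := by
  have h1 : Integrable (fun x => ((v x : ℝ) : ℂ) * u x) (volume.restrict (Set.Ioc 0 π)) :=
    Integrable.bdd_mul hu ((Complex.continuous_ofReal.comp hv).aestronglyMeasurable)
      (c := 1) (Filter.Eventually.of_forall fun x => by rw [Complex.norm_real]; exact hb x)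
  simpa [mul_comm, IntegrableOn] using h1

end Aux

set_option maxHeartbeats 1000000 in
/-- For `f, g ∈ L¹([0,π])` with sine coefficients `f_k` and cosine coefficients `g_k`,
the conditions (i) `f` has an absolutely continuous representative with
`f(0) = f(π) = 0` and `f' = g` a.e., and (ii) `g₀ = 0` and `g_k = k f_k` for all
`k ≥ 1`, are equivalent. -/
theorem stmt8 (f g : ℝ → ℂ)
    (hf : IntegrableOn f (Set.Ioc 0 π)) (hg : IntegrableOn g (Set.Ioc 0 π)) :
    ((∃ F : ℝ → ℂ,
        (∀ᵐ x ∂(volume.restrict (Set.Ioc 0 π)), f x = F x) ∧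
        (∀ x : ℝ, F x = F 0 + ∫ t in (0:ℝ)..x, g t) ∧
        F 0 = 0 ∧ F π = 0) ↔
      (((1 / (π : ℂ)) * ∫ x in (0:ℝ)..π, g x) = 0 ∧
        ∀ k : ℕ, 1 ≤ k →
          (1 / (π : ℂ)) * ∫ x in (0:ℝ)..π, g x * (Real.sqrt 2 * Real.cos (k * x) : ℝ)
            = (k : ℂ) *
              ((1 / (π : ℂ)) * ∫ x in (0:ℝ)..π, f x * (Real.sqrt 2 * Real.sin (k * x) : ℝ)))) := by
  have hπ := Real.pi_pos
  have hπC : (π : ℂ) ≠ 0 := Complex.ofReal_ne_zero.mpr Real.pi_ne_zero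
  have hs2 : ((Real.sqrt 2 : ℝ) : ℂ) ≠ 0 :=
    Complex.ofReal_ne_zero.mpr (by positivity)
  -- scaling out √2
  have scale : ∀ (u : ℝ → ℂ) (v : ℝ → ℝ),
      (∫ x in (0:ℝ)..π, u x * ((Real.sqrt 2 * v x : ℝ) : ℂ))
        = ((Real.sqrt 2 : ℝ) : ℂ) * ∫ x in (0:ℝ)..π, u x * ((v x : ℝ) : ℂ) := by
    intro u v
    rw [← intervalIntegral.integral_const_mul]
    apply intervalIntegral.integral_congr
    intro x _
    push_cast
    ring
  -- integration by parts against cos, for any primitive of g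
  have partsCos : ∀ (F' : ℝ → ℂ), (∀ x : ℝ, F' x = ∫ t in (0:ℝ)..x, g t) →
      (∫ x in (0:ℝ)..π, g x) = 0 → ∀ k : ℕ, 1 ≤ k →
      ∫ x in (0:ℝ)..π, g x * ((Real.cos (k * x) : ℝ) : ℂ)
        = (k : ℂ) * ∫ x in (0:ℝ)..π, F' x * ((Real.sin (k * x) : ℝ) : ℂ) := by
    intro F' hF' hg0 k _
    have hp := partsA g hg (fun y => ((Real.cos ((k:ℝ) * y) : ℝ) : ℂ))
      (fun y => ((-((k:ℝ) * Real.sin ((k:ℝ) * y)) : ℝ) : ℂ))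
      (fun x => hasDerivAt_cosC (k:ℝ) x)
      (Complex.continuous_ofReal.comp
        (continuous_const.mul (Real.continuous_sin.comp (continuous_const.mul continuous_id))).neg)
    rw [hg0, zero_mul, zero_sub] at hp
    rw [hp]
    have hpt : ∀ x : ℝ, (∫ t in (0:ℝ)..x, g t) * ((-((k:ℝ) * Real.sin ((k:ℝ) * x)) : ℝ) : ℂ)
        = -((k:ℂ) * (F' x * ((Real.sin ((k:ℝ) * x) : ℝ) : ℂ))) := by
      intro x
      rw [← hF' x]
      push_cast
      ring
    rw [intervalIntegral.integral_congr (fun x _ => hpt x), intervalIntegral.integral_neg,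
      neg_neg, intervalIntegral.integral_const_mul]
  constructor
  · -- forward direction
    rintro ⟨F, hae, hFeq, hF0, hFπ⟩
    have hgint : (∫ x in (0:ℝ)..π, g x) = 0 := by
      have h1 := hFeq π
      rw [hFπ, hF0, zero_add] at h1
      exact h1.symm
    refine ⟨by rw [hgint, mul_zero], ?_⟩
    intro k hk
    have hF' : ∀ x : ℝ, F x = ∫ t in (0:ℝ)..x, g t := by
      intro x
      rw [hFeq x, hF0, zero_add]
    have key := partsCos F hF' hgint k hk
    have hFf : (∫ x in (0:ℝ)..π, F x * ((Real.sin ((k:ℝ) * x) : ℝ) : ℂ))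
        = ∫ x in (0:ℝ)..π, f x * ((Real.sin ((k:ℝ) * x) : ℝ) : ℂ) := by
      rw [intervalIntegral.integral_of_le hπ.le, intervalIntegral.integral_of_le hπ.le]
      apply MeasureTheory.integral_congr_ae
      filter_upwards [hae] with x hx
      rw [hx]
    rw [hFf] at key
    rw [scale g (fun x => Real.cos ((k:ℝ) * x)), scale f (fun x => Real.sin ((k:ℝ) * x)), key]
    ring
  · -- backward direction
    rintro ⟨hg0, hcoef⟩
    have hgint : (∫ x in (0:ℝ)..π, g x) = 0 :=
      (mul_eq_zero.mp hg0).resolve_left (one_div_ne_zero hπC)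
    set F : ℝ → ℂ := fun x => ∫ t in (0:ℝ)..x, g t with hFdef
    have hF0 : F 0 = 0 := intervalIntegral.integral_same
    have hFπ : F π = 0 := hgint
    have hF' : ∀ x : ℝ, F x = ∫ t in (0:ℝ)..x, g t := fun x => rfl
    -- continuity of F on [0, π]
    have hgt : Integrable (Set.indicator (Set.Ioc 0 π) g) volume :=
      (integrable_indicator_iff measurableSet_Ioc).mpr hg
    have hprimg : Continuous (fun x => ∫ t in (0:ℝ)..x, Set.indicator (Set.Ioc 0 π) g t) :=
      hgt.continuous_primitive 0
    have heqg : ∀ x ∈ Set.Icc (0:ℝ) π,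
        (∫ t in (0:ℝ)..x, Set.indicator (Set.Ioc 0 π) g t) = F x := by
      intro x hx
      rw [hFdef]
      simp only []
      rw [intervalIntegral.integral_of_le hx.1, intervalIntegral.integral_of_le hx.1]
      apply setIntegral_congr_fun measurableSet_Ioc
      intro t ht
      have htm : t ∈ Set.Ioc 0 π := ⟨ht.1, le_trans ht.2 hx.2⟩
      simp [Set.indicator_of_mem htm]
    have hFcont : ContinuousOn F (Set.Icc 0 π) :=
      ContinuousOn.congr hprimg.continuousOn (fun x hx => (heqg x hx).symm)
    have hFint : IntegrableOn F (Set.Ioc 0 π) :=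
      (hFcont.integrableOn_Icc).mono_set Set.Ioc_subset_Icc_self
    set d : ℝ → ℂ := fun x => f x - F x with hddef
    have hdint : IntegrableOn d (Set.Ioc 0 π) := hf.sub hFint
    have hdt : Integrable (Set.indicator (Set.Ioc 0 π) d) volume :=
      (integrable_indicator_iff measurableSet_Ioc).mpr hdint
    set H : ℝ → ℂ := fun x => ∫ t in (0:ℝ)..x, Set.indicator (Set.Ioc 0 π) d t with hHdef
    have hHcont : Continuous H := hdt.continuous_primitive 0
    have hUH : ∀ x ∈ Set.Icc (0:ℝ) π, (∫ t in (0:ℝ)..x, d t) = H x := by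
      intro x hx
      rw [hHdef]
      simp only []
      rw [intervalIntegral.integral_of_le hx.1, intervalIntegral.integral_of_le hx.1]
      apply setIntegral_congr_fun measurableSet_Ioc
      intro t ht
      have htm : t ∈ Set.Ioc 0 π := ⟨ht.1, le_trans ht.2 hx.2⟩
      simp [Set.indicator_of_mem htm]
    -- the sine coefficients of d vanish
    have hsin0 : ∀ k : ℕ, 1 ≤ k →
        (∫ x in (0:ℝ)..π, d x * ((Real.sin ((k:ℝ) * x) : ℝ) : ℂ)) = 0 := by
      intro k hk
      have hkC : (k : ℂ) ≠ 0 := Nat.cast_ne_zero.mpr (by omega)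
      have hAB : (∫ x in (0:ℝ)..π, g x * ((Real.cos ((k:ℝ) * x) : ℝ) : ℂ))
          = (k:ℂ) * ∫ x in (0:ℝ)..π, f x * ((Real.sin ((k:ℝ) * x) : ℝ) : ℂ) := by
        have h := hcoef k hk
        rw [scale g (fun x => Real.cos ((k:ℝ) * x)), scale f (fun x => Real.sin ((k:ℝ) * x))] at h
        have h2 : ((Real.sqrt 2 : ℝ) : ℂ) / (π : ℂ)
              * (∫ x in (0:ℝ)..π, g x * ((Real.cos ((k:ℝ) * x) : ℝ) : ℂ))
            = ((Real.sqrt 2 : ℝ) : ℂ) / (π : ℂ)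
              * ((k:ℂ) * ∫ x in (0:ℝ)..π, f x * ((Real.sin ((k:ℝ) * x) : ℝ) : ℂ)) := by
          linear_combination h
        exact mul_left_cancel₀ (div_ne_zero hs2 hπC) h2
      have hPC := partsCos F hF' hgint k hk
      rw [hAB] at hPC
      have hcancel : (∫ x in (0:ℝ)..π, f x * ((Real.sin ((k:ℝ) * x) : ℝ) : ℂ))
          = ∫ x in (0:ℝ)..π, F x * ((Real.sin ((k:ℝ) * x) : ℝ) : ℂ) :=
        mul_left_cancel₀ hkC hPC
      have hsplit : (∫ x in (0:ℝ)..π, d x * ((Real.sin ((k:ℝ) * x) : ℝ) : ℂ))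
          = (∫ x in (0:ℝ)..π, f x * ((Real.sin ((k:ℝ) * x) : ℝ) : ℂ))
            - ∫ x in (0:ℝ)..π, F x * ((Real.sin ((k:ℝ) * x) : ℝ) : ℂ) := by
        rw [← intervalIntegral.integral_sub]
        · apply intervalIntegral.integral_congr
          intro x _
          rw [hddef]
          ring
        · exact (intervalIntegrable_iff_integrableOn_Ioc_of_le hπ.le).mpr
            (intOn_mul_cont f hf _ (Real.continuous_sin.comp (continuous_const.mul continuous_id))
              (fun x => Real.abs_sin_le_one _))
        · exact (intervalIntegrable_iff_integrableOn_Ioc_of_le hπ.le).mpr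
            (intOn_mul_cont F hFint _ (Real.continuous_sin.comp (continuous_const.mul continuous_id))
              (fun x => Real.abs_sin_le_one _))
      rw [hsplit, hcancel, sub_self]
    -- hence the cosine coefficients of H vanish
    have hHcos : ∀ k : ℕ, 1 ≤ k →
        (∫ x in (0:ℝ)..π, H x * ((Real.cos ((k:ℝ) * x) : ℝ) : ℂ)) = 0 := by
      intro k hk
      have hkC : (k : ℂ) ≠ 0 := Nat.cast_ne_zero.mpr (by omega)
      have hp := partsA d hdint (fun y => ((Real.sin ((k:ℝ) * y) : ℝ) : ℂ))
        (fun y => (((k:ℝ) * Real.cos ((k:ℝ) * y) : ℝ) : ℂ))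
        (fun x => hasDerivAt_sinC (k:ℝ) x)
        (Complex.continuous_ofReal.comp
          (continuous_const.mul (Real.continuous_cos.comp (continuous_const.mul continuous_id))))
      simp only [Real.sin_nat_mul_pi, Complex.ofReal_zero, mul_zero, zero_sub] at hp
      rw [hsin0 k hk, eq_comm, neg_eq_zero] at hp
      have hp2 : (∫ x in (0:ℝ)..π, H x * (((k:ℝ) * Real.cos ((k:ℝ) * x) : ℝ) : ℂ)) = 0 := by
        rw [← hp]
        apply intervalIntegral.integral_congr
        intro x hx
        rw [Set.uIcc_of_le hπ.le] at hx
        show H x * (((k:ℝ) * Real.cos ((k:ℝ) * x) : ℝ) : ℂ)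
            = (∫ t in (0:ℝ)..x, d t) * (((k:ℝ) * Real.cos ((k:ℝ) * x) : ℝ) : ℂ)
        rw [hUH x hx]
      have hp3 : (k:ℂ) * (∫ x in (0:ℝ)..π, H x * ((Real.cos ((k:ℝ) * x) : ℝ) : ℂ)) = 0 := by
        rw [← hp2, ← intervalIntegral.integral_const_mul]
        apply intervalIntegral.integral_congr
        intro x _
        push_cast
        ring
      exact (mul_eq_zero.mp hp3).resolve_left hkC
    -- H is constant 0 on [0, π]
    have huniq := uniq H hHcont hHcos
    have hH00 : H 0 = 0 := intervalIntegral.integral_same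
    have hc0 : (∫ x in (0:ℝ)..π, H x) / (π : ℂ) = 0 := by
      rw [← huniq 0 ⟨le_refl 0, hπ.le⟩, hH00]
    have hH0 : ∀ x ∈ Set.Icc (0:ℝ) π, H x = 0 := by
      intro x hx
      rw [huniq x hx, hc0]
    -- H vanishes everywhere
    have hHall : ∀ x : ℝ, H x = 0 := by
      intro x
      rcases le_or_gt x 0 with hx | hx
      · rw [hHdef]
        simp only []
        rw [intervalIntegral.integral_symm, intervalIntegral.integral_of_le hx, neg_eq_zero]
        rw [show (0:ℂ) = ∫ t in Set.Ioc x 0, (0:ℂ) by simp]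
        apply setIntegral_congr_fun measurableSet_Ioc
        intro t ht
        exact Set.indicator_of_notMem (fun hmem => absurd hmem.1 (not_lt.mpr ht.2)) d
      rcases le_or_gt x π with hx2 | hx2
      · exact hH0 x ⟨hx.le, hx2⟩
      · have hsplit : H π + (∫ t in π..x, Set.indicator (Set.Ioc 0 π) d t) = H x :=
          intervalIntegral.integral_add_adjacent_intervals
            (hdt.intervalIntegrable) (hdt.intervalIntegrable)
        have hz : (∫ t in π..x, Set.indicator (Set.Ioc 0 π) d t) = 0 := by
          rw [intervalIntegral.integral_of_le hx2.le]
          rw [show (0:ℂ) = ∫ t in Set.Ioc π x, (0:ℂ) by simp]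
          apply setIntegral_congr_fun measurableSet_Ioc
          intro t ht
          exact Set.indicator_of_notMem (fun hmem => absurd hmem.2 (not_le.mpr ht.1)) d
        rw [← hsplit, hz, hH0 π ⟨hπ.le, le_refl π⟩, add_zero]
    -- distributional argument: indicator d = 0 a.e.
    have hae0 : ∀ᵐ x ∂(volume : Measure ℝ), Set.indicator (Set.Ioc 0 π) d x = 0 := by
      apply ae_eq_zero_of_integral_contDiff_smul_eq_zero (hdt.locallyIntegrable)
      intro ψ hψ _
      have hred : (∫ x, ψ x • Set.indicator (Set.Ioc 0 π) d x)
          = ∫ x in Set.Ioc 0 π, ψ x • Set.indicator (Set.Ioc 0 π) d x :=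
        (setIntegral_eq_integral_of_forall_compl_eq_zero (fun x hx => by
          rw [Set.indicator_of_notMem hx, smul_zero])).symm
      have hder : ∀ x : ℝ, HasDerivAt (fun y => ((ψ y : ℝ) : ℂ)) ((deriv ψ x : ℝ) : ℂ) x :=
        fun x => ((hψ.differentiable (by simp)).differentiableAt.hasDerivAt).ofReal_comp
      have hderc : Continuous fun x : ℝ => ((deriv ψ x : ℝ) : ℂ) :=
        Complex.continuous_ofReal.comp (hψ.continuous_deriv (by exact_mod_cast le_top))
      have hp := partsA (Set.indicator (Set.Ioc 0 π) d) (hdt.integrableOn)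
        (fun y => ((ψ y : ℝ) : ℂ)) (fun y => ((deriv ψ y : ℝ) : ℂ)) hder hderc
      have hHπ : (∫ x in (0:ℝ)..π, Set.indicator (Set.Ioc 0 π) d x) = 0 := hHall π
      rw [hHπ, zero_mul, zero_sub] at hp
      have hz2 : (∫ x in (0:ℝ)..π, (∫ t in (0:ℝ)..x, Set.indicator (Set.Ioc 0 π) d t)
          * ((deriv ψ x : ℝ) : ℂ)) = 0 := by
        rw [show (0:ℂ) = ∫ x in (0:ℝ)..π, (0:ℂ) by simp]
        apply intervalIntegral.integral_congr
        intro x _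
        show (∫ t in (0:ℝ)..x, Set.indicator (Set.Ioc 0 π) d t) * ((deriv ψ x : ℝ) : ℂ) = 0
        have hrfl : (∫ t in (0:ℝ)..x, Set.indicator (Set.Ioc 0 π) d t) = H x := rfl
        rw [hrfl, hHall x, zero_mul]
      rw [hz2, neg_zero] at hp
      rw [hred, ← intervalIntegral.integral_of_le hπ.le, ← hp]
      apply intervalIntegral.integral_congr
      intro x _
      show ψ x • Set.indicator (Set.Ioc 0 π) d x
          = Set.indicator (Set.Ioc 0 π) d x * ((ψ x : ℝ) : ℂ)
      rw [Complex.real_smul]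
      ring
    refine ⟨F, ?_, fun x => by rw [hF0, zero_add], hF0, hFπ⟩
    filter_upwards [ae_restrict_of_ae hae0, ae_restrict_mem measurableSet_Ioc] with x h1 h2
    have hd0 : d x = 0 := by
      rw [← Set.indicator_of_mem h2 d]
      exact h1
    rw [hddef] at hd0
    simp only [] at hd0
    exact sub_eq_zero.mp hd0
end

section
/- Let r = (r(s))_{s ∈ ℤ} ∈ ℓ²(ℤ) and b ≥ 1 a real number. Then ∑_{j,m ∈ ℤ} (j-m)²·|r(j-m)|² / ((b² + j²)(b² + m²)) ≤ 4·‖r‖²·(1+π)/b, where ‖r‖ is the ℓ² norm of r. -/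
open scoped BigOperators
open Real

set_option maxHeartbeats 1000000

lemma Ksum (b : ℝ) (hb : 1 ≤ b) :
    Summable (fun k : ℤ => 1/(b^2+(k:ℝ)^2)) ∧
    (∑' k : ℤ, 1/(b^2+(k:ℝ)^2)) ≤ (1+π)/b := by
  have hb0 : 0 < b := lt_of_lt_of_le one_pos hb
  set f : ℝ → ℝ := fun x => 1/(b^2+x^2) with hf
  -- summability over ℕ
  have hmaj : Summable (fun n : ℕ => 1/((n:ℝ)+1)^2) := by
    have := (summable_nat_add_iff (f := fun n : ℕ => 1/(n:ℝ)^2) 1).mpr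
      (summable_one_div_nat_pow.mpr one_lt_two)
    exact this.congr (by intro n; push_cast; ring_nf)
  have hsum1 : Summable (fun n : ℕ => f ((n:ℝ)+1)) := by
    refine Summable.of_nonneg_of_le (fun n => by positivity) (fun n => ?_) hmaj
    apply one_div_le_one_div_of_le (by positivity)
    have : (0:ℝ) ≤ (n:ℝ) := n.cast_nonneg
    nlinarith [sq_nonneg b]
  have hsumN : Summable (fun n : ℕ => f (n:ℝ)) := by
    rw [← summable_nat_add_iff 1]
    exact hsum1.congr (by intro n; push_cast; ring_nf)
  -- integral value
  have hint : ∀ N : ℕ, ∫ x in (0:ℝ)..N, f x = b⁻¹ * arctan (N/b) := by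
    intro N
    have h : ∀ x ∈ Set.uIcc (0:ℝ) (N:ℝ), HasDerivAt (fun y => b⁻¹ * arctan (y/b)) (f x) x := by
      intro x _
      have h1 : HasDerivAt (fun y : ℝ => y/b) (1/b) x :=
        (hasDerivAt_id x).div_const b |>.congr_deriv (by ring)
      have h3 := ((Real.hasDerivAt_arctan (x/b)).comp x h1).const_mul b⁻¹
      refine h3.congr_deriv ?_
      simp only [hf]; field_simp
    have hcont : ContinuousOn f (Set.uIcc 0 (N:ℝ)) := by
      apply ContinuousOn.div continuousOn_const (by fun_prop)
      intro x _; positivity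
    rw [intervalIntegral.integral_eq_sub_of_hasDerivAt h (hcont.intervalIntegrable)]
    simp
  -- tail sum bound
  have htail : (∑' n : ℕ, f ((n:ℝ)+1)) ≤ π/2 * b⁻¹ := by
    apply Real.tsum_le_of_sum_range_le (fun n => by positivity)
    intro N
    have hanti : AntitoneOn f (Set.Icc (0:ℝ) (0 + N)) := by
      intro x hx y hy hxy
      apply one_div_le_one_div_of_le (by positivity)
      nlinarith [hx.1, hy.1]
    have h1 := hanti.sum_le_integral
    simp only [zero_add] at h1
    calc ∑ i ∈ Finset.range N, f ((i:ℝ)+1)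
        = ∑ i ∈ Finset.range N, f (((i:ℕ)+1:ℕ):ℝ) := by
          apply Finset.sum_congr rfl; intro i _; push_cast; ring_nf
      _ ≤ ∫ x in (0:ℝ)..N, f x := h1
      _ = b⁻¹ * arctan (N/b) := hint N
      _ ≤ b⁻¹ * (π/2) := by
          apply mul_le_mul_of_nonneg_left ((Real.arctan_lt_pi_div_two _).le) (by positivity)
      _ = π/2 * b⁻¹ := by ring
  -- assemble over ℤ
  have hneg : Summable (fun n : ℕ => (fun k : ℤ => 1/(b^2+(k:ℝ)^2)) (-(n+1))) := by
    apply hsum1.congr; intro n; simp only [hf]; push_cast; ring_nf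
  have hnat : Summable (fun n : ℕ => (fun k : ℤ => 1/(b^2+(k:ℝ)^2)) (n:ℤ)) := by
    apply hsumN.congr; intro n; simp only [hf]; push_cast; ring_nf
  have hsumZ : Summable (fun k : ℤ => 1/(b^2+(k:ℝ)^2)) :=
    Summable.of_nat_of_neg_add_one hnat hneg
  refine ⟨hsumZ, ?_⟩
  rw [tsum_of_nat_of_neg_add_one hnat hneg]
  have e1 : (∑' n : ℕ, (fun k : ℤ => 1/(b^2+(k:ℝ)^2)) (n:ℤ)) = f 0 + ∑' n : ℕ, f ((n:ℝ)+1) := by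
    rw [Summable.tsum_eq_zero_add hnat]
    congr 1
    · norm_num [hf]
    · apply tsum_congr; intro n; simp only [hf]; push_cast; ring_nf
  have e2 : (∑' n : ℕ, (fun k : ℤ => 1/(b^2+(k:ℝ)^2)) (-(n+1))) = ∑' n : ℕ, f ((n:ℝ)+1) := by
    apply tsum_congr; intro n; simp only [hf]; push_cast; ring_nf
  rw [e1, e2]
  have hf0 : f 0 ≤ 1/b := by
    simp only [hf]
    rw [div_le_div_iff₀ (by positivity) hb0]
    nlinarith
  have : (1+π)/b = 1/b + 2*(π/2*b⁻¹) := by field_simp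
  rw [this]
  linarith [htail]


section Aux
variable (b : ℝ)

noncomputable def Kfun : ℤ → ℝ := fun k => 1/(b^2+(k:ℝ)^2)

def eqv1 : ℤ × ℤ ≃ ℤ × ℤ where
  toFun q := (q.1 + q.2, q.2)
  invFun p := (p.1 - p.2, p.2)
  left_inv q := by simp
  right_inv p := by simp

def eqv2 : ℤ × ℤ ≃ ℤ × ℤ where
  toFun q := (q.2, q.2 - q.1)
  invFun p := (p.1 - p.2, p.1)
  left_inv q := by simp
  right_inv p := by simp

end Aux

theorem stmt10' (r : ℤ → ℂ) (hr : Summable fun s : ℤ => ‖r s‖^2) (b : ℝ) (hb : 1 ≤ b)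
    (hK : Summable (Kfun b)) (hKb : (∑' k : ℤ, Kfun b k) ≤ (1+π)/b) :
    (∑' p : ℤ × ℤ,
        ((p.1 - p.2 : ℤ) : ℝ)^2 * ‖r (p.1 - p.2)‖^2
          / ((b^2 + ((p.1 : ℤ) : ℝ)^2) * (b^2 + ((p.2 : ℤ) : ℝ)^2)))
      ≤ 4 * (∑' s : ℤ, ‖r s‖^2) * (1 + π) / b := by
  have hb0 : 0 < b := lt_of_lt_of_le one_pos hb
  set A := ∑' s : ℤ, ‖r s‖^2 with hA
  have hA0 : 0 ≤ A := tsum_nonneg (fun s => by positivity)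
  set S := ∑' k : ℤ, Kfun b k with hS
  have hS0 : 0 ≤ S := tsum_nonneg (fun k => by unfold Kfun; positivity)
  -- the product function over ℤ × ℤ
  set F : ℤ × ℤ → ℝ := fun q => ‖r q.1‖^2 * Kfun b q.2 with hF
  have hFsum : Summable F := hr.mul_of_nonneg hK (fun s => by positivity)
    (fun k => by unfold Kfun; positivity)
  have hFtsum : (∑' q, F q) = A * S := by
    rw [hA, hS, tsum_mul_tsum_of_summable_norm
      (hr.congr (fun s => (Real.norm_of_nonneg (by positivity)).symm))
      (hK.congr (fun k => (Real.norm_of_nonneg (by unfold Kfun; positivity)).symm))]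
  -- majorants
  set G1 : ℤ × ℤ → ℝ := fun p => ‖r (p.1 - p.2)‖^2 * Kfun b p.2 with hG1
  set G2 : ℤ × ℤ → ℝ := fun p => ‖r (p.1 - p.2)‖^2 * Kfun b p.1 with hG2
  have hG1eq : ∀ q : ℤ × ℤ, G1 (eqv1 q) = F q := by
    intro q; simp [hG1, hF, eqv1]
  have hG2eq : ∀ q : ℤ × ℤ, G2 (eqv2 q) = F q := by
    intro q; simp [hG2, hF, eqv2]
  have hG1sum : Summable G1 := by
    rw [← (eqv1).summable_iff]
    exact hFsum.congr (fun q => (hG1eq q).symm)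
  have hG2sum : Summable G2 := by
    rw [← (eqv2).summable_iff]
    exact hFsum.congr (fun q => (hG2eq q).symm)
  have hG1tsum : (∑' p, G1 p) = A * S := by
    rw [← (eqv1).tsum_eq G1]; rw [← hFtsum]; exact tsum_congr hG1eq
  have hG2tsum : (∑' p, G2 p) = A * S := by
    rw [← (eqv2).tsum_eq G2]; rw [← hFtsum]; exact tsum_congr hG2eq
  -- termwise bound
  set T : ℤ × ℤ → ℝ := fun p =>
    ((p.1 - p.2 : ℤ) : ℝ)^2 * ‖r (p.1 - p.2)‖^2
      / ((b^2 + ((p.1 : ℤ) : ℝ)^2) * (b^2 + ((p.2 : ℤ) : ℝ)^2)) with hT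
  have hTle : ∀ p : ℤ × ℤ, T p ≤ 2 * G1 p + 2 * G2 p := by
    intro ⟨j, m⟩
    simp only [hT, hG1, hG2, Kfun]
    set X := b^2 + ((j:ℤ):ℝ)^2 with hX
    set Y := b^2 + ((m:ℤ):ℝ)^2 with hY
    have hX0 : 0 < X := by positivity
    have hY0 : 0 < Y := by positivity
    have hc : (0:ℝ) ≤ ‖r (j - m)‖^2 := by positivity
    have hd : ((j - m : ℤ):ℝ)^2 ≤ 2*X + 2*Y := by
      rw [hX, hY]; push_cast
      nlinarith [sq_nonneg ((j:ℝ) + (m:ℝ)), sq_nonneg b]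
    calc ((j - m : ℤ):ℝ)^2 * ‖r (j - m)‖^2 / (X * Y)
        ≤ (2*X + 2*Y) * ‖r (j - m)‖^2 / (X * Y) := by gcongr
      _ = 2 * (‖r (j - m)‖^2 * (1/Y)) + 2 * (‖r (j - m)‖^2 * (1/X)) := by
          field_simp
  have hT0 : ∀ p, 0 ≤ T p := by
    intro ⟨j, m⟩; simp only [hT]; positivity
  have hTsum : Summable T :=
    Summable.of_nonneg_of_le hT0 hTle (((hG1sum.mul_left 2)).add (hG2sum.mul_left 2))
  calc (∑' p, T p) ≤ ∑' p, (2 * G1 p + 2 * G2 p) :=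
        Summable.tsum_le_tsum hTle hTsum (((hG1sum.mul_left 2)).add (hG2sum.mul_left 2))
    _ = 2 * (A*S) + 2 * (A*S) := by
        rw [Summable.tsum_add (hG1sum.mul_left 2) (hG2sum.mul_left 2),
          tsum_mul_left, tsum_mul_left, hG1tsum, hG2tsum]
    _ = 4 * A * S := by ring
    _ ≤ 4 * A * ((1+π)/b) := by gcongr
    _ = 4 * A * (1+π) / b := by ring

/-- For `r ∈ ℓ²(ℤ)` and `b ≥ 1`,
`∑_{j,m ∈ ℤ} (j-m)²|r(j-m)|² / ((b²+j²)(b²+m²)) ≤ 4‖r‖²(1+π)/b`. -/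
theorem stmt10 (r : ℤ → ℂ) (hr : Summable fun s : ℤ => ‖r s‖^2) (b : ℝ) (hb : 1 ≤ b) :
    (∑' p : ℤ × ℤ,
        ((p.1 - p.2 : ℤ) : ℝ)^2 * ‖r (p.1 - p.2)‖^2
          / ((b^2 + ((p.1 : ℤ) : ℝ)^2) * (b^2 + ((p.2 : ℤ) : ℝ)^2)))
      ≤ 4 * (∑' s : ℤ, ‖r s‖^2) * (1 + π) / b := by
  obtain ⟨h1, h2⟩ := Ksum b hb
  exact stmt10' r hr b hb h1 h2
end

section
/- Let α > 0 and let φ̃⁺, φ̃⁻ be measurable π-periodic functions bounded by constants C₊ and C₋ respectively on [0,π]. For f ∈ L²(ℝ) set y(x) = v⁺(x)·e^{(α+iβ)x}·φ̃⁺(x) where v⁺(x) = ∫_x^∞ e^{-(α+iβ)t} φ̃⁻(t) f(t) dt. Then ∫_{-∞}^∞ |v⁺(x)|²·|e^{(α+iβ)x} φ̃⁺(x)|² dx ≤ (C₋² C₊²/α²)·‖f‖²_{L²(ℝ)}. -/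
set_option maxHeartbeats 1000000


open MeasureTheory Real Set Filter Topology

private lemma stmt13_norm_cexp (z : ℂ) (t : ℝ) :
    ‖Complex.exp (z * t)‖ = Real.exp (z.re * t) := by
  rw [Complex.norm_exp]
  congr 1
  simp [Complex.mul_re]

private lemma stmt13_int_exp_Ioi {b : ℝ} (hb : 0 < b) (c : ℝ) :
    ∫ t in Ioi c, Real.exp (-b * t) = Real.exp (-b * c) / b := by
  have hd : ∀ x ∈ Ici c, HasDerivAt (fun t => -Real.exp (-b * t) / b)
      (Real.exp (-b * x)) x := by
    intro x _
    have h1 : HasDerivAt (fun t : ℝ => -b * t) (-b) x := by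
      simpa using (hasDerivAt_id x).const_mul (-b)
    have h2 := (h1.exp.div_const b).fun_neg
    simpa [neg_div, mul_neg, neg_neg, mul_div_assoc, div_self hb.ne'] using h2
  have hcont : ContinuousWithinAt (fun t => -Real.exp (-b * t) / b) (Ici c) c :=
    (((Real.continuous_exp.comp (continuous_const.mul continuous_id)).neg).div_const
      b).continuousWithinAt
  have htend : Tendsto (fun t => -Real.exp (-b * t) / b) atTop (𝓝 0) := by
    have h0 : Tendsto (fun t : ℝ => b * t) atTop atTop :=
      Tendsto.const_mul_atTop hb tendsto_id
    have h1 : Tendsto (fun t : ℝ => Real.exp (-(b * t))) atTop (𝓝 0) :=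
      Real.tendsto_exp_neg_atTop_nhds_zero.comp h0
    have h2 : Tendsto (fun t : ℝ => Real.exp (-b * t)) atTop (𝓝 0) := by
      simpa [neg_mul] using h1
    simpa using (h2.neg).div_const b
  have key := integral_Ioi_of_hasDerivAt_of_tendsto hcont
    (fun x hx => hd x (Ioi_subset_Ici_self hx)) (exp_neg_integrableOn_Ioi c hb) htend
  rw [key]
  ring

private lemma stmt13_intOn_exp_Iio {b : ℝ} (hb : 0 < b) (c : ℝ) :
    IntegrableOn (fun x => Real.exp (b * x)) (Iio c) volume := by
  have h1 : Integrable ((Ioi (-c)).indicator fun x => Real.exp (-b * x)) volume :=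
    (integrable_indicator_iff measurableSet_Ioi).2 (exp_neg_integrableOn_Ioi (-c) hb)
  have h2 : Integrable (fun x => (Ioi (-c)).indicator (fun x => Real.exp (-b * x)) (-x))
      volume := h1.comp_neg
  have h3 : (fun x => (Ioi (-c)).indicator (fun x => Real.exp (-b * x)) (-x))
      = (Iio c).indicator fun x => Real.exp (b * x) := by
    funext x
    by_cases hx : x < c
    · rw [indicator_of_mem (by simp [hx] : -x ∈ Ioi (-c)), indicator_of_mem (mem_Iio.2 hx)]
      congr 1
      ring
    · rw [indicator_of_notMem (by simpa using hx), indicator_of_notMem (by simpa using hx)]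
  rw [← integrable_indicator_iff measurableSet_Iio, ← h3]
  exact h2

private lemma stmt13_int_exp_Iio {b : ℝ} (hb : 0 < b) (c : ℝ) :
    ∫ x in Iio c, Real.exp (b * x) = Real.exp (b * c) / b := by
  rw [← integral_Iic_eq_integral_Iio]
  have h1 : ∫ x in Iic c, Real.exp (b * x) = ∫ x in Iic c, Real.exp (-b * (-x)) := by
    congr 1
    funext x
    congr 1
    ring
  rw [h1, integral_comp_neg_Iic c (fun x => Real.exp (-b * x)), stmt13_int_exp_Ioi hb]
  congr 2
  ring

/-- `L²` bound: `∫_{-∞}^∞ |v⁺(x)|²·|e^{(α+iβ)x} φ̃⁺(x)|² dx ≤ (C₋²C₊²/α²)‖f‖²_{L²}`. -/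
theorem stmt13 (α β : ℝ) (hα : 0 < α) (φp φm : ℝ → ℂ)
    (hφp : Measurable φp) (hφm : Measurable φm)
    (hperp : Function.Periodic φp π) (hperm : Function.Periodic φm π)
    (Cp Cm : ℝ)
    (hCp : ∀ x ∈ Set.Icc (0:ℝ) π, ‖φp x‖ ≤ Cp)
    (hCm : ∀ x ∈ Set.Icc (0:ℝ) π, ‖φm x‖ ≤ Cm)
    (f : ℝ → ℂ) (hf : MemLp f 2 (volume : Measure ℝ)) :
    (∫ x : ℝ,
        ‖∫ t in Set.Ioi x, Complex.exp (-(α + β * Complex.I) * t) * φm t * f t‖^2 *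
          ‖Complex.exp ((α + β * Complex.I) * x) * φp x‖^2)
      ≤ (Cm^2 * Cp^2 / α^2) * ∫ t : ℝ, ‖f t‖^2 := by
  classical
  -- boundedness everywhere from periodicity
  have hCp' : ∀ x, ‖φp x‖ ≤ Cp := fun x => by
    obtain ⟨y, hy, hxy⟩ := hperp.exists_mem_Ico₀ Real.pi_pos x
    rw [hxy]; exact hCp y ⟨hy.1, hy.2.le⟩
  have hCm' : ∀ x, ‖φm x‖ ≤ Cm := fun x => by
    obtain ⟨y, hy, hxy⟩ := hperm.exists_mem_Ico₀ Real.pi_pos x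
    rw [hxy]; exact hCm y ⟨hy.1, hy.2.le⟩
  have hCp0 : 0 ≤ Cp := le_trans (norm_nonneg _) (hCp' 0)
  have hCm0 : 0 ≤ Cm := le_trans (norm_nonneg _) (hCm' 0)
  have hfm : AEStronglyMeasurable f volume := hf.aestronglyMeasurable
  -- ‖f‖² is integrable
  have hFint : Integrable (fun t => ‖f t‖^2) volume := by
    have h := hf.integrable_norm_rpow two_ne_zero ENNReal.ofNat_ne_top
    simpa [ENNReal.toReal_ofNat, Real.rpow_two] using h
  -- continuous exponentials
  have hexpc : ∀ b : ℝ, Continuous fun t : ℝ => Real.exp (b * t) := fun b =>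
    Real.continuous_exp.comp (continuous_const.mul continuous_id)
  -- integrability of the weighted square on right half-lines
  have hWint : ∀ x : ℝ, IntegrableOn (fun t => Real.exp (-α * t) * ‖f t‖ ^ 2) (Ioi x) volume := by
    intro x
    refine Integrable.mono' ((hFint.const_mul (Real.exp (-α * x))).integrableOn)
      (((hexpc (-α)).aestronglyMeasurable.restrict).mul hFint.aestronglyMeasurable.restrict) ?_
    rw [ae_restrict_iff' measurableSet_Ioi]
    refine Filter.Eventually.of_forall fun t ht => ?_
    have h1 : Real.exp (-α * t) ≤ Real.exp (-α * x) :=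
      Real.exp_le_exp.2 (by nlinarith [mem_Ioi.1 ht])
    rw [Real.norm_of_nonneg (by positivity)]
    exact mul_le_mul_of_nonneg_right h1 (by positivity)
  -- the key pointwise bound
  have key : ∀ x : ℝ,
      ‖∫ t in Set.Ioi x, Complex.exp (-(α + β * Complex.I) * t) * φm t * f t‖^2 *
        ‖Complex.exp ((α + β * Complex.I) * x) * φp x‖^2
      ≤ (Cm^2 * Cp^2 / α) *
          (Real.exp (α * x) * ∫ t in Ioi x, Real.exp (-α * t) * ‖f t‖ ^ 2) := by
    intro x
    set B := ∫ t in Ioi x, Real.exp (-α * t) * ‖f t‖ ^ 2 with hBdef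
    set A := Real.exp (-α * x) / α with hAdef
    have hBnn : 0 ≤ B := setIntegral_nonneg measurableSet_Ioi fun t _ => by positivity
    have hAnn : 0 ≤ A := by rw [hAdef]; positivity
    have hE : ‖Complex.exp ((α + β * Complex.I) * x) * φp x‖ ≤ Real.exp (α * x) * Cp := by
      rw [norm_mul, stmt13_norm_cexp]
      have hre : ((α:ℂ) + β * Complex.I).re = α := by simp
      rw [hre]
      exact mul_le_mul_of_nonneg_left (hCp' x) (Real.exp_nonneg _)
    have hnormm : ∀ t : ℝ, ‖Complex.exp (-((α:ℂ) + β * Complex.I) * t)‖ = Real.exp (-α * t) := by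
      intro t
      rw [stmt13_norm_cexp]
      have hre : (-((α:ℂ) + β * Complex.I)).re = -α := by simp
      rw [hre]
    have hInt1 : IntegrableOn (fun t => Real.exp (-α * t) * ‖f t‖) (Ioi x) volume := by
      refine Integrable.mono'
        (((exp_neg_integrableOn_Ioi x (show (0:ℝ) < 2*α by positivity)).add
          hFint.integrableOn).div_const 2)
        (((hexpc (-α)).aestronglyMeasurable.restrict).mul hfm.norm.restrict)
        (Filter.Eventually.of_forall fun t => ?_)
      have h2 : Real.exp (-α * t) ^ 2 = Real.exp (-(2*α) * t) := by
        rw [← Real.exp_nat_mul]; congr 1; push_cast; ring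
      rw [Real.norm_of_nonneg (by positivity)]
      simp only [Pi.add_apply]
      nlinarith [sq_nonneg (Real.exp (-α * t) - ‖f t‖)]
    have h1 : ‖∫ t in Set.Ioi x, Complex.exp (-(α + β * Complex.I) * t) * φm t * f t‖
        ≤ Cm * ∫ t in Ioi x, Real.exp (-α * t) * ‖f t‖ := by
      refine le_trans (norm_integral_le_integral_norm _) ?_
      rw [← integral_const_mul]
      refine integral_mono_of_nonneg (Filter.Eventually.of_forall fun t => norm_nonneg _)
        (hInt1.const_mul Cm) (Filter.Eventually.of_forall fun t => ?_)
      dsimp only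
      rw [norm_mul, norm_mul, hnormm t]
      nlinarith [mul_le_mul_of_nonneg_left
        (mul_le_mul_of_nonneg_right (hCm' t) (norm_nonneg (f t))) (Real.exp_nonneg (-α * t))]
    -- Cauchy–Schwarz
    have hconj : Real.HolderConjugate 2 2 := Real.HolderConjugate.two_two
    have hu_mem : MemLp (fun t => Real.exp (-(α/2) * t)) (ENNReal.ofReal 2)
        (volume.restrict (Ioi x)) := by
      rw [ENNReal.ofReal_ofNat]
      refine (memLp_two_iff_integrable_sq
        ((hexpc (-(α/2))).aestronglyMeasurable.restrict)).2 ?_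
      refine (exp_neg_integrableOn_Ioi x hα).congr (Filter.Eventually.of_forall fun t => ?_)
      dsimp only
      rw [← Real.exp_nat_mul]; congr 1; push_cast; ring
    have hv_mem : MemLp (fun t => Real.exp (-(α/2) * t) * ‖f t‖) (ENNReal.ofReal 2)
        (volume.restrict (Ioi x)) := by
      rw [ENNReal.ofReal_ofNat]
      refine (memLp_two_iff_integrable_sq
        (((hexpc (-(α/2))).aestronglyMeasurable.restrict).mul hfm.norm.restrict)).2 ?_
      refine (hWint x).congr (Filter.Eventually.of_forall fun t => ?_)
      dsimp only [Pi.mul_apply]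
      rw [mul_pow, ← Real.exp_nat_mul]
      congr 2
      push_cast; ring
    have hCS := integral_mul_le_Lp_mul_Lq_of_nonneg (μ := volume.restrict (Ioi x)) hconj
      (Filter.Eventually.of_forall fun t => Real.exp_nonneg _)
      (Filter.Eventually.of_forall fun t => by positivity) hu_mem hv_mem
    simp only [Real.rpow_two] at hCS
    have hIA : (∫ t in Ioi x, Real.exp (-(α/2) * t) ^ 2) = A := by
      rw [show (∫ t in Ioi x, Real.exp (-(α/2) * t) ^ 2)
          = ∫ t in Ioi x, Real.exp (-α * t) from
        integral_congr_ae (Filter.Eventually.of_forall fun t => by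
          dsimp only
          rw [← Real.exp_nat_mul]; congr 1; push_cast; ring)]
      rw [hAdef]
      exact stmt13_int_exp_Ioi hα x
    have hIB : (∫ t in Ioi x, (Real.exp (-(α/2) * t) * ‖f t‖) ^ 2) = B := by
      rw [hBdef]
      refine integral_congr_ae (Filter.Eventually.of_forall fun t => ?_)
      dsimp only
      rw [mul_pow, ← Real.exp_nat_mul]
      congr 2
      push_cast; ring
    have huv : ∀ t : ℝ, Real.exp (-(α/2) * t) * (Real.exp (-(α/2) * t) * ‖f t‖)
        = Real.exp (-α * t) * ‖f t‖ := by
      intro t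
      rw [← mul_assoc, ← Real.exp_add, show -(α/2) * t + -(α/2) * t = -α * t by ring]
    have hle2 : (∫ t in Ioi x, Real.exp (-α * t) * ‖f t‖)
        ≤ A ^ ((1:ℝ)/2) * B ^ ((1:ℝ)/2) := by
      rw [← hIA, ← hIB]
      refine le_trans (le_of_eq (integral_congr_ae
        (Filter.Eventually.of_forall fun t => (huv t).symm))) hCS
    have hVb : ‖∫ t in Set.Ioi x, Complex.exp (-(α + β * Complex.I) * t) * φm t * f t‖
        ≤ Cm * (A ^ ((1:ℝ)/2) * B ^ ((1:ℝ)/2)) :=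
      h1.trans (mul_le_mul_of_nonneg_left hle2 hCm0)
    have hVsq : ‖∫ t in Set.Ioi x, Complex.exp (-(α + β * Complex.I) * t) * φm t * f t‖^2
        ≤ (Cm * (A ^ ((1:ℝ)/2) * B ^ ((1:ℝ)/2)))^2 :=
      pow_le_pow_left₀ (norm_nonneg _) hVb 2
    have hEsq : ‖Complex.exp ((α + β * Complex.I) * x) * φp x‖^2
        ≤ (Real.exp (α * x) * Cp)^2 :=
      pow_le_pow_left₀ (norm_nonneg _) hE 2
    have hprod := mul_le_mul hVsq hEsq (sq_nonneg _) (sq_nonneg _)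
    refine hprod.trans (le_of_eq ?_)
    have hA2 : (A ^ ((1:ℝ)/2))^2 = A := by
      rw [← Real.rpow_natCast (A ^ ((1:ℝ)/2)) 2, ← Real.rpow_mul hAnn]
      norm_num
    have hB2 : (B ^ ((1:ℝ)/2))^2 = B := by
      rw [← Real.rpow_natCast (B ^ ((1:ℝ)/2)) 2, ← Real.rpow_mul hBnn]
      norm_num
    have hexp2 : Real.exp (-α * x) * Real.exp (α * x) ^ 2 = Real.exp (α * x) := by
      rw [pow_two, ← mul_assoc, ← Real.exp_add, show -α * x + α * x = 0 by ring,
        Real.exp_zero, one_mul]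
    calc (Cm * (A ^ ((1:ℝ)/2) * B ^ ((1:ℝ)/2)))^2 * (Real.exp (α * x) * Cp)^2
        = Cm^2 * ((A ^ ((1:ℝ)/2))^2 * (B ^ ((1:ℝ)/2))^2) * (Real.exp (α * x)^2 * Cp^2) := by
          ring
      _ = Cm^2 * (A * B) * (Real.exp (α * x)^2 * Cp^2) := by rw [hA2, hB2]
      _ = (Cm^2 * Cp^2 / α) * (Real.exp (α * x) * B) := by
          rw [hAdef]
          linear_combination (Cm^2 * Cp^2 * B / α) * hexp2
  -- Fubini–Tonelli part
  set K : ℝ → ℝ → ℝ := fun x t =>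
    (Ioi x).indicator (fun s => Real.exp (α * x) * (Real.exp (-α * s) * ‖f s‖ ^ 2)) t with hK
  have hKnn : ∀ x t, 0 ≤ K x t := fun x t =>
    indicator_nonneg (fun s _ => by positivity) t
  have hK2 : ∀ t : ℝ, (fun x => K x t)
      = (Iio t).indicator (fun x => Real.exp (α * x) * (Real.exp (-α * t) * ‖f t‖ ^ 2)) := by
    intro t
    funext x
    simp only [hK, indicator_apply, mem_Ioi, mem_Iio]
  have hK1 : ∀ x : ℝ, (∫ t, K x t)
      = Real.exp (α * x) * ∫ t in Ioi x, Real.exp (-α * t) * ‖f t‖ ^ 2 := by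
    intro x
    simp only [hK]
    rw [integral_indicator measurableSet_Ioi, integral_const_mul]
  have hKt : ∀ t : ℝ, (∫ x, K x t) = ‖f t‖ ^ 2 / α := by
    intro t
    have hexp1 : Real.exp (α * t) * Real.exp (-α * t) = 1 := by
      rw [← Real.exp_add, show α * t + -α * t = 0 by ring, Real.exp_zero]
    calc (∫ x, K x t)
        = ∫ x, (Iio t).indicator
            (fun x => Real.exp (α * x) * (Real.exp (-α * t) * ‖f t‖ ^ 2)) x := by
          rw [hK2 t]
      _ = ∫ x in Iio t, Real.exp (α * x) * (Real.exp (-α * t) * ‖f t‖ ^ 2) :=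
          integral_indicator measurableSet_Iio
      _ = (∫ x in Iio t, Real.exp (α * x)) * (Real.exp (-α * t) * ‖f t‖ ^ 2) :=
          integral_mul_const _ _
      _ = (Real.exp (α * t) / α) * (Real.exp (-α * t) * ‖f t‖ ^ 2) := by
          rw [stmt13_int_exp_Iio hα t]
      _ = ‖f t‖ ^ 2 / α := by linear_combination (‖f t‖ ^ 2 / α) * hexp1
  have hKmeas : AEStronglyMeasurable (Function.uncurry K) ((volume : Measure ℝ).prod volume) := by
    have huncurry : Function.uncurry K = {p : ℝ × ℝ | p.1 < p.2}.indicator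
        (fun p => Real.exp (α * p.1) * (Real.exp (-α * p.2) * ‖f p.2‖ ^ 2)) := by
      funext p
      rcases p with ⟨x, t⟩
      simp only [Function.uncurry_apply_pair, hK, indicator_apply, mem_Ioi, Set.mem_setOf_eq]
    rw [huncurry]
    refine AEStronglyMeasurable.indicator ?_ (measurableSet_lt measurable_fst measurable_snd)
    exact ((hexpc α).comp continuous_fst).aestronglyMeasurable.mul
      (((hexpc (-α)).aestronglyMeasurable.mul hFint.aestronglyMeasurable).comp_snd)
  have hKint : Integrable (Function.uncurry K) ((volume : Measure ℝ).prod volume) := by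
    refine (integrable_prod_iff' hKmeas).2 ⟨?_, ?_⟩
    · refine Filter.Eventually.of_forall fun t => ?_
      show Integrable (fun x => K x t) volume
      rw [hK2 t, integrable_indicator_iff measurableSet_Iio]
      exact (stmt13_intOn_exp_Iio hα t).mul_const _
    · have heq : (fun t => ∫ x, ‖Function.uncurry K (x, t)‖) = fun t => ‖f t‖ ^ 2 / α := by
        funext t
        have h0 : (fun x => ‖Function.uncurry K (x, t)‖) = fun x => K x t := by
          funext x
          exact norm_of_nonneg (hKnn x t)
        rw [h0, hKt t]
      rw [heq]
      exact hFint.div_const α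
  have hHint : Integrable
      (fun x => Real.exp (α * x) * ∫ t in Ioi x, Real.exp (-α * t) * ‖f t‖ ^ 2) volume := by
    refine (hKint.integral_prod_left).congr (Filter.Eventually.of_forall fun x => ?_)
    simp only [Function.uncurry_apply_pair]
    exact hK1 x
  have hmain : (∫ x, Real.exp (α * x) * ∫ t in Ioi x, Real.exp (-α * t) * ‖f t‖ ^ 2)
      = (∫ t, ‖f t‖ ^ 2) / α := by
    calc (∫ x, Real.exp (α * x) * ∫ t in Ioi x, Real.exp (-α * t) * ‖f t‖ ^ 2)
        = ∫ x, ∫ t, K x t := integral_congr_ae (Filter.Eventually.of_forall fun x => (hK1 x).symm)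
      _ = ∫ t, ∫ x, K x t := integral_integral_swap hKint
      _ = ∫ t, ‖f t‖ ^ 2 / α := integral_congr_ae (Filter.Eventually.of_forall fun t => hKt t)
      _ = (∫ t, ‖f t‖ ^ 2) / α := integral_div α _
  calc (∫ x : ℝ,
        ‖∫ t in Set.Ioi x, Complex.exp (-(α + β * Complex.I) * t) * φm t * f t‖^2 *
          ‖Complex.exp ((α + β * Complex.I) * x) * φp x‖^2)
      ≤ ∫ x : ℝ, (Cm^2 * Cp^2 / α) *
          (Real.exp (α * x) * ∫ t in Ioi x, Real.exp (-α * t) * ‖f t‖ ^ 2) :=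
        integral_mono_of_nonneg (Filter.Eventually.of_forall fun x => by positivity)
          (hHint.const_mul _) (Filter.Eventually.of_forall fun x => key x)
    _ = (Cm^2 * Cp^2 / α) *
          ∫ x : ℝ, Real.exp (α * x) * ∫ t in Ioi x, Real.exp (-α * t) * ‖f t‖ ^ 2 :=
        integral_const_mul _ _
    _ = (Cm^2 * Cp^2 / α) * ((∫ t, ‖f t‖ ^ 2) / α) := by rw [hmain]
    _ = (Cm^2 * Cp^2 / α^2) * ∫ t : ℝ, ‖f t‖ ^ 2 := by ring
end

section
/- Let β be an irrational real number, k an integer, and y : [0,∞) → ℂ a function of the form y(x) = C⁺ ∑_{j ∈ 2ℤ} a_j e^{i(j+β)x} + C⁻ ∑_{j ∈ 2ℤ} b_j e^{i(j-β)x} where both series converge uniformly on ℝ and (a_j), (b_j) ∈ ℓ¹. If y ∈ L²([0,∞)), then C⁺ a_k = 0 and C⁻ b_k = 0 for all k ∈ 2ℤ; hence if some coefficient C^± a_k or C^± b_k is nonzero, then y ∉ L²([0,∞)). -/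
open MeasureTheory Real

lemma norm_exp_I_mul (ν x : ℝ) : ‖Complex.exp (Complex.I * ν * x)‖ = 1 := by
  rw [Complex.norm_exp]
  simp [Complex.mul_re]

lemma integral_exp_Ioc (ν : ℝ) (T : ℝ) (hT : 0 < T) (hν : ν ≠ 0) :
    ∫ x in Set.Ioc (0:ℝ) T, Complex.exp (Complex.I * ν * x)
      = (Complex.exp (Complex.I * ν * T) - 1) / (Complex.I * ν) := by
  have hc : (Complex.I * ν : ℂ) ≠ 0 := by
    simp [Complex.I_ne_zero, Complex.ofReal_eq_zero, hν]
  rw [← intervalIntegral.integral_of_le hT.le]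
  have := integral_exp_mul_complex (a := 0) (b := T) hc
  simp only [mul_assoc] at this ⊢
  rw [this]
  simp

lemma integral_one_Ioc (T : ℝ) (hT : 0 < T) :
    ∫ x in Set.Ioc (0:ℝ) T, Complex.exp (Complex.I * (0:ℝ) * x) = (T : ℂ) := by
  simp [Real.volume_Ioc, hT.le]

lemma e_bound (ν : ℝ) (T : ℝ) (hT : 0 < T) :
    ‖(T:ℂ)⁻¹ * ∫ x in Set.Ioc (0:ℝ) T, Complex.exp (Complex.I * ν * x)‖ ≤ 1 := by
  rw [norm_mul]
  have h1 : ‖∫ x in Set.Ioc (0:ℝ) T, Complex.exp (Complex.I * ν * x)‖ ≤ T := by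
    calc ‖∫ x in Set.Ioc (0:ℝ) T, Complex.exp (Complex.I * ν * x)‖
        ≤ ∫ x in Set.Ioc (0:ℝ) T, ‖Complex.exp (Complex.I * ν * x)‖ :=
          norm_integral_le_integral_norm _
      _ = ∫ _x in Set.Ioc (0:ℝ) T, (1:ℝ) := by simp only [norm_exp_I_mul]
      _ = T := by simp [Real.volume_Ioc, hT.le]
  have h2 : ‖(T:ℂ)⁻¹‖ = T⁻¹ := by
    rw [norm_inv, Complex.norm_real, Real.norm_of_nonneg hT.le]
  rw [h2]
  calc T⁻¹ * ‖∫ x in Set.Ioc (0:ℝ) T, Complex.exp (Complex.I * ν * x)‖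
      ≤ T⁻¹ * T := by gcongr
    _ = 1 := by field_simp

lemma e_tendsto (ν : ℝ) (hν : ν ≠ 0) :
    Filter.Tendsto (fun T : ℝ => (T:ℂ)⁻¹ * ∫ x in Set.Ioc (0:ℝ) T, Complex.exp (Complex.I * ν * x))
      Filter.atTop (nhds 0) := by
  apply squeeze_zero_norm' (a := fun T => (2 / |ν|) * T⁻¹)
  · filter_upwards [Filter.eventually_gt_atTop (0:ℝ)] with T hT
    rw [norm_mul, integral_exp_Ioc ν T hT hν, norm_inv, Complex.norm_real,
      Real.norm_of_nonneg hT.le]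
    rw [norm_div]
    have h1 : ‖Complex.exp (Complex.I * ν * T) - 1‖ ≤ 2 := by
      calc ‖Complex.exp (Complex.I * ν * T) - 1‖
          ≤ ‖Complex.exp (Complex.I * ν * T)‖ + ‖(1:ℂ)‖ := norm_sub_le _ _
        _ = 2 := by rw [norm_exp_I_mul]; norm_num
    have h2 : ‖(Complex.I * ν : ℂ)‖ = |ν| := by
      rw [norm_mul, Complex.norm_I, one_mul, Complex.norm_real, Real.norm_eq_abs]
    rw [h2, mul_comm]
    gcongr
  · rw [show (0:ℝ) = (2/|ν|) * 0 by ring]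
    exact tendsto_inv_atTop_zero.const_mul _

lemma cont_tsum_exp (u : ℤ → ℂ) (hu : Summable fun j => ‖u j‖) (c : ℤ → ℝ) :
    Continuous fun x : ℝ => ∑' j : ℤ, u j * Complex.exp (Complex.I * (c j) * x) := by
  apply continuous_tsum _ hu
  · intro j x
    rw [norm_mul, norm_exp_I_mul, mul_one]
  · intro j
    exact continuous_const.mul (Complex.continuous_exp.comp
      (continuous_const.mul Complex.continuous_ofReal))

lemma swap_int (u : ℤ → ℂ) (hu : Summable fun j => ‖u j‖) (c : ℤ → ℝ) (μ T : ℝ) (hT : 0 < T) :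
    (∫ x in Set.Ioc (0:ℝ) T,
        (∑' j : ℤ, u j * Complex.exp (Complex.I * (c j) * x)) * Complex.exp (-(Complex.I * μ * x)))
      = ∑' j : ℤ, u j * ∫ x in Set.Ioc (0:ℝ) T, Complex.exp (Complex.I * ((c j - μ : ℝ)) * x) := by
  have h1 : ∀ x : ℝ, (∑' j : ℤ, u j * Complex.exp (Complex.I * (c j) * x))
      * Complex.exp (-(Complex.I * μ * x))
      = ∑' j : ℤ, u j * Complex.exp (Complex.I * ((c j - μ : ℝ)) * x) := by
    intro x
    rw [← tsum_mul_right]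
    congr 1
    funext j
    rw [mul_assoc, ← Complex.exp_add]
    congr 2
    push_cast
    ring
  simp only [h1]
  rw [← MeasureTheory.integral_tsum_of_summable_integral_norm]
  · exact tsum_congr fun j => MeasureTheory.integral_const_mul _ _
  · exact fun j => Continuous.integrableOn_Ioc (μ := volume) (continuous_const.mul
      (Complex.continuous_exp.comp (continuous_const.mul Complex.continuous_ofReal)))
  · apply Summable.congr (f := fun j : ℤ => ‖u j‖ * T) (hu.mul_right T)
    intro j
    rw [show (fun x : ℝ => ‖u j * Complex.exp (Complex.I * ((c j - μ : ℝ)) * x)‖)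
        = fun _ : ℝ => ‖u j‖ from funext fun x => by rw [norm_mul, norm_exp_I_mul, mul_one]]
    rw [MeasureTheory.setIntegral_const]
    simp [Real.volume_Ioc, hT.le, mul_comm]

lemma norm_exp_neg_I_mul (μ x : ℝ) : ‖Complex.exp (-(Complex.I * μ * x))‖ = 1 := by
  rw [Complex.exp_neg, norm_inv, norm_exp_I_mul, inv_one]

lemma avg_tendsto_zero (y : ℝ → ℂ) (hc : Continuous y)
    (hL2 : MemLp y 2 (volume.restrict (Set.Ioi (0:ℝ)))) (μ : ℝ) :
    Filter.Tendsto (fun T : ℝ => (T:ℂ)⁻¹ *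
      ∫ x in Set.Ioc (0:ℝ) T, y x * Complex.exp (-(Complex.I * μ * x)))
      Filter.atTop (nhds 0) := by
  set C : ℝ := ∫ x in Set.Ioi (0:ℝ), ‖y x‖ ^ (2:ℝ) with hCdef
  have hC_int : Integrable (fun x => ‖y x‖ ^ (2:ℝ)) (volume.restrict (Set.Ioi (0:ℝ))) := by
    have h := hL2.integrable_norm_rpow (by norm_num) (by norm_num)
    simpa using h
  have hC0 : 0 ≤ C := by
    apply MeasureTheory.integral_nonneg
    intro x
    positivity
  apply squeeze_zero_norm' (a := fun T : ℝ => C ^ ((1:ℝ)/2) * T ^ (-(1/2) : ℝ))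
  · filter_upwards [Filter.eventually_gt_atTop (0:ℝ)] with T hT
    have hrr : (volume.restrict (Set.Ioi (0:ℝ))).restrict (Set.Ioc (0:ℝ) T)
        = volume.restrict (Set.Ioc (0:ℝ) T) := by
      rw [Measure.restrict_restrict measurableSet_Ioc,
        Set.inter_eq_left.mpr Set.Ioc_subset_Ioi_self]
    have hf2 : MemLp (fun x => ‖y x‖) (ENNReal.ofReal 2) (volume.restrict (Set.Ioc (0:ℝ) T)) := by
      rw [ENNReal.ofReal_ofNat, ← hrr]
      exact (hL2.norm).restrict _
    have hg2 : MemLp (fun _ : ℝ => (1:ℝ)) (ENNReal.ofReal 2)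
        (volume.restrict (Set.Ioc (0:ℝ) T)) := memLp_const 1
    have hCS := MeasureTheory.integral_mul_le_Lp_mul_Lq_of_nonneg
      (μ := volume.restrict (Set.Ioc (0:ℝ) T)) (p := 2) (q := 2)
      Real.HolderConjugate.two_two
      (Filter.Eventually.of_forall fun x => norm_nonneg _)
      (Filter.Eventually.of_forall fun _ => zero_le_one) hf2 hg2
    simp only [mul_one, Real.one_rpow] at hCS
    have hint1 : (∫ _x in Set.Ioc (0:ℝ) T, (1:ℝ)) = T := by
      simp [Real.volume_Ioc, hT.le]
    rw [hint1] at hCS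
    -- ∫_{Ioc} ‖y‖² ≤ C
    have hmono : (∫ x in Set.Ioc (0:ℝ) T, ‖y x‖ ^ (2:ℝ)) ≤ C := by
      apply MeasureTheory.setIntegral_mono_set hC_int
      · exact Filter.Eventually.of_forall fun x => by positivity
      · exact HasSubset.Subset.eventuallyLE Set.Ioc_subset_Ioi_self
    have hnormint : ‖∫ x in Set.Ioc (0:ℝ) T, y x * Complex.exp (-(Complex.I * μ * x))‖
        ≤ C ^ ((1:ℝ)/2) * T ^ ((1:ℝ)/2) := by
      calc ‖∫ x in Set.Ioc (0:ℝ) T, y x * Complex.exp (-(Complex.I * μ * x))‖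
          ≤ ∫ x in Set.Ioc (0:ℝ) T, ‖y x * Complex.exp (-(Complex.I * μ * x))‖ :=
            norm_integral_le_integral_norm _
        _ = ∫ x in Set.Ioc (0:ℝ) T, ‖y x‖ := by
            apply MeasureTheory.integral_congr_ae
            exact Filter.Eventually.of_forall fun x => by
              simp only [norm_mul, norm_exp_neg_I_mul, mul_one]
        _ ≤ (∫ x in Set.Ioc (0:ℝ) T, ‖y x‖ ^ (2:ℝ)) ^ ((1:ℝ)/2) * T ^ ((1:ℝ)/2) := hCS
        _ ≤ C ^ ((1:ℝ)/2) * T ^ ((1:ℝ)/2) := by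
            gcongr
    rw [norm_mul, norm_inv, Complex.norm_real, Real.norm_of_nonneg hT.le]
    have hTs : T ^ ((1:ℝ)/2) * T ^ ((1:ℝ)/2) = T := by
      rw [← Real.rpow_add hT]; norm_num
    have key : T⁻¹ * (C ^ ((1:ℝ)/2) * T ^ ((1:ℝ)/2)) = C ^ ((1:ℝ)/2) * T ^ (-(1/2) : ℝ) := by
      rw [Real.rpow_neg hT.le]
      have h2 : (0:ℝ) < T ^ ((1:ℝ)/2) := Real.rpow_pos_of_pos hT _
      field_simp
      linear_combination (C ^ ((1:ℝ)/2)) * hTs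
    rw [← key]
    gcongr
  · rw [show (0:ℝ) = C ^ ((1:ℝ)/2) * 0 by ring]
    exact (tendsto_rpow_neg_atTop (by norm_num)).const_mul _

lemma aux_coef (β : ℝ) (hβ : Irrational β) (a b : ℤ → ℂ)
    (ha : Summable fun j => ‖a j‖) (hb : Summable fun j => ‖b j‖) (Cp Cm : ℂ)
    (y : ℝ → ℂ)
    (hy : ∀ x : ℝ,
      y x = Cp * (∑' j : ℤ, a j * Complex.exp (Complex.I * ((2 * j + β : ℝ)) * x)) +
            Cm * (∑' j : ℤ, b j * Complex.exp (Complex.I * ((2 * j - β : ℝ)) * x)))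
    (hL2 : MemLp y 2 (volume.restrict (Set.Ioi (0:ℝ)))) (k : ℤ) : Cp * a k = 0 := by
  set μ : ℝ := 2 * (k : ℝ) + β with hμ
  have hfc : Continuous fun x : ℝ =>
      ∑' j : ℤ, a j * Complex.exp (Complex.I * ((2 * (j:ℝ) + β : ℝ)) * x) :=
    cont_tsum_exp a ha (fun j => 2 * (j:ℝ) + β)
  have hgc : Continuous fun x : ℝ =>
      ∑' j : ℤ, b j * Complex.exp (Complex.I * ((2 * (j:ℝ) - β : ℝ)) * x) :=
    cont_tsum_exp b hb (fun j => 2 * (j:ℝ) - β)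
  have hcont : Continuous y :=
    ((continuous_const.mul hfc).add (continuous_const.mul hgc)).congr fun x => (hy x).symm
  have hE : Continuous fun x : ℝ => Complex.exp (-(Complex.I * μ * x)) :=
    Complex.continuous_exp.comp (continuous_const.mul Complex.continuous_ofReal).neg
  -- key identity
  have key : ∀ T : ℝ, 0 < T →
      (T:ℂ)⁻¹ * (∫ x in Set.Ioc (0:ℝ) T, y x * Complex.exp (-(Complex.I * μ * x)))
      = Cp * ∑' j : ℤ, a j * ((T:ℂ)⁻¹ *
          ∫ x in Set.Ioc (0:ℝ) T, Complex.exp (Complex.I * ((2 * (j:ℝ) + β - μ : ℝ)) * x))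
      + Cm * ∑' j : ℤ, b j * ((T:ℂ)⁻¹ *
          ∫ x in Set.Ioc (0:ℝ) T, Complex.exp (Complex.I * ((2 * (j:ℝ) - β - μ : ℝ)) * x)) := by
    intro T hT
    have e1 := swap_int a ha (fun j => 2 * (j:ℝ) + β) μ T hT
    have e2 := swap_int b hb (fun j => 2 * (j:ℝ) - β) μ T hT
    have int1 : Integrable (fun x : ℝ =>
        (∑' j : ℤ, a j * Complex.exp (Complex.I * ((2 * (j:ℝ) + β : ℝ)) * x)) *
          Complex.exp (-(Complex.I * μ * x))) (volume.restrict (Set.Ioc (0:ℝ) T)) :=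
      Continuous.integrableOn_Ioc (μ := volume) (hfc.mul hE)
    have int2 : Integrable (fun x : ℝ =>
        (∑' j : ℤ, b j * Complex.exp (Complex.I * ((2 * (j:ℝ) - β : ℝ)) * x)) *
          Complex.exp (-(Complex.I * μ * x))) (volume.restrict (Set.Ioc (0:ℝ) T)) :=
      Continuous.integrableOn_Ioc (μ := volume) (hgc.mul hE)
    have hstep : (∫ x in Set.Ioc (0:ℝ) T, y x * Complex.exp (-(Complex.I * μ * x)))
        = Cp * (∫ x in Set.Ioc (0:ℝ) T,
            (∑' j : ℤ, a j * Complex.exp (Complex.I * ((2 * (j:ℝ) + β : ℝ)) * x)) *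
              Complex.exp (-(Complex.I * μ * x)))
        + Cm * (∫ x in Set.Ioc (0:ℝ) T,
            (∑' j : ℤ, b j * Complex.exp (Complex.I * ((2 * (j:ℝ) - β : ℝ)) * x)) *
              Complex.exp (-(Complex.I * μ * x))) := by
      rw [← MeasureTheory.integral_const_mul, ← MeasureTheory.integral_const_mul,
        ← MeasureTheory.integral_add (int1.const_mul Cp) (int2.const_mul Cm)]
      apply MeasureTheory.integral_congr_ae
      apply Filter.Eventually.of_forall
      intro x
      simp only [hy]
      ring
    have t1 : ∑' j : ℤ, a j * ((T:ℂ)⁻¹ *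
          ∫ x in Set.Ioc (0:ℝ) T, Complex.exp (Complex.I * ((2 * (j:ℝ) + β - μ : ℝ)) * x))
        = (T:ℂ)⁻¹ * ∑' j : ℤ, a j *
          ∫ x in Set.Ioc (0:ℝ) T, Complex.exp (Complex.I * ((2 * (j:ℝ) + β - μ : ℝ)) * x) := by
      rw [← tsum_mul_left]
      exact tsum_congr fun j => by ring
    have t2 : ∑' j : ℤ, b j * ((T:ℂ)⁻¹ *
          ∫ x in Set.Ioc (0:ℝ) T, Complex.exp (Complex.I * ((2 * (j:ℝ) - β - μ : ℝ)) * x))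
        = (T:ℂ)⁻¹ * ∑' j : ℤ, b j *
          ∫ x in Set.Ioc (0:ℝ) T, Complex.exp (Complex.I * ((2 * (j:ℝ) - β - μ : ℝ)) * x) := by
      rw [← tsum_mul_left]
      exact tsum_congr fun j => by ring
    rw [t1, t2, hstep, e1, e2]
    ring
  -- limits
  have hS1 : Filter.Tendsto (fun T : ℝ => ∑' j : ℤ, a j * ((T:ℂ)⁻¹ *
      ∫ x in Set.Ioc (0:ℝ) T, Complex.exp (Complex.I * ((2 * (j:ℝ) + β - μ : ℝ)) * x)))
      Filter.atTop (nhds (a k)) := by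
    have h := tendsto_tsum_of_dominated_convergence (𝓕 := Filter.atTop)
      (f := fun (T : ℝ) (j : ℤ) => a j * ((T:ℂ)⁻¹ *
        ∫ x in Set.Ioc (0:ℝ) T, Complex.exp (Complex.I * ((2 * (j:ℝ) + β - μ : ℝ)) * x)))
      (g := fun j : ℤ => if j = k then a k else 0) (bound := fun j => ‖a j‖) ha ?_ ?_
    · rwa [tsum_ite_eq] at h
    · intro j
      by_cases hj : j = k
      · subst hj
        rw [if_pos rfl]
        apply Filter.Tendsto.congr' _ tendsto_const_nhds
        filter_upwards [Filter.eventually_gt_atTop (0:ℝ)] with T hT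
        have h0 : (2 * (j:ℝ) + β - μ : ℝ) = 0 := by rw [hμ]; ring
        rw [h0, integral_one_Ioc T hT, inv_mul_cancel₀ (by exact_mod_cast hT.ne'), mul_one]
      · rw [if_neg hj]
        have hν : (2 * (j:ℝ) + β - μ : ℝ) ≠ 0 := by
          rw [hμ]
          have : (j:ℝ) ≠ (k:ℝ) := by exact_mod_cast hj
          intro hcon
          apply this
          linarith
        simpa using (e_tendsto _ hν).const_mul (a j)
    · filter_upwards [Filter.eventually_gt_atTop (0:ℝ)] with T hT
      intro j
      rw [norm_mul]
      calc ‖a j‖ * ‖(T:ℂ)⁻¹ *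
          ∫ x in Set.Ioc (0:ℝ) T, Complex.exp (Complex.I * ((2 * (j:ℝ) + β - μ : ℝ)) * x)‖
          ≤ ‖a j‖ * 1 := by gcongr; exact e_bound _ T hT
        _ = ‖a j‖ := mul_one _
  have hS2 : Filter.Tendsto (fun T : ℝ => ∑' j : ℤ, b j * ((T:ℂ)⁻¹ *
      ∫ x in Set.Ioc (0:ℝ) T, Complex.exp (Complex.I * ((2 * (j:ℝ) - β - μ : ℝ)) * x)))
      Filter.atTop (nhds 0) := by
    have h := tendsto_tsum_of_dominated_convergence (𝓕 := Filter.atTop)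
      (f := fun (T : ℝ) (j : ℤ) => b j * ((T:ℂ)⁻¹ *
        ∫ x in Set.Ioc (0:ℝ) T, Complex.exp (Complex.I * ((2 * (j:ℝ) - β - μ : ℝ)) * x)))
      (g := fun _ : ℤ => 0) (bound := fun j => ‖b j‖) hb ?_ ?_
    · rwa [tsum_zero] at h
    · intro j
      have hν : (2 * (j:ℝ) - β - μ : ℝ) ≠ 0 := by
        rw [hμ]
        intro hcon
        apply hβ
        exact ⟨((j - k : ℤ) : ℚ), by push_cast; linarith⟩
      simpa using (e_tendsto _ hν).const_mul (b j)
    · filter_upwards [Filter.eventually_gt_atTop (0:ℝ)] with T hT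
      intro j
      rw [norm_mul]
      calc ‖b j‖ * ‖(T:ℂ)⁻¹ *
          ∫ x in Set.Ioc (0:ℝ) T, Complex.exp (Complex.I * ((2 * (j:ℝ) - β - μ : ℝ)) * x)‖
          ≤ ‖b j‖ * 1 := by gcongr; exact e_bound _ T hT
        _ = ‖b j‖ := mul_one _
  have hA := avg_tendsto_zero y hcont hL2 μ
  have hlim : Filter.Tendsto (fun T : ℝ => (T:ℂ)⁻¹ *
      ∫ x in Set.Ioc (0:ℝ) T, y x * Complex.exp (-(Complex.I * μ * x)))
      Filter.atTop (nhds (Cp * a k + Cm * 0)) := by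
    apply Filter.Tendsto.congr' _ ((hS1.const_mul Cp).add (hS2.const_mul Cm))
    filter_upwards [Filter.eventually_gt_atTop (0:ℝ)] with T hT
    exact (key T hT).symm
  have h0 := tendsto_nhds_unique hA hlim
  simpa using h0.symm

/-- If `β` is irrational, `(a_j), (b_j) ∈ ℓ¹(2ℤ)`, and
`y(x) = C⁺ ∑_j a_j e^{i(2j+β)x} + C⁻ ∑_j b_j e^{i(2j-β)x}` lies in `L²([0,∞))`, then
all coefficients `C⁺ a_k` and `C⁻ b_k` vanish. -/
theorem stmt16 (β : ℝ) (hβ : Irrational β) (a b : ℤ → ℂ)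
    (ha : Summable fun j => ‖a j‖) (hb : Summable fun j => ‖b j‖) (Cp Cm : ℂ)
    (y : ℝ → ℂ)
    (hy : ∀ x : ℝ,
      y x = Cp * (∑' j : ℤ, a j * Complex.exp (Complex.I * ((2 * j + β : ℝ)) * x)) +
            Cm * (∑' j : ℤ, b j * Complex.exp (Complex.I * ((2 * j - β : ℝ)) * x)))
    (hL2 : MemLp y 2 (volume.restrict (Set.Ioi (0:ℝ)))) :
    ∀ k : ℤ, Cp * a k = 0 ∧ Cm * b k = 0 := by
  intro k
  constructor
  · exact aux_coef β hβ a b ha hb Cp Cm y hy hL2 k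
  · apply aux_coef (-β) hβ.neg b a hb ha Cm Cp y _ hL2 k
    intro x
    rw [hy x, add_comm]
    simp only [← sub_eq_add_neg, sub_neg_eq_add]
end

section
/- Let n ≥ 3 be an integer and let λ ∈ ℂ satisfy (n-1)² ≤ Re λ ≤ (n+1)² and |λ - n²| ≥ n/4. Then there is an absolute constant C₁ such that ∑_{k ∈ n + 2ℤ} 1/|λ - k²| ≤ C₁ (log n)/n and ∑_{k ∈ n + 2ℤ} 1/|λ - k²|² ≤ C₁/n². -/
open scoped BigOperators
open Real

open Finset in
private lemma fold_natAbs (s : Finset ℤ) (h : ℤ → ℝ) (h0 : ∀ m, 0 ≤ h m) :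
    ∑ m ∈ s, h m ≤ ∑ j ∈ s.image Int.natAbs, (h (j : ℤ) + h (-(j : ℤ))) := by
  classical
  have hsub : s ⊆ (s.image Int.natAbs).biUnion (fun j => ({(j : ℤ), -(j : ℤ)} : Finset ℤ)) := by
    intro m hm
    simp only [mem_biUnion, mem_image, mem_insert, mem_singleton]
    exact ⟨m.natAbs, ⟨m, hm, rfl⟩, by omega⟩
  have hdisj : ∀ j₁ ∈ s.image Int.natAbs, ∀ j₂ ∈ s.image Int.natAbs, j₁ ≠ j₂ →
      Disjoint ({(j₁ : ℤ), -(j₁ : ℤ)} : Finset ℤ) ({(j₂ : ℤ), -(j₂ : ℤ)} : Finset ℤ) := by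
    intro j₁ _ j₂ _ hne
    simp only [disjoint_left, mem_insert, mem_singleton]
    rintro a (rfl | rfl) <;> intro hc <;> rcases hc with hc | hc <;> omega
  calc ∑ m ∈ s, h m ≤ ∑ m ∈ (s.image Int.natAbs).biUnion
        (fun j => ({(j : ℤ), -(j : ℤ)} : Finset ℤ)), h m :=
        sum_le_sum_of_subset_of_nonneg hsub (fun m _ _ => h0 m)
    _ = ∑ j ∈ s.image Int.natAbs, ∑ m ∈ ({(j : ℤ), -(j : ℤ)} : Finset ℤ), h m :=
        sum_biUnion hdisj
    _ ≤ ∑ j ∈ s.image Int.natAbs, (h (j : ℤ) + h (-(j : ℤ))) := by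
        apply sum_le_sum
        intro j _
        by_cases hj : (j : ℤ) = -(j : ℤ)
        · have : ({(j : ℤ), -(j : ℤ)} : Finset ℤ) = {(j : ℤ)} := by
            rw [← hj]; simp
          rw [this, sum_singleton]
          nlinarith [h0 (-(j : ℤ))]
        · rw [sum_pair hj]

open Finset in
private lemma nat_sq_sum (u : Finset ℕ) (N : ℕ) (hN : 1 ≤ N) (hu : ∀ j ∈ u, N ≤ j) :
    ∑ j ∈ u, 1 / (j : ℝ) ^ 2 ≤ 2 / (N : ℝ) := by
  have hsub : u ⊆ Finset.Ioo (N - 1) (u.sup id + 1) := by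
    intro j hj
    simp only [mem_Ioo]
    exact ⟨by have := hu j hj; omega, Nat.lt_succ_of_le (le_sup (f := id) hj)⟩
  calc ∑ j ∈ u, 1 / (j : ℝ) ^ 2
      ≤ ∑ j ∈ Finset.Ioo (N - 1) (u.sup id + 1), 1 / (j : ℝ) ^ 2 :=
        sum_le_sum_of_subset_of_nonneg hsub (fun j _ _ => by positivity)
    _ = ∑ j ∈ Finset.Ioo (N - 1) (u.sup id + 1), ((j : ℝ) ^ 2)⁻¹ := by
        simp [one_div]
    _ ≤ 2 / ((N - 1 : ℕ) + 1) := by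
        exact_mod_cast sum_Ioo_inv_sq_le (α := ℝ) (N - 1) (u.sup id + 1)
    _ = 2 / (N : ℝ) := by
        congr 1
        have : (N - 1 : ℕ) + 1 = N := by omega
        exact_mod_cast congrArg (Nat.cast : ℕ → ℝ) this

open Finset in
private lemma nat_harm_sum (u : Finset ℕ) (K : ℕ) (hu : ∀ j ∈ u, 1 ≤ j ∧ j ≤ K) :
    ∑ j ∈ u, 1 / (j : ℝ) ≤ 1 + Real.log (K : ℝ) := by
  have hsub : u ⊆ Finset.Icc 1 K := fun j hj => by
    simp only [mem_Icc]; exact hu j hj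
  calc ∑ j ∈ u, 1 / (j : ℝ) ≤ ∑ j ∈ Finset.Icc 1 K, 1 / (j : ℝ) :=
        sum_le_sum_of_subset_of_nonneg hsub (fun j _ _ => by positivity)
    _ = (harmonic K : ℝ) := by
        rw [harmonic_eq_sum_Icc]
        push_cast
        simp [one_div]
    _ ≤ 1 + Real.log K := harmonic_le_one_add_log K

open Finset in
private lemma int_sq_sum (t : Finset ℤ) (N : ℕ) (hN : 1 ≤ N) (ht : ∀ m ∈ t, N ≤ m.natAbs) :
    ∑ m ∈ t, 1 / (m : ℝ) ^ 2 ≤ 4 / (N : ℝ) := by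
  calc ∑ m ∈ t, 1 / (m : ℝ) ^ 2
      ≤ ∑ j ∈ t.image Int.natAbs, (1 / ((j : ℤ) : ℝ) ^ 2 + 1 / ((-(j : ℤ) : ℤ) : ℝ) ^ 2) :=
        fold_natAbs t (fun m => 1 / (m : ℝ) ^ 2) (fun m => by positivity)
    _ = ∑ j ∈ t.image Int.natAbs, 2 * (1 / (j : ℝ) ^ 2) := by
        apply sum_congr rfl; intro j _; push_cast; ring
    _ = 2 * ∑ j ∈ t.image Int.natAbs, 1 / (j : ℝ) ^ 2 := by rw [mul_sum]
    _ ≤ 2 * (2 / (N : ℝ)) := by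
        apply mul_le_mul_of_nonneg_left _ (by norm_num)
        apply nat_sq_sum _ N hN
        intro j hj
        simp only [mem_image] at hj
        obtain ⟨m, hm, rfl⟩ := hj
        exact ht m hm
    _ = 4 / (N : ℝ) := by ring

open Finset in
private lemma int_harm_sum (t : Finset ℤ) (K : ℕ) (ht : ∀ m ∈ t, m ≠ 0 ∧ m.natAbs ≤ K) :
    ∑ m ∈ t, 1 / |(m : ℝ)| ≤ 2 * (1 + Real.log (K : ℝ)) := by
  calc ∑ m ∈ t, 1 / |(m : ℝ)|
      ≤ ∑ j ∈ t.image Int.natAbs, (1 / |((j : ℤ) : ℝ)| + 1 / |((-(j : ℤ) : ℤ) : ℝ)|) :=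
        fold_natAbs t (fun m => 1 / |(m : ℝ)|) (fun m => by positivity)
    _ = ∑ j ∈ t.image Int.natAbs, 2 * (1 / (j : ℝ)) := by
        apply sum_congr rfl; intro j _
        push_cast
        rw [abs_neg, abs_of_nonneg (by positivity : (0:ℝ) ≤ (j:ℝ))]
        ring
    _ = 2 * ∑ j ∈ t.image Int.natAbs, 1 / (j : ℝ) := by rw [mul_sum]
    _ ≤ 2 * (1 + Real.log (K : ℝ)) := by
        apply mul_le_mul_of_nonneg_left _ (by norm_num)
        apply nat_harm_sum _ K
        intro j hj
        simp only [mem_image] at hj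
        obtain ⟨m, hm, rfl⟩ := hj
        have := ht m hm
        omega

private lemma aux1 {a b c : ℝ} (ha : 0 < a) (hb : 0 < b) (hc : 0 < c) (h : c ≤ a + b) :
    1 / (a * b) ≤ (1 / c) * (1 / a + 1 / b) := by
  rw [show (1/c)*(1/a+1/b) = (a+b)/(c*(a*b)) by field_simp; ring,
    div_le_div_iff₀ (by positivity) (by positivity)]
  nlinarith [mul_pos ha hb]

private lemma aux2 {a b c : ℝ} (ha : 0 < a) (hb : 0 < b) (hc : 0 < c) (h : c ≤ a + b) :
    1 / (a * b) ^ 2 ≤ 4 / c ^ 2 * (1 / a ^ 2 + 1 / b ^ 2) := by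
  rw [show 4/c^2*(1/a^2+1/b^2) = (4*(a^2+b^2))/(c^2*(a*b)^2) by field_simp; ring,
    div_le_div_iff₀ (by positivity) (by positivity)]
  have hc2 : c ^ 2 ≤ 2 * (a ^ 2 + b ^ 2) := by nlinarith [sq_nonneg (a - b)]
  nlinarith [mul_le_mul_of_nonneg_right hc2 (le_of_lt (by positivity : (0:ℝ) < (a*b)^2)),
    sq_nonneg (a*b)]

private lemma aux3 {a b : ℝ} (ha : 0 < a) (hb : 0 < b) :
    1 / (a * b) ≤ (1 / 2) * (1 / a ^ 2 + 1 / b ^ 2) := by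
  rw [show (1/2)*(1/a^2+1/b^2) = (a^2+b^2)/(2*(a*b)^2) by field_simp; ring,
    div_le_div_iff₀ (by positivity) (by positivity)]
  nlinarith [sq_nonneg (a - b), mul_pos ha hb, sq_nonneg (a*b)]

private lemma pointwise (n : ℕ) (hn : 3 ≤ n) (lam : ℂ)
    (h1 : ((n:ℝ) - 1)^2 ≤ lam.re) (h2 : lam.re ≤ ((n:ℝ) + 1)^2)
    (m : ℤ) (hm0 : m ≠ 0) (hmn : m ≠ -(n:ℤ)) :
    |(m:ℝ)| * |(n:ℝ) + (m:ℝ)| ≤ ‖lam - (((n:ℤ) + 2*m : ℤ) : ℂ)^2‖ := by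
  have hcast : ((((n:ℤ) + 2*m : ℤ)) : ℂ)^2 = ((((((n:ℤ) + 2*m : ℤ)):ℝ)^2 : ℝ) : ℂ) := by
    push_cast; ring
  have hre : (lam - (((n:ℤ) + 2*m : ℤ):ℂ)^2).re = lam.re - (((n:ℤ) + 2*m : ℤ):ℝ)^2 := by
    rw [Complex.sub_re, hcast, Complex.ofReal_re]
  have habs : |lam.re - (((n:ℤ) + 2*m : ℤ):ℝ)^2| ≤
      ‖lam - (((n:ℤ) + 2*m : ℤ):ℂ)^2‖ := by
    rw [← hre]; exact Complex.abs_re_le_norm _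
  refine le_trans ?_ habs
  set K : ℝ := (((n:ℤ) + 2*m : ℤ):ℝ) with hKdef
  have hKN : K = (n:ℝ) + 2*(m:ℝ) := by rw [hKdef]; push_cast; ring
  have hN3 : (3:ℝ) ≤ (n:ℝ) := by exact_mod_cast hn
  have hMabs : |(m:ℝ)| * |(n:ℝ) + (m:ℝ)| = |K^2 - (n:ℝ)^2| / 4 := by
    have h4 : |K^2 - (n:ℝ)^2| = 4 * (|(m:ℝ)| * |(n:ℝ) + (m:ℝ)|) := by
      rw [show K^2 - (n:ℝ)^2 = 4*((m:ℝ)*((n:ℝ) + (m:ℝ))) from by rw [hKN]; ring, abs_mul,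
        abs_mul, abs_of_nonneg (by norm_num : (0:ℝ) ≤ (4:ℝ))]
    rw [h4]; ring
  rw [hMabs, div_le_iff₀ (by norm_num : (0:ℝ) < 4)]
  have hcase : ((n:ℤ) + 2 ≤ (n:ℤ) + 2*m) ∨ ((n:ℤ) + 2*m ≤ -(n:ℤ) - 2) ∨
      (-(n:ℤ) + 2 ≤ (n:ℤ) + 2*m ∧ (n:ℤ) + 2*m ≤ (n:ℤ) - 2) := by omega
  have hsq : ((n:ℝ)+2)^2 ≤ K^2 ∨ K^2 ≤ ((n:ℝ)-2)^2 := by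
    rcases hcase with h | h | ⟨ha, hb⟩
    · left
      have : (n:ℝ) + 2 ≤ K := by
        rw [hKN]
        have : (2:ℝ) ≤ 2*(m:ℝ) := by exact_mod_cast (by omega : (2:ℤ) ≤ 2*m)
        linarith
      nlinarith
    · left
      have : K ≤ -(n:ℝ) - 2 := by
        rw [hKN]
        have : (2*m : ℝ) ≤ -2*(n:ℝ) - 2 := by exact_mod_cast (by omega : (2*m:ℤ) ≤ -2*(n:ℤ) - 2)
        linarith
      nlinarith
    · right
      have ha' : -(n:ℝ) + 2 ≤ K := by
        rw [hKN]
        have : (-2*(n:ℝ) + 2 : ℝ) ≤ 2*(m:ℝ) := by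
          exact_mod_cast (by omega : (-2*(n:ℤ) + 2 : ℤ) ≤ 2*m)
        linarith
      have hb' : K ≤ (n:ℝ) - 2 := by
        rw [hKN]
        have : (2*(m:ℝ) : ℝ) ≤ -2 := by exact_mod_cast (by omega : (2*m : ℤ) ≤ -2)
        linarith
      nlinarith
  rcases hsq with h | h
  · have e1 : |K^2 - (n:ℝ)^2| = K^2 - (n:ℝ)^2 := abs_of_nonneg (by nlinarith)
    have e2 : |lam.re - K^2| = K^2 - lam.re := by
      rw [abs_sub_comm]; exact abs_of_nonneg (by nlinarith)
    rw [e1, e2]; nlinarith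
  · have e1 : |K^2 - (n:ℝ)^2| = (n:ℝ)^2 - K^2 := by
      rw [abs_sub_comm]; exact abs_of_nonneg (by nlinarith)
    have e2 : |lam.re - K^2| = lam.re - K^2 := abs_of_nonneg (by nlinarith)
    rw [e1, e2]; nlinarith

private lemma basicfacts (n : ℕ) (hn : 3 ≤ n) : (0:ℝ) < n ∧ (3:ℝ) ≤ (n:ℝ) := by
  constructor
  · exact_mod_cast Nat.lt_of_lt_of_le (by norm_num) hn
  · exact_mod_cast hn

-- shared structural facts about elements of filtered sets
private lemma keyP (n : ℕ) (lam : ℂ) (hn : 3 ≤ n)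
    (h3 : (n : ℝ) / 4 ≤ ‖lam - (n : ℂ)^2‖)
    (m : ℤ) (hm : m = 0 ∨ m = -(n:ℤ)) :
    1 / ‖lam - (((n:ℤ) + 2*m : ℤ) : ℂ)^2‖ ≤ 4 / (n:ℝ) := by
  obtain ⟨hnpos, hn3⟩ := basicfacts n hn
  have habs : ‖lam - (((n:ℤ) + 2*m : ℤ) : ℂ)^2‖ = ‖lam - (n:ℂ)^2‖ := by
    rcases hm with rfl | rfl
    · norm_num
    · have : ((((n:ℤ) + 2*(-(n:ℤ)) : ℤ)) : ℂ)^2 = (n:ℂ)^2 := by push_cast; ring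
      rw [this]
  rw [habs]
  have hA : (0:ℝ) < ‖lam - (n:ℂ)^2‖ := lt_of_lt_of_le (by positivity) h3
  rw [div_le_div_iff₀ hA hnpos]
  linarith

private lemma keyH (n : ℕ) (lam : ℂ) (hn : 3 ≤ n)
    (h1 : ((n:ℝ) - 1)^2 ≤ lam.re) (h2 : lam.re ≤ ((n:ℝ) + 1)^2)
    (m : ℤ) (hm0 : m ≠ 0) (hmn : m ≠ -(n:ℤ)) :
    1 / ‖lam - (((n:ℤ) + 2*m : ℤ) : ℂ)^2‖ ≤
      1 / (|(m:ℝ)| * |(n:ℝ) + (m:ℝ)|) := by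
  apply one_div_le_one_div_of_le
  · have hm0' : (m:ℝ) ≠ 0 := Int.cast_ne_zero.mpr hm0
    have hmn' : (n:ℝ) + (m:ℝ) ≠ 0 := by
      intro hc
      apply hmn
      have : (m:ℝ) = -(n:ℝ) := by linarith
      exact_mod_cast this
    positivity
  · exact pointwise n hn lam h1 h2 m hm0 hmn

private lemma finsum1 (n : ℕ) (lam : ℂ) (hn : 3 ≤ n)
    (h1 : ((n:ℝ) - 1)^2 ≤ lam.re) (h2 : lam.re ≤ ((n:ℝ) + 1)^2)
    (h3 : (n : ℝ) / 4 ≤ ‖lam - (n : ℂ)^2‖) (s : Finset ℤ) :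
    ∑ m ∈ s, 1 / ‖lam - (((n:ℤ) + 2*m : ℤ) : ℂ)^2‖ ≤
      64 * Real.log n / n := by
  classical
  obtain ⟨hnpos, hn3⟩ := basicfacts n hn
  set F : ℤ → ℝ := fun m => 1 / ‖lam - (((n:ℤ) + 2*m : ℤ) : ℂ)^2‖ with hF
  have hF0 : ∀ m, 0 ≤ F m := fun m => by rw [hF]; positivity
  set H : ℤ → ℝ := fun m => 1 / (|(m:ℝ)| * |(n:ℝ) + (m:ℝ)|) with hH
  have hH0 : ∀ m, 0 ≤ H m := fun m => by rw [hH]; positivity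
  set P : ℤ → Prop := fun m => m = 0 ∨ m = -(n:ℤ) with hP
  set s2 := s.filter (fun m => ¬ P m) with hs2def
  have hs2 : ∀ m ∈ s2, m ≠ 0 ∧ m ≠ -(n:ℤ) := by
    intro m hm
    have := (Finset.mem_filter.mp hm).2
    rw [hP] at this
    exact ⟨fun h => this (Or.inl h), fun h => this (Or.inr h)⟩
  have habspos : ∀ m : ℤ, m ≠ 0 → m ≠ -(n:ℤ) →
      (0:ℝ) < |(m:ℝ)| ∧ (0:ℝ) < |(n:ℝ)+(m:ℝ)| := by
    intro m hm0 hmn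
    constructor
    · rw [abs_pos]; exact_mod_cast hm0
    · rw [abs_pos]
      intro hc
      apply hmn
      have : (m:ℝ) = -(n:ℝ) := by linarith
      exact_mod_cast this
  have htri : ∀ m : ℤ, (n:ℝ) ≤ |(m:ℝ)| + |(n:ℝ)+(m:ℝ)| := by
    intro m
    calc (n:ℝ) = |(n:ℝ)| := (abs_of_nonneg (by positivity)).symm
      _ = |((n:ℝ)+(m:ℝ)) + (-(m:ℝ))| := by ring_nf
      _ ≤ |(n:ℝ)+(m:ℝ)| + |(-(m:ℝ))| := abs_add_le _ _
      _ = |(m:ℝ)| + |(n:ℝ)+(m:ℝ)| := by rw [abs_neg]; ring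
  -- part 1
  have hpart1 : ∑ m ∈ s.filter P, F m ≤ 8/(n:ℝ) := by
    have hsub : s.filter P ⊆ {0, -(n:ℤ)} := by
      intro m hm
      have := (Finset.mem_filter.mp hm).2
      rw [hP] at this
      simp only [Finset.mem_insert, Finset.mem_singleton]
      exact this
    have hcard : ((s.filter P).card : ℝ) ≤ 2 := by
      have h2' : (s.filter P).card ≤ ({0, -(n:ℤ)} : Finset ℤ).card := Finset.card_le_card hsub
      have h3' : ({0, -(n:ℤ)} : Finset ℤ).card ≤ 2 :=
        le_trans (Finset.card_insert_le _ _) (by simp)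
      exact_mod_cast le_trans h2' h3'
    calc ∑ m ∈ s.filter P, F m ≤ ∑ m ∈ s.filter P, 4/(n:ℝ) := by
          apply Finset.sum_le_sum
          intro m hm
          exact keyP n lam hn h3 m (by have := (Finset.mem_filter.mp hm).2; rwa [hP] at this)
      _ = ((s.filter P).card : ℝ) * (4/(n:ℝ)) := by rw [Finset.sum_const, nsmul_eq_mul]
      _ ≤ 2 * (4/(n:ℝ)) := mul_le_mul_of_nonneg_right hcard (by positivity)
      _ = 8/(n:ℝ) := by ring
  -- F ≤ H on s2
  have hFH : ∑ m ∈ s2, F m ≤ ∑ m ∈ s2, H m := by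
    apply Finset.sum_le_sum
    intro m hm
    obtain ⟨hm0, hmn⟩ := hs2 m hm
    exact keyH n lam hn h1 h2 m hm0 hmn
  -- split s2
  set Q : ℤ → Prop := fun m => m.natAbs < 2*n with hQ
  -- near range
  have hA : ∑ m ∈ s2.filter Q, H m ≤
      (1/(n:ℝ)) * (2*(1 + Real.log ((2*n : ℕ):ℝ)) + 2*(1 + Real.log ((3*n : ℕ):ℝ))) := by
    have hmem : ∀ m ∈ s2.filter Q, m ≠ 0 ∧ m ≠ -(n:ℤ) ∧ m.natAbs < 2*n := by
      intro m hm
      obtain ⟨hm1, hm2⟩ := Finset.mem_filter.mp hm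
      obtain ⟨a, b⟩ := hs2 m hm1
      rw [hQ] at hm2
      exact ⟨a, b, hm2⟩
    calc ∑ m ∈ s2.filter Q, H m
        ≤ ∑ m ∈ s2.filter Q, (1/(n:ℝ)) * (1/|(m:ℝ)| + 1/|(n:ℝ)+(m:ℝ)|) := by
          apply Finset.sum_le_sum
          intro m hm
          obtain ⟨hm0, hmn, _⟩ := hmem m hm
          obtain ⟨ha, hb⟩ := habspos m hm0 hmn
          exact aux1 ha hb hnpos (htri m)
      _ = (1/(n:ℝ)) * ((∑ m ∈ s2.filter Q, 1/|(m:ℝ)|) +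
            ∑ m ∈ s2.filter Q, 1/|(n:ℝ)+(m:ℝ)|) := by
          rw [← Finset.sum_add_distrib, Finset.mul_sum]
      _ ≤ (1/(n:ℝ)) * (2*(1 + Real.log ((2*n : ℕ):ℝ)) + 2*(1 + Real.log ((3*n : ℕ):ℝ))) := by
          apply mul_le_mul_of_nonneg_left _ (by positivity)
          apply add_le_add
          · apply int_harm_sum _ (2*n)
            intro m hm
            obtain ⟨hm0, _, hm2⟩ := hmem m hm
            exact ⟨hm0, by omega⟩
          · have him : ∑ m ∈ s2.filter Q, 1/|(n:ℝ)+(m:ℝ)| =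
                ∑ m' ∈ (s2.filter Q).image (fun m => (n:ℤ) + m), 1/|(m':ℝ)| := by
              rw [Finset.sum_image (fun a _ b _ h => by omega)]
              apply Finset.sum_congr rfl
              intro m _
              push_cast
              ring_nf
            rw [him]
            apply int_harm_sum _ (3*n)
            intro m' hm'
            simp only [Finset.mem_image] at hm'
            obtain ⟨m, hm, rfl⟩ := hm'
            obtain ⟨hm0, hmn, hm2⟩ := hmem m hm
            constructor
            · omega
            · omega
  -- far range
  have hB : ∑ m ∈ s2.filter (fun m => ¬ Q m), H m ≤ 3/(n:ℝ) := by
    have hmem : ∀ m ∈ s2.filter (fun m => ¬ Q m), m ≠ 0 ∧ m ≠ -(n:ℤ) ∧ 2*n ≤ m.natAbs := by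
      intro m hm
      obtain ⟨hm1, hm2⟩ := Finset.mem_filter.mp hm
      obtain ⟨a, b⟩ := hs2 m hm1
      rw [hQ] at hm2
      exact ⟨a, b, by omega⟩
    calc ∑ m ∈ s2.filter (fun m => ¬ Q m), H m
        ≤ ∑ m ∈ s2.filter (fun m => ¬ Q m),
            (1/2) * (1/(m:ℝ)^2 + 1/((n:ℝ)+(m:ℝ))^2) := by
          apply Finset.sum_le_sum
          intro m hm
          obtain ⟨hm0, hmn, _⟩ := hmem m hm
          obtain ⟨ha, hb⟩ := habspos m hm0 hmn
          have := aux3 ha hb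
          rwa [sq_abs, sq_abs] at this
      _ = (1/2) * ((∑ m ∈ s2.filter (fun m => ¬ Q m), 1/(m:ℝ)^2) +
            ∑ m ∈ s2.filter (fun m => ¬ Q m), 1/((n:ℝ)+(m:ℝ))^2) := by
          rw [← Finset.sum_add_distrib, Finset.mul_sum]
      _ ≤ (1/2) * (4/((2*n : ℕ):ℝ) + 4/((n : ℕ):ℝ)) := by
          apply mul_le_mul_of_nonneg_left _ (by norm_num)
          apply add_le_add
          · apply int_sq_sum _ (2*n) (by omega)
            intro m hm
            exact (hmem m hm).2.2
          · have him : ∑ m ∈ s2.filter (fun m => ¬ Q m), 1/((n:ℝ)+(m:ℝ))^2 =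
                ∑ m' ∈ (s2.filter (fun m => ¬ Q m)).image (fun m => (n:ℤ) + m), 1/(m':ℝ)^2 := by
              rw [Finset.sum_image (fun a _ b _ h => by omega)]
              apply Finset.sum_congr rfl
              intro m _
              push_cast
              ring_nf
            rw [him]
            apply int_sq_sum _ n (by omega)
            intro m' hm'
            simp only [Finset.mem_image] at hm'
            obtain ⟨m, hm, rfl⟩ := hm'
            obtain ⟨_, _, hm2⟩ := hmem m hm
            omega
      _ ≤ 3/(n:ℝ) := by
          push_cast
          have heq : (1/2:ℝ) * (4/(2*(n:ℝ)) + 4/(n:ℝ)) = 3/(n:ℝ) := by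
            field_simp
            ring
          rw [heq]
  -- numeric finish
  have hlogn : (1:ℝ) ≤ Real.log n := by
    have hexp : Real.exp 1 ≤ (n:ℝ) := by
      have h9 : Real.exp 1 < 2.7182818286 := Real.exp_one_lt_d9
      linarith
    calc (1:ℝ) = Real.log (Real.exp 1) := (Real.log_exp 1).symm
      _ ≤ Real.log n := Real.log_le_log (Real.exp_pos 1) hexp
  have hl2 : Real.log ((2*n:ℕ):ℝ) = Real.log 2 + Real.log n := by
    push_cast
    exact Real.log_mul (by norm_num) (ne_of_gt hnpos)
  have hl3 : Real.log ((3*n:ℕ):ℝ) = Real.log 3 + Real.log n := by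
    push_cast
    exact Real.log_mul (by norm_num) (ne_of_gt hnpos)
  have hlog2 : Real.log 2 ≤ 1 := by
    have := Real.log_le_sub_one_of_pos (by norm_num : (0:ℝ) < 2)
    linarith
  have hlog3 : Real.log 3 ≤ 2 := by
    have := Real.log_le_sub_one_of_pos (by norm_num : (0:ℝ) < 3)
    linarith
  calc ∑ m ∈ s, F m
      = ∑ m ∈ s.filter P, F m + ∑ m ∈ s2, F m := by
        rw [hs2def, Finset.sum_filter_add_sum_filter_not]
    _ ≤ 8/(n:ℝ) + ∑ m ∈ s2, H m := add_le_add hpart1 hFH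
    _ = 8/(n:ℝ) + (∑ m ∈ s2.filter Q, H m + ∑ m ∈ s2.filter (fun m => ¬ Q m), H m) := by
        rw [Finset.sum_filter_add_sum_filter_not]
    _ ≤ 8/(n:ℝ) + ((1/(n:ℝ)) * (2*(1 + Real.log ((2*n : ℕ):ℝ)) +
          2*(1 + Real.log ((3*n : ℕ):ℝ))) + 3/(n:ℝ)) :=
        add_le_add (le_refl _) (add_le_add hA hB)
    _ = (15 + 2*Real.log ((2*n:ℕ):ℝ) + 2*Real.log ((3*n:ℕ):ℝ))/(n:ℝ) := by
        field_simp
        ring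
    _ ≤ 64 * Real.log n / n := by
        rw [div_le_div_iff₀ hnpos hnpos]
        rw [hl2, hl3]
        nlinarith [hnpos]

private lemma finsum2 (n : ℕ) (lam : ℂ) (hn : 3 ≤ n)
    (h1 : ((n:ℝ) - 1)^2 ≤ lam.re) (h2 : lam.re ≤ ((n:ℝ) + 1)^2)
    (h3 : (n : ℝ) / 4 ≤ ‖lam - (n : ℂ)^2‖) (s : Finset ℤ) :
    ∑ m ∈ s, 1 / (‖lam - (((n:ℤ) + 2*m : ℤ) : ℂ)^2‖)^2 ≤
      64 / (n:ℝ)^2 := by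
  classical
  obtain ⟨hnpos, hn3⟩ := basicfacts n hn
  set F : ℤ → ℝ := fun m => 1 / (‖lam - (((n:ℤ) + 2*m : ℤ) : ℂ)^2‖)^2 with hF
  set P : ℤ → Prop := fun m => m = 0 ∨ m = -(n:ℤ) with hP
  set s2 := s.filter (fun m => ¬ P m) with hs2def
  have hs2 : ∀ m ∈ s2, m ≠ 0 ∧ m ≠ -(n:ℤ) := by
    intro m hm
    have := (Finset.mem_filter.mp hm).2
    rw [hP] at this
    exact ⟨fun h => this (Or.inl h), fun h => this (Or.inr h)⟩
  have habspos : ∀ m : ℤ, m ≠ 0 → m ≠ -(n:ℤ) →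
      (0:ℝ) < |(m:ℝ)| ∧ (0:ℝ) < |(n:ℝ)+(m:ℝ)| := by
    intro m hm0 hmn
    constructor
    · rw [abs_pos]; exact_mod_cast hm0
    · rw [abs_pos]
      intro hc
      apply hmn
      have : (m:ℝ) = -(n:ℝ) := by linarith
      exact_mod_cast this
  have htri : ∀ m : ℤ, (n:ℝ) ≤ |(m:ℝ)| + |(n:ℝ)+(m:ℝ)| := by
    intro m
    calc (n:ℝ) = |(n:ℝ)| := (abs_of_nonneg (by positivity)).symm
      _ = |((n:ℝ)+(m:ℝ)) + (-(m:ℝ))| := by ring_nf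
      _ ≤ |(n:ℝ)+(m:ℝ)| + |(-(m:ℝ))| := abs_add_le _ _
      _ = |(m:ℝ)| + |(n:ℝ)+(m:ℝ)| := by rw [abs_neg]; ring
  have hpart1 : ∑ m ∈ s.filter P, F m ≤ 32/(n:ℝ)^2 := by
    have hsub : s.filter P ⊆ {0, -(n:ℤ)} := by
      intro m hm
      have := (Finset.mem_filter.mp hm).2
      rw [hP] at this
      simp only [Finset.mem_insert, Finset.mem_singleton]
      exact this
    have hcard : ((s.filter P).card : ℝ) ≤ 2 := by
      have h2' : (s.filter P).card ≤ ({0, -(n:ℤ)} : Finset ℤ).card := Finset.card_le_card hsub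
      have h3' : ({0, -(n:ℤ)} : Finset ℤ).card ≤ 2 :=
        le_trans (Finset.card_insert_le _ _) (by simp)
      exact_mod_cast le_trans h2' h3'
    calc ∑ m ∈ s.filter P, F m ≤ ∑ m ∈ s.filter P, 16/(n:ℝ)^2 := by
          apply Finset.sum_le_sum
          intro m hm
          have hk := keyP n lam hn h3 m
            (by have := (Finset.mem_filter.mp hm).2; rwa [hP] at this)
          have h0 : (0:ℝ) ≤ 1 / ‖lam - (((n:ℤ) + 2*m : ℤ) : ℂ)^2‖ := by positivity
          have hsq := mul_le_mul hk hk h0 (by positivity)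
          calc F m = (1 / ‖lam - (((n:ℤ) + 2*m : ℤ) : ℂ)^2‖) *
                (1 / ‖lam - (((n:ℤ) + 2*m : ℤ) : ℂ)^2‖) := by
                rw [hF]; ring
            _ ≤ (4/(n:ℝ)) * (4/(n:ℝ)) := hsq
            _ = 16/(n:ℝ)^2 := by ring
      _ = ((s.filter P).card : ℝ) * (16/(n:ℝ)^2) := by rw [Finset.sum_const, nsmul_eq_mul]
      _ ≤ 2 * (16/(n:ℝ)^2) := mul_le_mul_of_nonneg_right hcard (by positivity)
      _ = 32/(n:ℝ)^2 := by ring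
  have hpart2 : ∑ m ∈ s2, F m ≤ 32/(n:ℝ)^2 := by
    calc ∑ m ∈ s2, F m
        ≤ ∑ m ∈ s2, 4/(n:ℝ)^2 * (1/(m:ℝ)^2 + 1/((n:ℝ)+(m:ℝ))^2) := by
          apply Finset.sum_le_sum
          intro m hm
          obtain ⟨hm0, hmn⟩ := hs2 m hm
          obtain ⟨ha, hb⟩ := habspos m hm0 hmn
          have hkey := keyH n lam hn h1 h2 m hm0 hmn
          have h0 : (0:ℝ) ≤ 1 / ‖lam - (((n:ℤ) + 2*m : ℤ) : ℂ)^2‖ := by positivity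
          have hsq := mul_le_mul hkey hkey h0 (by positivity)
          have haux := aux2 ha hb hnpos (htri m)
          rw [sq_abs, sq_abs] at haux
          calc F m = (1 / ‖lam - (((n:ℤ) + 2*m : ℤ) : ℂ)^2‖) *
                (1 / ‖lam - (((n:ℤ) + 2*m : ℤ) : ℂ)^2‖) := by
                rw [hF]; ring
            _ ≤ (1 / (|(m:ℝ)| * |(n:ℝ)+(m:ℝ)|)) * (1 / (|(m:ℝ)| * |(n:ℝ)+(m:ℝ)|)) := hsq
            _ = 1 / (|(m:ℝ)| * |(n:ℝ)+(m:ℝ)|)^2 := by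
                rw [div_mul_div_comm, one_mul, sq]
            _ ≤ 4/(n:ℝ)^2 * (1/(m:ℝ)^2 + 1/((n:ℝ)+(m:ℝ))^2) := haux
      _ = (4/(n:ℝ)^2) * ((∑ m ∈ s2, 1/(m:ℝ)^2) + ∑ m ∈ s2, 1/((n:ℝ)+(m:ℝ))^2) := by
          rw [← Finset.sum_add_distrib, Finset.mul_sum]
      _ ≤ (4/(n:ℝ)^2) * (4/((1:ℕ):ℝ) + 4/((1:ℕ):ℝ)) := by
          apply mul_le_mul_of_nonneg_left _ (by positivity)
          apply add_le_add
          · apply int_sq_sum _ 1 le_rfl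
            intro m hm
            have := (hs2 m hm).1
            omega
          · have him : ∑ m ∈ s2, 1/((n:ℝ)+(m:ℝ))^2 =
                ∑ m' ∈ s2.image (fun m => (n:ℤ) + m), 1/(m':ℝ)^2 := by
              rw [Finset.sum_image (fun a _ b _ h => by omega)]
              apply Finset.sum_congr rfl
              intro m _
              push_cast
              ring_nf
            rw [him]
            apply int_sq_sum _ 1 le_rfl
            intro m' hm'
            simp only [Finset.mem_image] at hm'
            obtain ⟨m, hm, rfl⟩ := hm'
            have := (hs2 m hm).2
            omega
      _ = 32/(n:ℝ)^2 := by push_cast; ring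
  calc ∑ m ∈ s, F m
      = ∑ m ∈ s.filter P, F m + ∑ m ∈ s2, F m := by
        rw [hs2def, Finset.sum_filter_add_sum_filter_not]
    _ ≤ 32/(n:ℝ)^2 + 32/(n:ℝ)^2 := add_le_add hpart1 hpart2
    _ = 64/(n:ℝ)^2 := by ring

/-- There is an absolute constant `C₁` such that for every integer `n ≥ 3` and every
`λ ∈ ℂ` with `(n-1)² ≤ Re λ ≤ (n+1)²` and `|λ - n²| ≥ n/4`, one has
`∑_{k ∈ n+2ℤ} 1/|λ-k²| ≤ C₁ log n / n` and `∑_{k ∈ n+2ℤ} 1/|λ-k²|² ≤ C₁/n²`. -/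
theorem stmt18 :
    ∃ C₁ : ℝ, 0 < C₁ ∧ ∀ (n : ℕ), 3 ≤ n → ∀ lam : ℂ,
      ((n : ℝ) - 1)^2 ≤ lam.re → lam.re ≤ ((n : ℝ) + 1)^2 →
      (n : ℝ) / 4 ≤ ‖lam - (n : ℂ)^2‖ →
      (∑' k : {k : ℤ // ∃ m : ℤ, k = (n : ℤ) + 2 * m},
          1 / ‖lam - ((k : ℤ) : ℂ)^2‖) ≤ C₁ * Real.log n / n ∧
      (∑' k : {k : ℤ // ∃ m : ℤ, k = (n : ℤ) + 2 * m},
          1 / (‖lam - ((k : ℤ) : ℂ)^2‖)^2) ≤ C₁ / (n : ℝ)^2 := by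
  refine ⟨64, by norm_num, ?_⟩
  intro n hn lam h1 h2 h3
  have hnpos : (0:ℝ) < n := by
    have : (3:ℝ) ≤ (n:ℝ) := by exact_mod_cast hn
    linarith
  have hlogn0 : 0 ≤ Real.log n := Real.log_nonneg (by
    have : (3:ℝ) ≤ (n:ℝ) := by exact_mod_cast hn
    linarith)
  let e : ℤ ≃ {k : ℤ // ∃ m : ℤ, k = (n : ℤ) + 2 * m} :=
  { toFun := fun m => ⟨(n:ℤ) + 2*m, m, rfl⟩
    invFun := fun k => (k.1 - n) / 2
    left_inv := fun m => by simp only; omega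
    right_inv := fun k => by
      apply Subtype.ext
      obtain ⟨m, hm⟩ := k.2
      simp only
      omega }
  constructor
  · rw [← Equiv.tsum_eq e]
    refine tsum_le_of_sum_le' (div_nonneg (by positivity) hnpos.le) ?_
    intro u
    exact finsum1 n lam hn h1 h2 h3 u
  · rw [← Equiv.tsum_eq e]
    refine tsum_le_of_sum_le' (by positivity) ?_
    intro u
    exact finsum2 n lam hn h1 h2 h3 u
end
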